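/- arXiv:1805.03038 — 9 statements merged into one kernel-verified Lean document; each statement's English description precedes it below -/
import Mathlib

section
/- Every positive integer congruent to 3 modulo 8 can be written as a sum of three squares of odd integers. -/
set_option maxHeartbeats 2000000

section Forms

/-- ternary quadratic form value -/
def Q3 (a b c d e f x y z : ℤ) : ℤ :=
  a*x^2 + d*y^2 + f*z^2 + 2*(b*x*y + c*x*z + e*y*z)

/-- associated bilinear form -/
def B3 (a b c d e f x₁ y₁ z₁ x₂ y₂ z₂ : ℤ) : ℤ :=
  a*x₁*x₂ + d*y₁*y₂ + f*z₁*z₂ + b*(x₁*y₂ + x₂*y₁) + c*(x₁*z₂ + x₂*z₁) + e*(y₁*z₂ + y₂*z₁)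

/-- Gram determinant -/
def D3 (a b c d e f : ℤ) : ℤ := a*d*f + 2*b*c*e - a*e^2 - d*c^2 - f*b^2

def det3 (u₁₁ u₁₂ u₁₃ u₂₁ u₂₂ u₂₃ u₃₁ u₃₂ u₃₃ : ℤ) : ℤ :=
  u₁₁*(u₂₂*u₃₃ - u₂₃*u₃₂) - u₁₂*(u₂₁*u₃₃ - u₂₃*u₃₁) + u₁₃*(u₂₁*u₃₂ - u₂₂*u₃₁)

def Q2 (a b d x y : ℤ) : ℤ := a*x^2 + d*y^2 + 2*b*x*y
def B2 (a b d x₁ y₁ x₂ y₂ : ℤ) : ℤ := a*x₁*x₂ + d*y₁*y₂ + b*(x₁*y₂ + x₂*y₁)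

def Pos3 (a b c d e f : ℤ) : Prop :=
  ∀ x y z : ℤ, ¬(x = 0 ∧ y = 0 ∧ z = 0) → 0 < Q3 a b c d e f x y z
def Pos2 (a b d : ℤ) : Prop := ∀ x y : ℤ, ¬(x = 0 ∧ y = 0) → 0 < Q2 a b d x y

/-- transformation rule for values, ternary -/
theorem q3_trans (a b c d e f u₁₁ u₁₂ u₁₃ u₂₁ u₂₂ u₂₃ u₃₁ u₃₂ u₃₃ x y z : ℤ) :
    Q3 (B3 a b c d e f u₁₁ u₂₁ u₃₁ u₁₁ u₂₁ u₃₁)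
       (B3 a b c d e f u₁₁ u₂₁ u₃₁ u₁₂ u₂₂ u₃₂)
       (B3 a b c d e f u₁₁ u₂₁ u₃₁ u₁₃ u₂₃ u₃₃)
       (B3 a b c d e f u₁₂ u₂₂ u₃₂ u₁₂ u₂₂ u₃₂)
       (B3 a b c d e f u₁₂ u₂₂ u₃₂ u₁₃ u₂₃ u₃₃)
       (B3 a b c d e f u₁₃ u₂₃ u₃₃ u₁₃ u₂₃ u₃₃) x y z
    = Q3 a b c d e f (u₁₁*x + u₁₂*y + u₁₃*z) (u₂₁*x + u₂₂*y + u₂₃*z) (u₃₁*x + u₃₂*y + u₃₃*z) := by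
  unfold Q3 B3; ring

theorem d3_trans (a b c d e f u₁₁ u₁₂ u₁₃ u₂₁ u₂₂ u₂₃ u₃₁ u₃₂ u₃₃ : ℤ) :
    D3 (B3 a b c d e f u₁₁ u₂₁ u₃₁ u₁₁ u₂₁ u₃₁)
       (B3 a b c d e f u₁₁ u₂₁ u₃₁ u₁₂ u₂₂ u₃₂)
       (B3 a b c d e f u₁₁ u₂₁ u₃₁ u₁₃ u₂₃ u₃₃)
       (B3 a b c d e f u₁₂ u₂₂ u₃₂ u₁₂ u₂₂ u₃₂)
       (B3 a b c d e f u₁₂ u₂₂ u₃₂ u₁₃ u₂₃ u₃₃)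
       (B3 a b c d e f u₁₃ u₂₃ u₃₃ u₁₃ u₂₃ u₃₃)
    = (det3 u₁₁ u₁₂ u₁₃ u₂₁ u₂₂ u₂₃ u₃₁ u₃₂ u₃₃)^2 * D3 a b c d e f := by
  unfold D3 B3 det3; ring

theorem pre3 (u₁₁ u₁₂ u₁₃ u₂₁ u₂₂ u₂₃ u₃₁ u₃₂ u₃₃ : ℤ)
    (hdet : det3 u₁₁ u₁₂ u₁₃ u₂₁ u₂₂ u₂₃ u₃₁ u₃₂ u₃₃ = 1) (x y z : ℤ) :
    ∃ x' y' z', u₁₁*x' + u₁₂*y' + u₁₃*z' = x ∧ u₂₁*x' + u₂₂*y' + u₂₃*z' = y ∧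
      u₃₁*x' + u₃₂*y' + u₃₃*z' = z := by
  refine ⟨(u₂₂*u₃₃ - u₂₃*u₃₂)*x - (u₁₂*u₃₃ - u₁₃*u₃₂)*y + (u₁₂*u₂₃ - u₁₃*u₂₂)*z,
          -((u₂₁*u₃₃ - u₂₃*u₃₁)*x) + (u₁₁*u₃₃ - u₁₃*u₃₁)*y - (u₁₁*u₂₃ - u₁₃*u₂₁)*z,
          (u₂₁*u₃₂ - u₂₂*u₃₁)*x - (u₁₁*u₃₂ - u₁₂*u₃₁)*y + (u₁₁*u₂₂ - u₁₂*u₂₁)*z,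
          ?_, ?_, ?_⟩ <;> unfold det3 at hdet
  · linear_combination x*hdet
  · linear_combination y*hdet
  · linear_combination z*hdet

theorem inj3 (u₁₁ u₁₂ u₁₃ u₂₁ u₂₂ u₂₃ u₃₁ u₃₂ u₃₃ : ℤ)
    (hdet : det3 u₁₁ u₁₂ u₁₃ u₂₁ u₂₂ u₂₃ u₃₁ u₃₂ u₃₃ = 1) (x y z : ℤ)
    (e₁ : u₁₁*x + u₁₂*y + u₁₃*z = 0) (e₂ : u₂₁*x + u₂₂*y + u₂₃*z = 0)
    (e₃ : u₃₁*x + u₃₂*y + u₃₃*z = 0) : x = 0 ∧ y = 0 ∧ z = 0 := by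
  unfold det3 at hdet
  refine ⟨?_, ?_, ?_⟩
  · linear_combination (u₂₂*u₃₃ - u₂₃*u₃₂)*e₁ - (u₁₂*u₃₃ - u₁₃*u₃₂)*e₂ +
      (u₁₂*u₂₃ - u₁₃*u₂₂)*e₃ - x*hdet
  · linear_combination -((u₂₁*u₃₃ - u₂₃*u₃₁)*e₁) + (u₁₁*u₃₃ - u₁₃*u₃₁)*e₂ -
      (u₁₁*u₂₃ - u₁₃*u₂₁)*e₃ - y*hdet
  · linear_combination (u₂₁*u₃₂ - u₂₂*u₃₁)*e₁ - (u₁₁*u₃₂ - u₁₂*u₃₁)*e₂ +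
      (u₁₁*u₂₂ - u₁₂*u₂₁)*e₃ - z*hdet

theorem q2_trans (a b d u₁₁ u₁₂ u₂₁ u₂₂ x y : ℤ) :
    Q2 (B2 a b d u₁₁ u₂₁ u₁₁ u₂₁) (B2 a b d u₁₁ u₂₁ u₁₂ u₂₂) (B2 a b d u₁₂ u₂₂ u₁₂ u₂₂) x y
    = Q2 a b d (u₁₁*x + u₁₂*y) (u₂₁*x + u₂₂*y) := by unfold Q2 B2; ring

theorem d2_trans (a b d u₁₁ u₁₂ u₂₁ u₂₂ : ℤ) :
    (B2 a b d u₁₁ u₂₁ u₁₁ u₂₁) * (B2 a b d u₁₂ u₂₂ u₁₂ u₂₂) - (B2 a b d u₁₁ u₂₁ u₁₂ u₂₂)^2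
    = (u₁₁*u₂₂ - u₁₂*u₂₁)^2 * (a*d - b^2) := by unfold B2; ring

theorem pre2 (u₁₁ u₁₂ u₂₁ u₂₂ : ℤ) (hdet : u₁₁*u₂₂ - u₁₂*u₂₁ = 1) (x y : ℤ) :
    ∃ x' y', u₁₁*x' + u₁₂*y' = x ∧ u₂₁*x' + u₂₂*y' = y :=
  ⟨u₂₂*x - u₁₂*y, -(u₂₁*x) + u₁₁*y, by linear_combination x*hdet, by linear_combination y*hdet⟩

theorem inj2 (u₁₁ u₁₂ u₂₁ u₂₂ : ℤ) (hdet : u₁₁*u₂₂ - u₁₂*u₂₁ = 1) (x y : ℤ)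
    (e₁ : u₁₁*x + u₁₂*y = 0) (e₂ : u₂₁*x + u₂₂*y = 0) : x = 0 ∧ y = 0 :=
  ⟨by linear_combination u₂₂*e₁ - u₁₂*e₂ - x*hdet, by linear_combination -(u₂₁*e₁) + u₁₁*e₂ - y*hdet⟩

end Forms
section Mins

theorem exists_min3 (a b c d e f : ℤ)
    (hpos : Pos3 a b c d e f) :
    ∃ x y z : ℤ, ¬(x = 0 ∧ y = 0 ∧ z = 0) ∧
      ∀ x' y' z' : ℤ, ¬(x' = 0 ∧ y' = 0 ∧ z' = 0) →
        Q3 a b c d e f x y z ≤ Q3 a b c d e f x' y' z' := by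
  classical
  have hex : ∃ k : ℕ, ∃ x y z : ℤ, ¬(x = 0 ∧ y = 0 ∧ z = 0) ∧ (Q3 a b c d e f x y z).toNat = k :=
    ⟨_, 1, 0, 0, by simp, rfl⟩
  obtain ⟨x, y, z, hne, hv⟩ := Nat.find_spec hex
  refine ⟨x, y, z, hne, fun x' y' z' hne' => ?_⟩
  have h2 : Nat.find hex ≤ (Q3 a b c d e f x' y' z').toNat :=
    Nat.find_le ⟨x', y', z', hne', rfl⟩
  have p1 := hpos x y z hne
  have p2 := hpos x' y' z' hne'
  omega

theorem exists_min2 (a b d : ℤ) (hpos : Pos2 a b d) :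
    ∃ x y : ℤ, ¬(x = 0 ∧ y = 0) ∧
      ∀ x' y' : ℤ, ¬(x' = 0 ∧ y' = 0) → Q2 a b d x y ≤ Q2 a b d x' y' := by
  classical
  have hex : ∃ k : ℕ, ∃ x y : ℤ, ¬(x = 0 ∧ y = 0) ∧ (Q2 a b d x y).toNat = k :=
    ⟨_, 1, 0, by simp, rfl⟩
  obtain ⟨x, y, hne, hv⟩ := Nat.find_spec hex
  refine ⟨x, y, hne, fun x' y' hne' => ?_⟩
  have h2 : Nat.find hex ≤ (Q2 a b d x' y').toNat := Nat.find_le ⟨x', y', hne', rfl⟩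
  have p1 := hpos x y hne
  have p2 := hpos x' y' hne'
  omega

theorem exists_prim3 (x y z : ℤ) (h : ¬(x = 0 ∧ y = 0 ∧ z = 0)) :
    ∃ g p q r : ℤ, 0 < g ∧ x = g*p ∧ y = g*q ∧ z = g*r ∧ Int.gcd p (Int.gcd q r) = 1 := by
  set g0 : ℕ := Int.gcd x (Int.gcd y z) with hg0
  have hgne : g0 ≠ 0 := by
    intro h0
    rw [hg0, Int.gcd_eq_zero_iff] at h0
    have h1 := h0.2
    rw [Nat.cast_eq_zero, Int.gcd_eq_zero_iff] at h1
    exact h ⟨h0.1, h1.1, h1.2⟩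
  have hx : (g0 : ℤ) ∣ x := Int.gcd_dvd_left x (Int.gcd y z)
  have hyz : (g0 : ℤ) ∣ (Int.gcd y z : ℤ) := Int.gcd_dvd_right x (Int.gcd y z)
  have hy : (g0 : ℤ) ∣ y := hyz.trans (Int.gcd_dvd_left y z)
  have hz : (g0 : ℤ) ∣ z := hyz.trans (Int.gcd_dvd_right y z)
  have hgpos : (0 : ℤ) < g0 := by positivity
  have hxe : x = g0 * (x / g0) := (Int.mul_ediv_cancel' hx).symm
  have hye : y = g0 * (y / g0) := (Int.mul_ediv_cancel' hy).symm
  have hze : z = g0 * (z / g0) := (Int.mul_ediv_cancel' hz).symm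
  refine ⟨(g0 : ℤ), x / g0, y / g0, z / g0, hgpos, hxe, hye, hze, ?_⟩
  have key : g0 = g0 * Int.gcd (x / g0) (Int.gcd (y / g0) (z / g0)) := by
    conv_lhs => rw [hg0, hxe, hye, hze]
    rw [Int.gcd_mul_left, Int.natAbs_natCast,
      show (((g0 : ℕ) * Int.gcd (y / g0) (z / g0) : ℕ) : ℤ)
          = (g0 : ℤ) * (Int.gcd (y / g0) (z / g0) : ℤ) by push_cast; ring,
      Int.gcd_mul_left, Int.natAbs_natCast]
  exact mul_left_cancel₀ hgne (by rw [← key, mul_one])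

theorem exists_prim2 (x y : ℤ) (h : ¬(x = 0 ∧ y = 0)) :
    ∃ g p q : ℤ, 0 < g ∧ x = g*p ∧ y = g*q ∧ Int.gcd p q = 1 := by
  set g0 : ℕ := Int.gcd x y with hg0
  have hgne : g0 ≠ 0 := by
    intro h0
    rw [hg0, Int.gcd_eq_zero_iff] at h0
    exact h h0
  have hx : (g0 : ℤ) ∣ x := Int.gcd_dvd_left x y
  have hy : (g0 : ℤ) ∣ y := Int.gcd_dvd_right x y
  have hxe : x = g0 * (x / g0) := (Int.mul_ediv_cancel' hx).symm
  have hye : y = g0 * (y / g0) := (Int.mul_ediv_cancel' hy).symm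
  refine ⟨(g0 : ℤ), x / g0, y / g0, by positivity, hxe, hye, ?_⟩
  have key : g0 = g0 * Int.gcd (x / g0) (y / g0) := by
    conv_lhs => rw [hg0, hxe, hye]
    rw [Int.gcd_mul_left, Int.natAbs_natCast]
  exact mul_left_cancel₀ hgne (by rw [← key, mul_one])

theorem complete2 (p q : ℤ) (h : Int.gcd p q = 1) :
    ∃ u₁₂ u₂₂ : ℤ, p*u₂₂ - u₁₂*q = 1 := by
  have hb := Int.gcd_eq_gcd_ab p q
  rw [h] at hb
  exact ⟨-(Int.gcdB p q), Int.gcdA p q, by linear_combination hb.symm⟩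

theorem complete3 (p q r : ℤ) (hprim : Int.gcd p (Int.gcd q r) = 1) :
    ∃ u₁₂ u₁₃ u₂₂ u₂₃ u₃₂ u₃₃ : ℤ,
      det3 p u₁₂ u₁₃ q u₂₂ u₂₃ r u₃₂ u₃₃ = 1 := by
  rcases Nat.eq_zero_or_pos (Int.gcd p q) with hg | hgpos
  · -- p = q = 0, r = ±1
    rw [Int.gcd_eq_zero_iff] at hg
    obtain ⟨hp, hq⟩ := hg
    subst hp; subst hq
    have hr : r.natAbs = 1 := by
      simpa [Int.gcd, Int.natAbs_natCast, Int.natAbs_abs] using hprim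
    have : r = 1 ∨ r = -1 := Int.natAbs_eq_iff.mp hr |>.imp id (by simp)
    refine ⟨1, 0, 0, r, 0, 0, ?_⟩
    rcases this with h | h <;> subst h <;> simp [det3]
  · -- general case
    set g : ℕ := Int.gcd p q with hgdef
    have hgz : (0:ℤ) < g := by exact_mod_cast hgpos
    have hdp : (g : ℤ) ∣ p := Int.gcd_dvd_left p q
    have hdq : (g : ℤ) ∣ q := Int.gcd_dvd_right p q
    obtain ⟨p', hp⟩ := hdp
    obtain ⟨q', hq⟩ := hdq
    have hpq : Int.gcd p' q' = 1 := by
      have key : g = g * Int.gcd p' q' := by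
        conv_lhs => rw [hgdef, hp, hq]
        rw [Int.gcd_mul_left, Int.natAbs_natCast]
      exact mul_left_cancel₀ hgpos.ne' (by rw [← key, mul_one])
    have hgr : Int.gcd (g : ℤ) r = 1 := by
      have h1 : Nat.gcd (Nat.gcd p.natAbs q.natAbs) r.natAbs = 1 := by
        rw [Nat.gcd_assoc]
        simpa [Int.gcd, Int.natAbs_natCast] using hprim
      simpa [Int.gcd, Int.natAbs_natCast, hgdef] using h1
    -- Bezout coefficients
    have hb1 := Int.gcd_eq_gcd_ab p' q'
    rw [hpq] at hb1
    have hb2 := Int.gcd_eq_gcd_ab (g : ℤ) r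
    rw [hgr] at hb2
    set u := Int.gcdA p' q'
    set v := Int.gcdB p' q'
    set s := Int.gcdA (g : ℤ) r
    set t := Int.gcdB (g : ℤ) r
    refine ⟨-v, -t*p', u, -t*q', 0, s, ?_⟩
    rw [hp, hq]
    simp only [det3]
    linear_combination (s*g + t*r) * hb1.symm + hb2.symm
section Trans

theorem q3_scale (a b c d e f g p q r : ℤ) :
    Q3 a b c d e f (g*p) (g*q) (g*r) = g^2 * Q3 a b c d e f p q r := by unfold Q3; ring

theorem q2_scale (a b d g p q : ℤ) :
    Q2 a b d (g*p) (g*q) = g^2 * Q2 a b d p q := by unfold Q2; ring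

theorem b3_diag (a b c d e f p q r : ℤ) :
    B3 a b c d e f p q r p q r = Q3 a b c d e f p q r := by unfold Q3 B3; ring

theorem b2_diag (a b d p q : ℤ) :
    B2 a b d p q p q = Q2 a b d p q := by unfold Q2 B2; ring

/-- rounding: we can shift `r` by a multiple of `a > 0` into `[-a/2, a/2]`. -/
theorem round_lemma (a r : ℤ) (ha : 0 < a) : ∃ t : ℤ, 4*(r + t*a)^2 ≤ a^2 := by
  have h0 : 0 ≤ r % a := Int.emod_nonneg r ha.ne'
  have h1 : r % a < a := Int.emod_lt_of_pos r ha
  have hdef : r % a = r - a * (r / a) := Int.emod_def r a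
  by_cases hc : 2 * (r % a) ≤ a
  · refine ⟨-(r / a), ?_⟩
    have he : r + (-(r / a))*a = r % a := by rw [hdef]; ring
    rw [he]; nlinarith
  · refine ⟨-(r / a) - 1, ?_⟩
    have he : r + (-(r / a) - 1)*a = r % a - a := by rw [hdef]; ring
    rw [he]; nlinarith

/-- Packaged facts for applying a unimodular transformation to a ternary form. -/
theorem trans3 (a b c d e f u₁₁ u₁₂ u₁₃ u₂₁ u₂₂ u₂₃ u₃₁ u₃₂ u₃₃ a' b' c' d' e' f' : ℤ)
    (ha' : a' = B3 a b c d e f u₁₁ u₂₁ u₃₁ u₁₁ u₂₁ u₃₁)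
    (hb' : b' = B3 a b c d e f u₁₁ u₂₁ u₃₁ u₁₂ u₂₂ u₃₂)
    (hc' : c' = B3 a b c d e f u₁₁ u₂₁ u₃₁ u₁₃ u₂₃ u₃₃)
    (hd' : d' = B3 a b c d e f u₁₂ u₂₂ u₃₂ u₁₂ u₂₂ u₃₂)
    (he' : e' = B3 a b c d e f u₁₂ u₂₂ u₃₂ u₁₃ u₂₃ u₃₃)
    (hf' : f' = B3 a b c d e f u₁₃ u₂₃ u₃₃ u₁₃ u₂₃ u₃₃)
    (hdet : det3 u₁₁ u₁₂ u₁₃ u₂₁ u₂₂ u₂₃ u₃₁ u₃₂ u₃₃ = 1)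
    (hpos : Pos3 a b c d e f) :
    Pos3 a' b' c' d' e' f' ∧ D3 a' b' c' d' e' f' = D3 a b c d e f ∧
    (∀ n : ℤ, (∃ x y z, Q3 a' b' c' d' e' f' x y z = n) ↔ (∃ x y z, Q3 a b c d e f x y z = n)) ∧
    (∀ m : ℤ, (∀ x y z : ℤ, ¬(x = 0 ∧ y = 0 ∧ z = 0) → m ≤ Q3 a b c d e f x y z) →
      (∀ x y z : ℤ, ¬(x = 0 ∧ y = 0 ∧ z = 0) → m ≤ Q3 a' b' c' d' e' f' x y z)) := by
  subst ha' hb' hc' hd' he' hf'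
  have hval : ∀ x y z : ℤ, Q3 _ _ _ _ _ _ x y z
      = Q3 a b c d e f (u₁₁*x + u₁₂*y + u₁₃*z) (u₂₁*x + u₂₂*y + u₂₃*z) (u₃₁*x + u₃₂*y + u₃₃*z) :=
    fun x y z => q3_trans a b c d e f u₁₁ u₁₂ u₁₃ u₂₁ u₂₂ u₂₃ u₃₁ u₃₂ u₃₃ x y z
  have himg : ∀ x y z : ℤ, ¬(x = 0 ∧ y = 0 ∧ z = 0) →
      ¬(u₁₁*x + u₁₂*y + u₁₃*z = 0 ∧ u₂₁*x + u₂₂*y + u₂₃*z = 0 ∧ u₃₁*x + u₃₂*y + u₃₃*z = 0) := by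
    intro x y z hne hcon
    exact hne (inj3 _ _ _ _ _ _ _ _ _ hdet x y z hcon.1 hcon.2.1 hcon.2.2)
  refine ⟨?_, ?_, ?_, ?_⟩
  · intro x y z hne
    rw [hval]
    exact hpos _ _ _ (himg x y z hne)
  · rw [d3_trans, hdet]; ring
  · intro n
    constructor
    · rintro ⟨x, y, z, hq⟩
      exact ⟨_, _, _, (hval x y z).symm.trans hq⟩
    · rintro ⟨x, y, z, hq⟩
      obtain ⟨x', y', z', h1, h2, h3⟩ := pre3 _ _ _ _ _ _ _ _ _ hdet x y z
      exact ⟨x', y', z', by rw [hval, h1, h2, h3]; exact hq⟩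
  · intro m hm x y z hne
    rw [hval]
    exact hm _ _ _ (himg x y z hne)

/-- Packaged facts for applying a unimodular transformation to a binary form. -/
theorem trans2 (a b d u₁₁ u₁₂ u₂₁ u₂₂ a' b' d' : ℤ)
    (ha' : a' = B2 a b d u₁₁ u₂₁ u₁₁ u₂₁)
    (hb' : b' = B2 a b d u₁₁ u₂₁ u₁₂ u₂₂)
    (hd' : d' = B2 a b d u₁₂ u₂₂ u₁₂ u₂₂)
    (hdet : u₁₁*u₂₂ - u₁₂*u₂₁ = 1)
    (hpos : Pos2 a b d) :
    Pos2 a' b' d' ∧ a'*d' - b'^2 = a*d - b^2 ∧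
    (∀ n : ℤ, (∃ x y, Q2 a' b' d' x y = n) ↔ (∃ x y, Q2 a b d x y = n)) ∧
    (∀ m : ℤ, (∀ x y : ℤ, ¬(x = 0 ∧ y = 0) → m ≤ Q2 a b d x y) →
      (∀ x y : ℤ, ¬(x = 0 ∧ y = 0) → m ≤ Q2 a' b' d' x y)) := by
  subst ha' hb' hd'
  have hval : ∀ x y : ℤ, Q2 _ _ _ x y = Q2 a b d (u₁₁*x + u₁₂*y) (u₂₁*x + u₂₂*y) :=
    fun x y => q2_trans a b d u₁₁ u₁₂ u₂₁ u₂₂ x y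
  have himg : ∀ x y : ℤ, ¬(x = 0 ∧ y = 0) →
      ¬(u₁₁*x + u₁₂*y = 0 ∧ u₂₁*x + u₂₂*y = 0) := by
    intro x y hne hcon
    exact hne (inj2 _ _ _ _ hdet x y hcon.1 hcon.2)
  refine ⟨?_, ?_, ?_, ?_⟩
  · intro x y hne
    rw [hval]
    exact hpos _ _ (himg x y hne)
  · rw [d2_trans, hdet]; ring
  · intro n
    constructor
    · rintro ⟨x, y, hq⟩
      exact ⟨_, _, (hval x y).symm.trans hq⟩
    · rintro ⟨x, y, hq⟩
      obtain ⟨x', y', h1, h2⟩ := pre2 _ _ _ _ hdet x y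
      exact ⟨x', y', by rw [hval, h1, h2]; exact hq⟩
  · intro m hm x y hne
    rw [hval]
    exact hm _ _ (himg x y hne)

end Trans
section Binary

/-- Hermite bound for binary forms: the minimum `m` satisfies `3m² ≤ 4·det`,
and is attained at a primitive vector. -/
theorem bin_min (α β δ : ℤ) (hpos : Pos2 α β δ) :
    ∃ m p q : ℤ, ¬(p = 0 ∧ q = 0) ∧ Int.gcd p q = 1 ∧ Q2 α β δ p q = m ∧
      (∀ x y : ℤ, ¬(x = 0 ∧ y = 0) → m ≤ Q2 α β δ x y) ∧ 0 < m ∧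
      3*m^2 ≤ 4*(α*δ - β^2) := by
  obtain ⟨x, y, hne, hmin⟩ := exists_min2 α β δ hpos
  set m := Q2 α β δ x y with hm
  have hmpos : 0 < m := hpos x y hne
  obtain ⟨g, p, q, hg, hx, hy, hgcd⟩ := exists_prim2 x y hne
  have hpq_ne : ¬(p = 0 ∧ q = 0) := by
    rintro ⟨rfl, rfl⟩
    exact hne ⟨by rw [hx]; ring, by rw [hy]; ring⟩
  have hscale : m = g^2 * Q2 α β δ p q := by rw [hm, hx, hy, q2_scale]
  have hge : m ≤ Q2 α β δ p q := hmin p q hpq_ne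
  have hQpq : Q2 α β δ p q = m := by
    have hQpos := hpos p q hpq_ne
    have hgsq : 1 ≤ g^2 := by nlinarith
    have h2 : Q2 α β δ p q ≤ g^2 * Q2 α β δ p q := by nlinarith
    omega
  obtain ⟨u₁₂, u₂₂, hdetU⟩ := complete2 p q hgcd
  obtain ⟨hpos1, hdet1, _, hmin1⟩ :=
    trans2 α β δ p u₁₂ q u₂₂ _ _ _ rfl rfl rfl hdetU hpos
  set a₁ := B2 α β δ p q p q with ha₁
  set b₁ := B2 α β δ p q u₁₂ u₂₂ with hb₁
  set d₁ := B2 α β δ u₁₂ u₂₂ u₁₂ u₂₂ with hd₁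
  have ha₁m : a₁ = m := by rw [ha₁, b2_diag, hQpq]
  have hmin1' := hmin1 m hmin
  obtain ⟨t, ht⟩ := round_lemma a₁ b₁ (by rw [ha₁m]; exact hmpos)
  obtain ⟨hpos2, hdet2, _, hmin2⟩ :=
    trans2 a₁ b₁ d₁ 1 t 0 1 _ _ _ rfl rfl rfl (by ring) hpos1
  have hmin2' := hmin2 m hmin1'
  set a₂ := B2 a₁ b₁ d₁ 1 0 1 0 with ha₂
  set b₂ := B2 a₁ b₁ d₁ 1 0 t 1 with hb₂
  set d₂ := B2 a₁ b₁ d₁ t 1 t 1 with hd₂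
  have ha₂v : a₂ = a₁ := by rw [ha₂]; unfold B2; ring
  have hb₂v : b₂ = b₁ + t*a₁ := by rw [hb₂]; unfold B2; ring
  have hd₂ge : m ≤ d₂ := by
    have := hmin2' 0 1 (by simp)
    calc m ≤ Q2 a₂ b₂ d₂ 0 1 := this
    _ = d₂ := by unfold Q2; ring
  refine ⟨m, p, q, hpq_ne, hgcd, hQpq, hmin, hmpos, ?_⟩
  have hdetfin : a₂*d₂ - b₂^2 = α*δ - β^2 := by rw [hdet2, hdet1]
  rw [ha₂v, ha₁m] at hdetfin
  rw [ha₁m] at hb₂v ht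
  have h4b : 4*b₂^2 ≤ m^2 := by rw [hb₂v]; exact ht
  have hmm : m*m ≤ m*d₂ := mul_le_mul_of_nonneg_left hd₂ge hmpos.le
  nlinarith [h4b, hmm, hdetfin]

/-- a positive-definite integral binary form of determinant 1 represents
exactly the sums of two squares -/
theorem binary_split (α β δ k : ℤ) (hpos : Pos2 α β δ) (hdet : α*δ - β^2 = 1)
    (hrep : ∃ x y, Q2 α β δ x y = k) : ∃ u v : ℤ, u^2 + v^2 = k := by
  obtain ⟨m, p, q, hne, hgcd, hval, hmin, hmpos, hineq⟩ := bin_min α β δ hpos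
  rw [hdet] at hineq
  have hm1 : m = 1 := by nlinarith
  obtain ⟨u₁₂, u₂₂, hdetU⟩ := complete2 p q hgcd
  obtain ⟨hpos1, hdet1, hrep1, _⟩ :=
    trans2 α β δ p u₁₂ q u₂₂ _ _ _ rfl rfl rfl hdetU hpos
  set a₁ := B2 α β δ p q p q with ha₁
  set b₁ := B2 α β δ p q u₁₂ u₂₂ with hb₁
  set d₁ := B2 α β δ u₁₂ u₂₂ u₁₂ u₂₂ with hd₁
  have ha₁1 : a₁ = 1 := by rw [ha₁, b2_diag, hval, hm1]
  obtain ⟨hpos2, hdet2, hrep2, _⟩ :=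
    trans2 a₁ b₁ d₁ 1 (-b₁) 0 1 _ _ _ rfl rfl rfl (by ring) hpos1
  set a₂ := B2 a₁ b₁ d₁ 1 0 1 0 with ha₂
  set b₂ := B2 a₁ b₁ d₁ 1 0 (-b₁) 1 with hb₂
  set d₂ := B2 a₁ b₁ d₁ (-b₁) 1 (-b₁) 1 with hd₂
  have ha₂v : a₂ = 1 := by rw [ha₂]; unfold B2; rw [show a₁ = 1 from ha₁1]; ring
  have hb₂v : b₂ = 0 := by rw [hb₂]; unfold B2; rw [show a₁ = 1 from ha₁1]; ring
  have hdetfin : a₂*d₂ - b₂^2 = 1 := by rw [hdet2, hdet1, hdet]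
  rw [ha₂v, hb₂v] at hdetfin
  have hd₂v : d₂ = 1 := by linarith [hdetfin]
  have hrep' : ∃ x y, Q2 a₂ b₂ d₂ x y = k := (hrep2 k).mpr ((hrep1 k).mpr hrep)
  obtain ⟨u, v, huv⟩ := hrep'
  refine ⟨u, v, ?_⟩
  rw [ha₂v, hb₂v, hd₂v] at huv
  rw [← huv]; unfold Q2; ring

end Binary
section Ternary

theorem keyI3 (a b c d e f x y z : ℤ) :
    a * Q3 a b c d e f x y z
      = (a*x + b*y + c*z)^2 + Q2 (a*d - b^2) (a*e - b*c) (a*f - c^2) y z := by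
  unfold Q3 Q2; ring

theorem detK3 (a b c d e f : ℤ) :
    (a*d - b^2)*(a*f - c^2) - (a*e - b*c)^2 = a * D3 a b c d e f := by
  unfold D3; ring

theorem pos3_of_minors (a b c d e f : ℤ) (ha : 0 < a) (h2 : 0 < a*d - b^2)
    (h3 : 0 < D3 a b c d e f) : Pos3 a b c d e f := by
  intro x y z hne
  have I1 := keyI3 a b c d e f x y z
  have I2 : (a*d - b^2) * Q2 (a*d - b^2) (a*e - b*c) (a*f - c^2) y z
      = ((a*d - b^2)*y + (a*e - b*c)*z)^2 + a * D3 a b c d e f * z^2 := by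
    unfold Q2 D3; ring
  by_cases hyz : y = 0 ∧ z = 0
  · obtain ⟨rfl, rfl⟩ := hyz
    have hx : x ≠ 0 := by tauto
    have hval : Q3 a b c d e f x 0 0 = a*x^2 := by unfold Q3; ring
    rw [hval]
    exact mul_pos ha (pow_two_pos_of_ne_zero hx)
  · have hK : 0 < Q2 (a*d - b^2) (a*e - b*c) (a*f - c^2) y z := by
      rcases eq_or_ne z 0 with rfl | hz
      · have hy : y ≠ 0 := by tauto
        have hval : Q2 (a*d - b^2) (a*e - b*c) (a*f - c^2) y 0 = (a*d - b^2)*y^2 := by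
          unfold Q2; ring
        rw [hval]
        exact mul_pos h2 (pow_two_pos_of_ne_zero hy)
      · nlinarith [I2, sq_nonneg ((a*d - b^2)*y + (a*e - b*c)*z),
          mul_pos (mul_pos ha h3) (pow_two_pos_of_ne_zero hz)]
    nlinarith [I1, sq_nonneg (a*x + b*y + c*z)]

theorem ternary_rep (a b c d e f n : ℤ) (hpos : Pos3 a b c d e f)
    (hdet : D3 a b c d e f = 1) (hrep : ∃ x y z : ℤ, Q3 a b c d e f x y z = n) :
    ∃ x y z : ℤ, x^2 + y^2 + z^2 = n := by
  obtain ⟨x₀, y₀, z₀, hne, hmin⟩ := exists_min3 a b c d e f hpos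
  obtain ⟨m, hm⟩ : ∃ m, m = Q3 a b c d e f x₀ y₀ z₀ := ⟨_, rfl⟩
  rw [← hm] at hmin
  have hmpos : 0 < m := hm ▸ hpos _ _ _ hne
  obtain ⟨g, p, q, r, hg, hx, hy, hz, hgcd⟩ := exists_prim3 x₀ y₀ z₀ hne
  have hpqr_ne : ¬(p = 0 ∧ q = 0 ∧ r = 0) := by
    rintro ⟨rfl, rfl, rfl⟩
    exact hne ⟨by rw [hx]; ring, by rw [hy]; ring, by rw [hz]; ring⟩
  have hscale : m = g^2 * Q3 a b c d e f p q r := by rw [hm, hx, hy, hz, q3_scale]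
  have hge : m ≤ Q3 a b c d e f p q r := hmin _ _ _ hpqr_ne
  have hQ : Q3 a b c d e f p q r = m := by
    have hQpos := hpos p q r hpqr_ne
    have hgsq : 1 ≤ g^2 := by nlinarith
    have h2 : Q3 a b c d e f p q r ≤ g^2 * Q3 a b c d e f p q r := by nlinarith
    omega
  obtain ⟨u₁₂, u₁₃, u₂₂, u₂₃, u₃₂, u₃₃, hdetU⟩ := complete3 p q r hgcd
  obtain ⟨a₁, ha₁⟩ : ∃ v, v = B3 a b c d e f p q r p q r := ⟨_, rfl⟩
  obtain ⟨b₁, hb₁⟩ : ∃ v, v = B3 a b c d e f p q r u₁₂ u₂₂ u₃₂ := ⟨_, rfl⟩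
  obtain ⟨c₁, hc₁⟩ : ∃ v, v = B3 a b c d e f p q r u₁₃ u₂₃ u₃₃ := ⟨_, rfl⟩
  obtain ⟨d₁, hd₁⟩ : ∃ v, v = B3 a b c d e f u₁₂ u₂₂ u₃₂ u₁₂ u₂₂ u₃₂ := ⟨_, rfl⟩
  obtain ⟨e₁, he₁⟩ : ∃ v, v = B3 a b c d e f u₁₂ u₂₂ u₃₂ u₁₃ u₂₃ u₃₃ := ⟨_, rfl⟩
  obtain ⟨f₁, hf₁⟩ : ∃ v, v = B3 a b c d e f u₁₃ u₂₃ u₃₃ u₁₃ u₂₃ u₃₃ := ⟨_, rfl⟩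
  obtain ⟨hpos1, hdet1, hrep1, hmin1⟩ :=
    trans3 a b c d e f p u₁₂ u₁₃ q u₂₂ u₂₃ r u₃₂ u₃₃ a₁ b₁ c₁ d₁ e₁ f₁
      ha₁ hb₁ hc₁ hd₁ he₁ hf₁ hdetU hpos
  have ha₁m : a₁ = m := by rw [ha₁, b3_diag, hQ]
  have ha₁pos : 0 < a₁ := by rw [ha₁m]; exact hmpos
  have hdet1' : D3 a₁ b₁ c₁ d₁ e₁ f₁ = 1 := by rw [hdet1, hdet]
  have hmin1' := hmin1 m hmin
  -- The binary form K obtained by completing the square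
  have hKpos : Pos2 (a₁*d₁ - b₁^2) (a₁*e₁ - b₁*c₁) (a₁*f₁ - c₁^2) := by
    intro y z hyz
    have hvec_ne : ¬(-(b₁*y + c₁*z) = 0 ∧ a₁*y = 0 ∧ a₁*z = 0) := by
      rintro ⟨h1, h2, h3⟩
      rcases mul_eq_zero.mp h2 with h | h
      · exact absurd h ha₁pos.ne'
      · rcases mul_eq_zero.mp h3 with h' | h'
        · exact absurd h' ha₁pos.ne'
        · exact hyz ⟨h, h'⟩
    have hQv := hpos1 _ _ _ hvec_ne
    have hq := keyI3 a₁ b₁ c₁ d₁ e₁ f₁ (-(b₁*y + c₁*z)) (a₁*y) (a₁*z)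
    have hz0 : a₁*(-(b₁*y + c₁*z)) + b₁*(a₁*y) + c₁*(a₁*z) = 0 := by ring
    rw [hz0] at hq
    rw [q2_scale] at hq
    nlinarith [hq, hQv, ha₁pos]
  obtain ⟨mK, y₂, z₂, hyz₂ne, _, hvK, hminK, hmKpos, hineqK⟩ :=
    bin_min (a₁*d₁ - b₁^2) (a₁*e₁ - b₁*c₁) (a₁*f₁ - c₁^2) hKpos
  have hdetKval : (a₁*d₁ - b₁^2)*(a₁*f₁ - c₁^2) - (a₁*e₁ - b₁*c₁)^2 = a₁ := by
    rw [detK3, hdet1', mul_one]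
  rw [hdetKval] at hineqK
  obtain ⟨t, ht⟩ := round_lemma a₁ (b₁*y₂ + c₁*z₂) ha₁pos
  have hr : 4*(a₁*t + b₁*y₂ + c₁*z₂)^2 ≤ a₁^2 := by
    rw [show a₁*t + b₁*y₂ + c₁*z₂ = (b₁*y₂ + c₁*z₂) + t*a₁ by ring]
    exact ht
  have hq3 := keyI3 a₁ b₁ c₁ d₁ e₁ f₁ t y₂ z₂
  rw [hvK] at hq3
  have hQt_ge : m ≤ Q3 a₁ b₁ c₁ d₁ e₁ f₁ t y₂ z₂ := hmin1' t y₂ z₂ (by tauto)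
  have h1 : 3*a₁^2 ≤ 4*mK := by
    have hmul : a₁*m ≤ a₁ * Q3 a₁ b₁ c₁ d₁ e₁ f₁ t y₂ z₂ :=
      mul_le_mul_of_nonneg_left hQt_ge ha₁pos.le
    rw [← ha₁m] at hmul
    linarith [hq3, hr, hmul]
  have ha₁1 : a₁ = 1 := by
    by_contra hcon
    have h2a : 2 ≤ a₁ := by omega
    have hsq : 9*a₁^4 ≤ 16*mK^2 := by nlinarith [h1]
    nlinarith [hsq, hineqK, h2a, ha₁pos]
  -- shear to split off x²
  obtain ⟨a₂, ha₂⟩ : ∃ v, v = B3 a₁ b₁ c₁ d₁ e₁ f₁ 1 0 0 1 0 0 := ⟨_, rfl⟩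
  obtain ⟨b₂, hb₂⟩ : ∃ v, v = B3 a₁ b₁ c₁ d₁ e₁ f₁ 1 0 0 (-b₁) 1 0 := ⟨_, rfl⟩
  obtain ⟨c₂, hc₂⟩ : ∃ v, v = B3 a₁ b₁ c₁ d₁ e₁ f₁ 1 0 0 (-c₁) 0 1 := ⟨_, rfl⟩
  obtain ⟨d₂, hd₂⟩ : ∃ v, v = B3 a₁ b₁ c₁ d₁ e₁ f₁ (-b₁) 1 0 (-b₁) 1 0 := ⟨_, rfl⟩
  obtain ⟨e₂, he₂⟩ : ∃ v, v = B3 a₁ b₁ c₁ d₁ e₁ f₁ (-b₁) 1 0 (-c₁) 0 1 := ⟨_, rfl⟩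
  obtain ⟨f₂, hf₂⟩ : ∃ v, v = B3 a₁ b₁ c₁ d₁ e₁ f₁ (-c₁) 0 1 (-c₁) 0 1 := ⟨_, rfl⟩
  obtain ⟨hpos2, hdet2, hrep2, _⟩ :=
    trans3 a₁ b₁ c₁ d₁ e₁ f₁ 1 (-b₁) (-c₁) 0 1 0 0 0 1 a₂ b₂ c₂ d₂ e₂ f₂
      ha₂ hb₂ hc₂ hd₂ he₂ hf₂ (by unfold det3; ring) hpos1
  have ha₂v : a₂ = 1 := by rw [ha₂]; unfold B3; rw [show a₁ = 1 from ha₁1]; ring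
  have hb₂v : b₂ = 0 := by rw [hb₂]; unfold B3; rw [show a₁ = 1 from ha₁1]; ring
  have hc₂v : c₂ = 0 := by rw [hc₂]; unfold B3; rw [show a₁ = 1 from ha₁1]; ring
  have hrestrict : ∀ y z : ℤ, Q3 a₂ b₂ c₂ d₂ e₂ f₂ 0 y z = Q2 d₂ e₂ f₂ y z := by
    intro y z; unfold Q3 Q2; ring
  have hPos2' : Pos2 d₂ e₂ f₂ := by
    intro y z hyz
    have := hpos2 0 y z (by tauto)
    rwa [hrestrict] at this
  have hdet2' : d₂*f₂ - e₂^2 = 1 := by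
    have hD : D3 a₂ b₂ c₂ d₂ e₂ f₂ = 1 := by rw [hdet2, hdet1']
    rw [ha₂v, hb₂v, hc₂v] at hD
    unfold D3 at hD
    linear_combination hD
  have hrep' : ∃ x y z : ℤ, Q3 a₂ b₂ c₂ d₂ e₂ f₂ x y z = n :=
    (hrep2 n).mpr ((hrep1 n).mpr hrep)
  obtain ⟨x, y, z, hxyz⟩ := hrep'
  rw [ha₂v, hb₂v, hc₂v] at hxyz
  have hsplit : Q2 d₂ e₂ f₂ y z = n - x^2 := by
    unfold Q3 at hxyz; unfold Q2; linear_combination hxyz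
  obtain ⟨u, v, huv⟩ := binary_split d₂ e₂ f₂ (n - x^2) hPos2' hdet2' ⟨y, z, hsplit⟩
  exact ⟨x, u, v, by linarith⟩

end Ternary
section Arith

open scoped NumberTheorySymbols in
theorem jacobi_step (n P m : ℕ) (hn8 : n % 8 = 3) (hP : P.Prime) (hP4 : P % 4 = 1)
    (hPn : 4*n < P) (hnm : n * m = 2*P + 1) (hn0 : 0 < n) :
    IsSquare ((-(m:ℤ) : ℤ) : ZMod P) := by
  haveI : Fact P.Prime := ⟨hP⟩
  have hOddP : Odd P := Nat.odd_iff.mpr (by omega)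
  have hOddn : Odd n := Nat.odd_iff.mpr (by omega)
  have hnmZ : (n:ℤ) * m = 2*P + 1 := by exact_mod_cast hnm
  -- J(P | n) = 1
  have h2P : J(2*(P:ℤ) | n) = J(-1 | n) := by
    apply jacobiSym.mod_left'
    rw [show 2*(P:ℤ) = (n:ℤ)*m - 1 by linarith]
    rw [Int.sub_emod, Int.mul_emod_right,
      show (-1 : ℤ) = 0 - 1 by ring, Int.sub_emod, Int.zero_emod,
      Int.emod_emod_of_dvd _ dvd_rfl]
    conv_rhs => rw [Int.sub_emod, Int.zero_emod]
  have h2n : J((2:ℤ) | n) = -1 := by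
    rw [jacobiSym.at_two hOddn, ZMod.χ₈_nat_eq_if_mod_eight]
    simp [hn8, show n % 2 = 1 by omega]
  have hneg1 : J((-1:ℤ) | n) = -1 := by
    rw [jacobiSym.at_neg_one hOddn, ZMod.χ₄_nat_eq_if_mod_four]
    simp [show n % 2 = 1 by omega, show n % 4 = 3 by omega]
  have hJPn : J((P:ℤ) | n) = 1 := by
    have hs : J((2:ℤ) | n) * J((P:ℤ) | n) = -1 := by
      rw [← jacobiSym.mul_left, h2P, hneg1]
    rw [h2n] at hs
    linarith
  -- reciprocity
  have hrecip : J((P:ℤ) | n) = J((n:ℤ) | P) :=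
    jacobiSym.quadratic_reciprocity_one_mod_four hP4 hOddn
  have hJnP : J((n:ℤ) | P) = 1 := by rw [← hrecip]; exact hJPn
  -- J(m | P) = 1
  have hmn : J((m:ℤ) | P) * J((n:ℤ) | P) = 1 := by
    rw [← jacobiSym.mul_left]
    have hmod : ((m:ℤ) * n) % P = 1 % P := by
      rw [show (m:ℤ)*n = 1 + (P:ℤ)*2 by linarith, Int.add_mul_emod_self_left]
    rw [jacobiSym.mod_left' hmod, jacobiSym.one_left]
  have hJmP : J((m:ℤ) | P) = 1 := by rw [hJnP, mul_one] at hmn; exact hmn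
  have hJnegm : J((-(m:ℤ)) | P) = 1 := by
    rw [show -(m:ℤ) = -1 * m by ring, jacobiSym.mul_left,
      jacobiSym.at_neg_one hOddP, ZMod.χ₄_nat_eq_if_mod_four]
    simp [hP4, show P % 2 = 1 by omega, hJmP]
  exact ZMod.isSquare_of_jacobiSym_eq_one hJnegm

theorem coprime_of_modEq {a b k : ℕ} (h : a ≡ b [MOD k]) (hb : Nat.Coprime b k) :
    Nat.Coprime a k := by
  have h1 : Nat.gcd k a = Nat.gcd k b := by
    rw [Nat.gcd_rec k a, Nat.gcd_rec k b, h]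
  have := hb
  unfold Nat.Coprime at *
  rw [Nat.gcd_comm, h1, Nat.gcd_comm]
  exact this

theorem sq_mod4 (x : ℤ) : (Odd x ∧ x^2 % 4 = 1) ∨ x^2 % 4 = 0 := by
  rcases Int.even_or_odd x with ⟨k, hk⟩ | ⟨k, hk⟩
  · right
    have h : x^2 = 4*(k*k) := by rw [hk]; ring
    rw [h]
    exact Int.mul_emod_right 4 (k*k)
  · left
    refine ⟨⟨k, hk⟩, ?_⟩
    have h : x^2 = 1 + (k*k + k)*4 := by rw [hk]; ring
    rw [h, Int.add_mul_emod_self_right]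
    norm_num

end Arith
theorem sum_three_odd_squares (n : ℕ) (hn : 0 < n) (h : n % 8 = 3) :
    ∃ x y z : ℤ, Odd x ∧ Odd y ∧ Odd z ∧ (n : ℤ) = x ^ 2 + y ^ 2 + z ^ 2 := by
  have hOddn : Odd n := Nat.odd_iff.mpr (by omega)
  have hn3 : 3 ≤ n := by omega
  -- the residue class for Dirichlet
  set H : ℕ := (n-1)/2 with hH
  have hn2H : 2*H + 1 = n := by omega
  have hcopHn : Nat.Coprime H n := by
    have h1 : Nat.gcd H n ∣ 1 := by
      have hd1 := Nat.gcd_dvd_left H n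
      have hd2 := Nat.gcd_dvd_right H n
      have hd3 : Nat.gcd H n ∣ 2*H := Dvd.dvd.mul_left hd1 2
      have hd4 : Nat.gcd H n ∣ n - 2*H := Nat.dvd_sub hd2 hd3
      rwa [show n - 2*H = 1 by omega] at hd4
    exact Nat.dvd_one.mp h1
  have hcop4n : Nat.Coprime 4 n := by
    rw [show (4:ℕ) = 2^2 by norm_num]
    exact Nat.Coprime.pow_left 2 ((Nat.prime_two.coprime_iff_not_dvd).mpr (by omega))
  obtain ⟨c, hc4, hcn⟩ := Nat.chineseRemainder hcop4n 1 H
  have hccop : Nat.Coprime c (4*n) :=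
    Nat.Coprime.mul_right (coprime_of_modEq hc4 (by norm_num))
      (coprime_of_modEq hcn hcopHn)
  haveI : NeZero (4*n) := ⟨by omega⟩
  have hu : IsUnit ((c : ℕ) : ZMod (4*n)) :=
    ⟨ZMod.unitOfCoprime c hccop, ZMod.coe_unitOfCoprime c hccop⟩
  obtain ⟨P, hPgt, hPp, hPmod⟩ := Nat.forall_exists_prime_gt_and_eq_mod hu (4*n)
  have hPc : P ≡ c [MOD 4*n] := (ZMod.natCast_eq_natCast_iff P c (4*n)).mp hPmod
  have hP4 : P % 4 = 1 := by
    have h1 : P ≡ c [MOD 4] := hPc.of_dvd (dvd_mul_right 4 n)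
    have h2 : P ≡ 1 [MOD 4] := h1.trans hc4
    have h3 : P % 4 = 1 % 4 := h2
    omega
  have hPH : P ≡ H [MOD n] := (hPc.of_dvd (dvd_mul_left n 4)).trans hcn
  have hdvd : n ∣ 2*P + 1 := by
    have h1 : 2*P + 1 ≡ 2*H + 1 [MOD n] := (hPH.mul_left 2).add_right 1
    rw [hn2H] at h1
    have h2 : 2*P + 1 ≡ 0 [MOD n] := h1.trans (Nat.modEq_zero_iff_dvd.mpr dvd_rfl)
    exact (Nat.modEq_zero_iff_dvd).mp h2
  set m : ℕ := (2*P + 1)/n with hm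
  have hnm : n * m = 2*P + 1 := Nat.mul_div_cancel' hdvd
  have hm1 : 1 ≤ m := by
    rcases Nat.eq_zero_or_pos m with h0 | h1
    · rw [h0, mul_zero] at hnm; omega
    · exact h1
  have hmodd : Odd m := (Nat.odd_mul.mp (by rw [hnm]; exact ⟨P, by ring⟩)).2
  -- square root of -m mod P
  haveI : Fact P.Prime := ⟨hPp⟩
  have hOddP : Odd P := Nat.odd_iff.mpr (by omega)
  obtain ⟨r0, hr0⟩ := jacobi_step n P m h hPp hP4 hPgt hnm hn
  have hPz1 : (1:ℤ) < P := by exact_mod_cast hPp.one_lt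
  -- integer square root of -m : B0
  set B0 : ℤ := (r0.val : ℤ) with hB0def
  have hB0 : (P:ℤ) ∣ B0^2 + m := by
    have hcast : ((B0^2 + m : ℤ) : ZMod P) = 0 := by
      push_cast
      have hv : ((r0.val : ℤ) : ZMod P) = r0 := by
        push_cast
        simp [ZMod.natCast_val, ZMod.cast_id]
      rw [hB0def, hv]
      have : ((-(m:ℤ) : ℤ) : ZMod P) = r0 * r0 := hr0
      push_cast at this
      rw [show (r0:ZMod P)^2 = r0 * r0 by ring, ← this]
      ring
    exact (ZMod.intCast_zmod_eq_zero_iff_dvd _ _).mp hcast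
  -- make it odd
  obtain ⟨b, hbodd, hbdvd⟩ : ∃ b : ℤ, Odd b ∧ (P:ℤ) ∣ b^2 + m := by
    rcases Int.even_or_odd B0 with hE | hO
    · refine ⟨B0 + P, hE.add_odd (by exact_mod_cast hOddP), ?_⟩
      have hre : (B0 + P)^2 + m = (B0^2 + m) + (P:ℤ)*(2*B0 + P) := by ring
      rw [hre]
      exact dvd_add hB0 (dvd_mul_right _ _)
    · exact ⟨B0, hO, hB0⟩
  have hmZodd : Odd (m:ℤ) := by
    rcases hmodd with ⟨k, hk⟩; exact ⟨k, by exact_mod_cast hk⟩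
  have h2dvd : (2:ℤ) ∣ b^2 + m := by
    obtain ⟨k, hk⟩ := (hbodd.pow (n := 2)).add_odd hmZodd
    exact ⟨k, by linarith⟩
  have hcop2P : IsCoprime (2:ℤ) (P:ℤ) := by
    rw [Int.isCoprime_iff_gcd_eq_one]
    have : Nat.gcd 2 P = 1 := (Nat.prime_two.coprime_iff_not_dvd).mpr
      (fun ⟨k, hk⟩ => by omega)
    simpa [Int.gcd]
  have h2Pdvd : (2*(P:ℤ)) ∣ b^2 + m := hcop2P.mul_dvd h2dvd hbdvd
  set K : ℤ := (b^2 + m) / (2*P) with hKdef0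
  have hKdef : b^2 + (m:ℤ) = 2*P*K := (Int.mul_ediv_cancel' h2Pdvd).symm
  have hKpos : 0 < K := by
    rcases le_or_gt K 0 with hK0 | hK0
    · exfalso
      have h1 : 2*(P:ℤ)*K ≤ 0 := mul_nonpos_of_nonneg_of_nonpos (by positivity) hK0
      have h2 : (1:ℤ) ≤ m := by exact_mod_cast hm1
      nlinarith [sq_nonneg b]
    · exact hK0
  have hmZ : (1:ℤ) ≤ m := by exact_mod_cast hm1
  have hminor : 0 < K*(2*(P:ℤ)) - (-b)^2 := by nlinarith [hKdef]
  have hnmZ : (n:ℤ) * m = 2*P + 1 := by exact_mod_cast hnm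
  have hdet : D3 K (-b) 1 (2*(P:ℤ)) 0 n = 1 := by
    unfold D3
    linear_combination (-(n:ℤ))*hKdef + hnmZ
  have hpos : Pos3 K (-b) 1 (2*(P:ℤ)) 0 n :=
    pos3_of_minors _ _ _ _ _ _ hKpos hminor (by rw [hdet]; exact one_pos)
  have hrep : ∃ x y z : ℤ, Q3 K (-b) 1 (2*(P:ℤ)) 0 n x y z = n :=
    ⟨0, 0, 1, by unfold Q3; ring⟩
  obtain ⟨x, y, z, hxyz⟩ := ternary_rep _ _ _ _ _ _ _ hpos hdet hrep
  -- parity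
  have hn4 : (n:ℤ) % 4 = 3 := by omega
  obtain ⟨X, hX⟩ : ∃ X, X = x^2 := ⟨_, rfl⟩
  obtain ⟨Y, hY⟩ : ∃ Y, Y = y^2 := ⟨_, rfl⟩
  obtain ⟨Z, hZ⟩ : ∃ Z, Z = z^2 := ⟨_, rfl⟩
  have hsum : X + Y + Z = (n:ℤ) := by rw [hX, hY, hZ]; exact hxyz
  rcases sq_mod4 x with ⟨hxo, hx4⟩ | hx4 <;> rcases sq_mod4 y with ⟨hyo, hy4⟩ | hy4 <;>
    rcases sq_mod4 z with ⟨hzo, hz4⟩ | hz4 <;> rw [← hX] at hx4 <;> rw [← hY] at hy4 <;>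
    rw [← hZ] at hz4
  · exact ⟨x, y, z, hxo, hyo, hzo, hxyz.symm⟩
  all_goals omega
end Mins
end

section
/- Every positive integer is a sum of at most 6 squares of integers not divisible by 3. -/
/-- Choose signs so that the sum of the (sign-adjusted) values is not divisible by 3. -/
lemma sign_choice_aux (t1 t2 t3 : ℤ) (h : ¬ (3:ℤ) ∣ t1 ∨ ¬ (3:ℤ) ∣ t2 ∨ ¬ (3:ℤ) ∣ t3) :
    ∃ s1 s2 s3 : ℤ, s1^2 = t1^2 ∧ s2^2 = t2^2 ∧ s3^2 = t3^2 ∧ ¬ (3:ℤ) ∣ (s1 + s2 + s3) := by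
  have key : ∀ r1 r2 r3 : ZMod 3, (r1 ≠ 0 ∨ r2 ≠ 0 ∨ r3 ≠ 0) →
      (r1 + r2 + r3 ≠ 0 ∨ r1 + r2 + (-r3) ≠ 0 ∨ r1 + (-r2) + r3 ≠ 0 ∨
        r1 + (-r2) + (-r3) ≠ 0) := by decide
  have hdvd : ∀ t : ℤ, ((t : ZMod 3) = 0) ↔ (3:ℤ) ∣ t := fun t => by
    simpa using ZMod.intCast_zmod_eq_zero_iff_dvd t 3
  have h' : ((t1 : ZMod 3) ≠ 0 ∨ (t2 : ZMod 3) ≠ 0 ∨ (t3 : ZMod 3) ≠ 0) := by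
    rcases h with h | h | h
    · exact Or.inl (fun hh => h ((hdvd t1).1 hh))
    · exact Or.inr (Or.inl (fun hh => h ((hdvd t2).1 hh)))
    · exact Or.inr (Or.inr (fun hh => h ((hdvd t3).1 hh)))
  rcases key _ _ _ h' with hk | hk | hk | hk
  · exact ⟨t1, t2, t3, by ring, by ring, by ring, fun hd => hk (by
      rw [← hdvd] at hd; push_cast at hd; linear_combination hd)⟩
  · exact ⟨t1, t2, -t3, by ring, by ring, by ring, fun hd => hk (by
      rw [← hdvd] at hd; push_cast at hd; linear_combination hd)⟩
  · exact ⟨t1, -t2, t3, by ring, by ring, by ring, fun hd => hk (by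
      rw [← hdvd] at hd; push_cast at hd; linear_combination hd)⟩
  · exact ⟨t1, -t2, -t3, by ring, by ring, by ring, fun hd => hk (by
      rw [← hdvd] at hd; push_cast at hd; linear_combination hd)⟩

/-- If not all of `t1 t2 t3` are divisible by 3, then `9*(t1²+t2²+t3²)` is a sum of three
squares none divisible by 3. -/
lemma nine_mul_rep (t1 t2 t3 : ℤ) (h : ¬ (3:ℤ) ∣ t1 ∨ ¬ (3:ℤ) ∣ t2 ∨ ¬ (3:ℤ) ∣ t3) :
    ∃ a b c : ℤ, ¬ (3:ℤ) ∣ a ∧ ¬ (3:ℤ) ∣ b ∧ ¬ (3:ℤ) ∣ c ∧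
      a^2 + b^2 + c^2 = 9 * (t1^2 + t2^2 + t3^2) := by
  obtain ⟨s1, s2, s3, e1, e2, e3, hs⟩ := sign_choice_aux t1 t2 t3 h
  refine ⟨-2*s1 - 2*s2 + s3, -2*s1 + s2 - 2*s3, -s1 + 2*s2 + 2*s3, ?_, ?_, ?_, ?_⟩
  · intro hd; exact hs (by omega)
  · intro hd; exact hs (by omega)
  · intro hd; exact hs (by omega)
  · rw [← e1, ← e2, ← e3]; ring

/-- If `M ≥ 1` is a sum of three integer squares, then `9*M` is a sum of three squares
none divisible by 3. -/
lemma nine_rep : ∀ M : ℕ, 0 < M → ∀ t1 t2 t3 : ℤ, (M:ℤ) = t1^2 + t2^2 + t3^2 →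
    ∃ a b c : ℤ, ¬ (3:ℤ) ∣ a ∧ ¬ (3:ℤ) ∣ b ∧ ¬ (3:ℤ) ∣ c ∧
      9 * (M:ℤ) = a^2 + b^2 + c^2 := by
  intro M
  induction M using Nat.strong_induction_on with
  | _ M ih =>
    intro hM t1 t2 t3 ht
    by_cases h : ¬ (3:ℤ) ∣ t1 ∨ ¬ (3:ℤ) ∣ t2 ∨ ¬ (3:ℤ) ∣ t3
    · obtain ⟨a, b, c, h1, h2, h3, habc⟩ := nine_mul_rep t1 t2 t3 h
      exact ⟨a, b, c, h1, h2, h3, by rw [ht]; linarith⟩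
    · push_neg at h
      obtain ⟨⟨u1, rfl⟩, ⟨u2, rfl⟩, ⟨u3, rfl⟩⟩ := h
      have hK : (M:ℤ) = 9 * (u1^2 + u2^2 + u3^2) := by rw [ht]; ring
      have hKnn : (0:ℤ) ≤ u1^2 + u2^2 + u3^2 := by positivity
      set K : ℤ := u1^2 + u2^2 + u3^2 with hKdef
      have h9 : (9 * (M / 9) : ℕ) = M := by omega
      have hM' : ((M / 9 : ℕ) : ℤ) = K := by omega
      have hM'pos : 0 < M / 9 := by omega
      have hM'lt : M / 9 < M := by omega
      obtain ⟨a, b, c, h1, h2, h3, habc⟩ := ih (M / 9) hM'lt hM'pos u1 u2 u3 hM'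
      obtain ⟨A, B, C, g1, g2, g3, gabc⟩ := nine_mul_rep a b c (Or.inl h1)
      refine ⟨A, B, C, g1, g2, g3, ?_⟩
      have : 9 * ((M / 9 : ℕ) : ℤ) = a^2 + b^2 + c^2 := habc
      rw [gabc, ← this]
      omega

def G (n : ℕ) : Prop := ∃ k : ℕ, 1 ≤ k ∧ k ≤ 6 ∧
      ∃ x : Fin k → ℤ, (∀ i, ¬ (3 : ℤ) ∣ x i) ∧ (n : ℤ) = ∑ i, (x i) ^ 2

/-- turn a nonneg integer sum-of-3-squares chunk into 3 good squares for 9× it -/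
lemma chunk (c d e : ℤ) (h : ¬ (c = 0 ∧ d = 0 ∧ e = 0)) :
    ∃ a b c' : ℤ, ¬ (3:ℤ) ∣ a ∧ ¬ (3:ℤ) ∣ b ∧ ¬ (3:ℤ) ∣ c' ∧
      9 * (c^2 + d^2 + e^2) = a^2 + b^2 + c'^2 := by
  have hnn : (0:ℤ) ≤ c^2 + d^2 + e^2 := by positivity
  have hpos : (0:ℤ) < c^2 + d^2 + e^2 := by
    rcases lt_or_eq_of_le hnn with h' | h'
    · exact h'
    · exfalso; apply h
      refine ⟨?_, ?_, ?_⟩ <;> nlinarith [sq_nonneg c, sq_nonneg d, sq_nonneg e]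
  set M : ℕ := (c^2 + d^2 + e^2).toNat with hMdef
  have hM : (M:ℤ) = c^2 + d^2 + e^2 := Int.toNat_of_nonneg hnn
  have hMpos : 0 < M := by omega
  obtain ⟨a, b, c', h1, h2, h3, habc⟩ := nine_rep M hMpos c d e hM
  exact ⟨a, b, c', h1, h2, h3, by rw [← hM]; exact habc⟩

lemma L4 (n : ℕ) (x1 x2 x3 x4 : ℤ) (h1 : ¬(3:ℤ) ∣ x1) (h2 : ¬(3:ℤ) ∣ x2)
    (h3 : ¬(3:ℤ) ∣ x3) (h4 : ¬(3:ℤ) ∣ x4)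
    (he : (n:ℤ) = x1^2 + x2^2 + x3^2 + x4^2) : G n :=
  ⟨4, by norm_num, by norm_num, ![x1, x2, x3, x4],
    by intro i; fin_cases i <;> assumption,
    by rw [Fin.sum_univ_four]; simpa using he⟩

lemma L3 (n : ℕ) (x1 x2 x3 e : ℤ) (h1 : ¬(3:ℤ) ∣ x1) (h2 : ¬(3:ℤ) ∣ x2)
    (h3 : ¬(3:ℤ) ∣ x3) (he : (3:ℤ) ∣ e)
    (hn : (n:ℤ) = x1^2 + x2^2 + x3^2 + e^2) : G n := by
  obtain ⟨c, rfl⟩ := he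
  by_cases hc : c = 0
  · subst hc
    exact ⟨3, by norm_num, by norm_num, ![x1, x2, x3],
      by intro i; fin_cases i <;> assumption,
      by rw [Fin.sum_univ_three]; simp at hn ⊢; linarith⟩
  · obtain ⟨a, b, c', g1, g2, g3, gabc⟩ := chunk c 0 0 (by tauto)
    refine ⟨6, by norm_num, by norm_num, ![x1, x2, x3, a, b, c'],
      by intro i; fin_cases i <;> assumption, ?_⟩
    simp [Fin.sum_univ_succ]
    nlinarith [gabc, hn]

lemma L2 (n : ℕ) (x1 x2 e f : ℤ) (h1 : ¬(3:ℤ) ∣ x1) (h2 : ¬(3:ℤ) ∣ x2)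
    (he : (3:ℤ) ∣ e) (hf : (3:ℤ) ∣ f)
    (hn : (n:ℤ) = x1^2 + x2^2 + e^2 + f^2) : G n := by
  obtain ⟨c, rfl⟩ := he; obtain ⟨d, rfl⟩ := hf
  by_cases hc : c = 0 ∧ d = 0
  · obtain ⟨rfl, rfl⟩ := hc
    exact ⟨2, by norm_num, by norm_num, ![x1, x2],
      by intro i; fin_cases i <;> assumption,
      by rw [Fin.sum_univ_two]; simp at hn ⊢; linarith⟩
  · obtain ⟨a, b, c', g1, g2, g3, gabc⟩ := chunk c d 0 (by tauto)
    refine ⟨5, by norm_num, by norm_num, ![x1, x2, a, b, c'],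
      by intro i; fin_cases i <;> assumption, ?_⟩
    simp [Fin.sum_univ_succ]
    nlinarith [gabc, hn]

lemma L1 (n : ℕ) (x1 e f g : ℤ) (h1 : ¬(3:ℤ) ∣ x1)
    (he : (3:ℤ) ∣ e) (hf : (3:ℤ) ∣ f) (hg : (3:ℤ) ∣ g)
    (hn : (n:ℤ) = x1^2 + e^2 + f^2 + g^2) : G n := by
  obtain ⟨c, rfl⟩ := he; obtain ⟨d, rfl⟩ := hf; obtain ⟨p, rfl⟩ := hg
  by_cases hc : c = 0 ∧ d = 0 ∧ p = 0
  · obtain ⟨rfl, rfl, rfl⟩ := hc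
    exact ⟨1, by norm_num, by norm_num, ![x1],
      by intro i; fin_cases i <;> assumption,
      by rw [Fin.sum_univ_one]; simp at hn ⊢; linarith⟩
  · obtain ⟨a, b, c', g1, g2, g3, gabc⟩ := chunk c d p hc
    refine ⟨4, by norm_num, by norm_num, ![x1, a, b, c'],
      by intro i; fin_cases i <;> assumption, ?_⟩
    simp [Fin.sum_univ_succ]
    nlinarith [gabc, hn]

lemma L0 (n : ℕ) (hn0 : 0 < n) (e f g h : ℤ)
    (he : (3:ℤ) ∣ e) (hf : (3:ℤ) ∣ f) (hg : (3:ℤ) ∣ g) (hh : (3:ℤ) ∣ h)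
    (hn : (n:ℤ) = e^2 + f^2 + g^2 + h^2) : G n := by
  obtain ⟨c, rfl⟩ := he; obtain ⟨d, rfl⟩ := hf
  obtain ⟨p, rfl⟩ := hg; obtain ⟨q, rfl⟩ := hh
  by_cases h1 : c = 0 ∧ d = 0
  · obtain ⟨rfl, rfl⟩ := h1
    have h2 : ¬ (p = 0 ∧ q = 0 ∧ (0:ℤ) = 0) := by
      rintro ⟨rfl, rfl, -⟩; simp at hn; omega
    obtain ⟨a, b, c', g1, g2, g3, gabc⟩ := chunk p q 0 h2
    refine ⟨3, by norm_num, by norm_num, ![a, b, c'],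
      by intro i; fin_cases i <;> assumption, ?_⟩
    simp [Fin.sum_univ_succ]
    nlinarith [gabc, hn]
  · by_cases h2 : p = 0 ∧ q = 0
    · obtain ⟨rfl, rfl⟩ := h2
      obtain ⟨a, b, c', g1, g2, g3, gabc⟩ := chunk c d 0 (by tauto)
      refine ⟨3, by norm_num, by norm_num, ![a, b, c'],
        by intro i; fin_cases i <;> assumption, ?_⟩
      simp [Fin.sum_univ_succ]
      nlinarith [gabc, hn]
    · obtain ⟨a, b, c', g1, g2, g3, gabc⟩ := chunk c d 0 (by tauto)
      obtain ⟨a2, b2, c2, k1, k2, k3, kabc⟩ := chunk p q 0 (by tauto)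
      refine ⟨6, by norm_num, by norm_num, ![a, b, c', a2, b2, c2],
        by intro i; fin_cases i <;> assumption, ?_⟩
      simp [Fin.sum_univ_succ]
      nlinarith [gabc, kabc, hn]

theorem main_aux (n : ℕ) (hn : 0 < n) : G n := by
  obtain ⟨a, b, c, d, habcd⟩ := Nat.sum_four_squares n
  have hn' : (n:ℤ) = (a:ℤ)^2 + (b:ℤ)^2 + (c:ℤ)^2 + (d:ℤ)^2 := by
    exact_mod_cast congrArg (Nat.cast : ℕ → ℤ) habcd.symm
  by_cases hA : (3:ℤ) ∣ (a:ℤ) <;> by_cases hB : (3:ℤ) ∣ (b:ℤ) <;>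
    by_cases hC : (3:ℤ) ∣ (c:ℤ) <;> by_cases hD : (3:ℤ) ∣ (d:ℤ)
  · exact L0 n hn _ _ _ _ hA hB hC hD hn'
  · exact L1 n _ _ _ _ hD hA hB hC (by linear_combination hn')
  · exact L1 n _ _ _ _ hC hA hB hD (by linear_combination hn')
  · exact L2 n _ _ _ _ hC hD hA hB (by linear_combination hn')
  · exact L1 n _ _ _ _ hB hA hC hD (by linear_combination hn')
  · exact L2 n _ _ _ _ hB hD hA hC (by linear_combination hn')
  · exact L2 n _ _ _ _ hB hC hA hD (by linear_combination hn')
  · exact L3 n _ _ _ _ hB hC hD hA (by linear_combination hn')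
  · exact L1 n _ _ _ _ hA hB hC hD (by linear_combination hn')
  · exact L2 n _ _ _ _ hA hD hB hC (by linear_combination hn')
  · exact L2 n _ _ _ _ hA hC hB hD (by linear_combination hn')
  · exact L3 n _ _ _ _ hA hC hD hB (by linear_combination hn')
  · exact L2 n _ _ _ _ hA hB hC hD (by linear_combination hn')
  · exact L3 n _ _ _ _ hA hB hD hC (by linear_combination hn')
  · exact L3 n _ _ _ _ hA hB hC hD (by linear_combination hn')
  · exact L4 n _ _ _ _ hA hB hC hD hn'

theorem sum_of_at_most_six_squares_coprime_three (n : ℕ) (hn : 0 < n) :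
    ∃ k : ℕ, 1 ≤ k ∧ k ≤ 6 ∧
      ∃ x : Fin k → ℤ, (∀ i, ¬ (3 : ℤ) ∣ x i) ∧ (n : ℤ) = ∑ i, (x i) ^ 2 := by
  exact main_aux n hn
end

section
/- Let p be an odd prime and k a positive integer not divisible by p such that p is represented by the binary form x^2 + k·y^2. If n is a positive integer divisible by p that is represented by x^2 + k·y^2, then there exist integers u, v with n = u^2 + k·v^2 and p dividing neither u nor v. -/
lemma nd_ab (p : ℕ) (hp : p.Prime) (k : ℕ)
    (hpk : ¬ (p : ℤ) ∣ (k : ℤ)) (a b : ℤ) (hab : (p : ℤ) = a ^ 2 + k * b ^ 2) :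
    ¬ (p : ℤ) ∣ a ∧ ¬ (p : ℤ) ∣ b := by
  have hpz : Prime (p : ℤ) := Nat.prime_iff_prime_int.mp hp
  have hppos : (0 : ℤ) < p := by exact_mod_cast hp.pos
  have h2 : (2 : ℤ) ≤ p := by exact_mod_cast hp.two_le
  have hboth : ¬ ((p:ℤ) ∣ a ∧ (p:ℤ) ∣ b) := by
    rintro ⟨ha, hb⟩
    have h1 : (p:ℤ)^2 ∣ a^2 := pow_dvd_pow_of_dvd ha 2
    have h2' : (p:ℤ)^2 ∣ (k:ℤ) * b^2 := Dvd.dvd.mul_left (pow_dvd_pow_of_dvd hb 2) _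
    have hd : (p:ℤ)^2 ∣ (p:ℤ) := by
      have hd' : (p:ℤ)^2 ∣ a^2 + (k:ℤ) * b^2 := dvd_add h1 h2'
      rwa [← hab] at hd'
    have := Int.le_of_dvd hppos hd
    nlinarith
  constructor
  · intro ha
    apply hboth
    refine ⟨ha, ?_⟩
    have hd : (p:ℤ) ∣ (k:ℤ) * b^2 := by
      have hh : (k:ℤ) * b^2 = (p:ℤ) - a^2 := by rw [hab]; ring
      rw [hh]
      exact dvd_sub dvd_rfl (dvd_pow ha two_ne_zero)
    rcases hpz.dvd_mul.mp hd with h | h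
    · exact absurd h hpk
    · exact hpz.dvd_of_dvd_pow h
  · intro hb
    apply hboth
    refine ⟨?_, hb⟩
    have hd : (p:ℤ) ∣ a^2 := by
      have hh : a^2 = (p:ℤ) - (k:ℤ)*b^2 := by rw [hab]; ring
      rw [hh]
      exact dvd_sub dvd_rfl (Dvd.dvd.mul_left (dvd_pow hb two_ne_zero) _)
    exact hpz.dvd_of_dvd_pow hd

lemma lift_rep (p : ℕ) (hp : p.Prime) (hodd : p ≠ 2) (k : ℕ)
    (hpk : ¬ (p : ℤ) ∣ (k : ℤ)) (a b : ℤ) (hab : (p : ℤ) = a ^ 2 + k * b ^ 2)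
    (X Y : ℤ) (hXY : ¬ ((p:ℤ) ∣ X ∧ (p:ℤ) ∣ Y)) :
    ∃ u v : ℤ, (p:ℤ)^2 * (X^2 + k*Y^2) = u^2 + k*v^2 ∧ ¬ (p:ℤ) ∣ u ∧ ¬ (p:ℤ) ∣ v := by
  obtain ⟨hpa, hpb⟩ := nd_ab p hp k hpk a b hab
  haveI : Fact p.Prime := ⟨hp⟩
  haveI : NeZero p := ⟨hp.ne_zero⟩
  have hcast : ∀ z : ℤ, ¬ (p:ℤ) ∣ z ↔ ((z : ZMod p) ≠ 0) := fun z => by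
    rw [Ne, ZMod.intCast_zmod_eq_zero_iff_dvd]
  have hA : ((a : ZMod p)) ≠ 0 := (hcast a).mp hpa
  have hB : ((b : ZMod p)) ≠ 0 := (hcast b).mp hpb
  have hK : ((k : ZMod p)) ≠ 0 := by
    intro h
    apply hpk
    exact_mod_cast (ZMod.natCast_eq_zero_iff k p).mp h
  have h2 : (2 : ZMod p) ≠ 0 := by
    intro h
    have : ((2:ℕ) : ZMod p) = 0 := by exact_mod_cast h
    have hd := (ZMod.natCast_eq_zero_iff 2 p).mp this
    exact hodd ((Nat.prime_dvd_prime_iff_eq hp Nat.prime_two).mp hd).symm.symm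
  have hP : (a : ZMod p)^2 + (k : ZMod p) * (b : ZMod p)^2 = 0 := by
    have h := congrArg (Int.cast : ℤ → ZMod p) hab
    push_cast at h
    rw [ZMod.natCast_self] at h
    exact h.symm
  by_cases hd : (p:ℤ) ∣ (a*X - k*b*Y)
  · -- sign s = -1; show p ∤ a*X + k*b*Y
    have hd0 : ((a : ZMod p) * X - k * b * Y) = 0 := by
      have := (not_iff_not.mpr (hcast (a*X - k*b*Y))).mp (not_not.mpr hd)
      push_cast at this
      simpa using not_not.mp this
    have hd2 : ((a : ZMod p) * X + k * b * Y) ≠ 0 := by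
      intro h
      apply hXY
      have hX0 : ((X : ZMod p)) = 0 := by
        have h1 : (2 : ZMod p) * ((a : ZMod p) * X) = 0 := by linear_combination hd0 + h
        have h2' := mul_eq_zero.mp h1
        rcases h2' with h' | h'
        · exact absurd h' h2
        · rcases mul_eq_zero.mp h' with h'' | h''
          · exact absurd h'' hA
          · exact h''
      have hY0 : ((Y : ZMod p)) = 0 := by
        have h1 : (2 : ZMod p) * ((k : ZMod p) * (b : ZMod p) * Y) = 0 := by
          linear_combination h - hd0
        rcases mul_eq_zero.mp h1 with h' | h'
        · exact absurd h' h2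
        · rcases mul_eq_zero.mp h' with h'' | h''
          · rcases mul_eq_zero.mp h'' with h3 | h3
            · exact absurd h3 hK
            · exact absurd h3 hB
          · exact h''
      constructor
      · exact (ZMod.intCast_zmod_eq_zero_iff_dvd X p).mp hX0
      · exact (ZMod.intCast_zmod_eq_zero_iff_dvd Y p).mp hY0
    refine ⟨(a^2 - k*b^2)*X + 2*a*b*k*Y, -(2*a*b)*X + (a^2 - k*b^2)*Y, ?_, ?_, ?_⟩
    · rw [hab]; ring
    · rw [hcast]
      push_cast
      have heq : ((a : ZMod p)^2 - k*b^2)*X + 2*a*b*k*Y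
          = 2*(a : ZMod p)*((a : ZMod p)*X + k*b*Y) := by
        linear_combination (-(X : ZMod p)) * hP
      rw [heq]
      exact mul_ne_zero (mul_ne_zero h2 hA) hd2
    · rw [hcast]
      push_cast
      have heq : -(2*(a:ZMod p)*b)*X + ((a:ZMod p)^2 - k*b^2)*Y
          = 2*(a : ZMod p)*(-(b:ZMod p)*X + a*Y) := by
        linear_combination (-(Y : ZMod p)) * hP
      rw [heq]
      refine mul_ne_zero (mul_ne_zero h2 hA) ?_
      intro h
      have hkey : (a : ZMod p) * (-(b:ZMod p)*X + a*Y) = -(b:ZMod p) * ((a:ZMod p)*X + k*b*Y) := by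
        linear_combination (Y : ZMod p) * hP
      rw [h, mul_zero] at hkey
      rcases mul_eq_zero.mp hkey.symm with h' | h'
      · exact hB (neg_eq_zero.mp h')
      · exact hd2 h'
  · -- sign s = +1
    have hd1 : ((a : ZMod p) * X - k * b * Y) ≠ 0 := by
      have := (hcast (a*X - k*b*Y)).mp hd
      push_cast at this
      simpa using this
    refine ⟨(a^2 - k*b^2)*X - 2*a*b*k*Y, (2*a*b)*X + (a^2 - k*b^2)*Y, ?_, ?_, ?_⟩
    · rw [hab]; ring
    · rw [hcast]
      push_cast
      have heq : ((a : ZMod p)^2 - k*b^2)*X - 2*a*b*k*Y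
          = 2*(a : ZMod p)*((a : ZMod p)*X - k*b*Y) := by
        linear_combination (-(X : ZMod p)) * hP
      rw [heq]
      exact mul_ne_zero (mul_ne_zero h2 hA) hd1
    · rw [hcast]
      push_cast
      have heq : (2*(a:ZMod p)*b)*X + ((a:ZMod p)^2 - k*b^2)*Y
          = 2*(a : ZMod p)*((b:ZMod p)*X + a*Y) := by
        linear_combination (-(Y : ZMod p)) * hP
      rw [heq]
      refine mul_ne_zero (mul_ne_zero h2 hA) ?_
      intro h
      have hkey : (a : ZMod p) * ((b:ZMod p)*X + a*Y) = (b:ZMod p) * ((a:ZMod p)*X - k*b*Y) := by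
        linear_combination (Y : ZMod p) * hP
      rw [h, mul_zero] at hkey
      rcases mul_eq_zero.mp hkey.symm with h' | h'
      · exact hB h'
      · exact hd1 h'

lemma main_aux_s6 (p : ℕ) (hp : p.Prime) (hodd : p ≠ 2) (k : ℕ)
    (hpk : ¬ (p : ℤ) ∣ (k : ℤ)) (a b : ℤ) (hab : (p : ℤ) = a ^ 2 + k * b ^ 2) :
    ∀ n : ℕ, 0 < n → p ∣ n → (∃ x y : ℤ, (n:ℤ) = x^2 + k*y^2) →
      ∃ u v : ℤ, (n : ℤ) = u ^ 2 + k * v ^ 2 ∧ ¬ (p : ℤ) ∣ u ∧ ¬ (p : ℤ) ∣ v := by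
  intro n
  induction n using Nat.strong_induction_on with
  | _ n ih =>
    rintro hn hpn ⟨x, y, hxy⟩
    have hpz : Prime (p : ℤ) := Nat.prime_iff_prime_int.mp hp
    by_cases hpx : (p:ℤ) ∣ x
    · -- then p ∣ y, descend
      have hpy : (p:ℤ) ∣ y := by
        have hdk : (p:ℤ) ∣ (k:ℤ) * y^2 := by
          have hh : (k:ℤ) * y^2 = (n:ℤ) - x^2 := by rw [hxy]; ring
          rw [hh]
          exact dvd_sub (Int.natCast_dvd_natCast.mpr hpn) (dvd_pow hpx two_ne_zero)
        rcases hpz.dvd_mul.mp hdk with h | h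
        · exact absurd h hpk
        · exact hpz.dvd_of_dvd_pow h
      obtain ⟨X, hX⟩ := hpx
      obtain ⟨Y, hY⟩ := hpy
      have hnm : (n : ℤ) = (p:ℤ)^2 * (X^2 + k*Y^2) := by
        rw [hxy, hX, hY]; ring
      have hp2n : p^2 ∣ n := by
        rw [← Int.natCast_dvd_natCast]
        push_cast
        exact ⟨X^2 + k*Y^2, hnm⟩
      obtain ⟨m, hm⟩ := hp2n
      have hppos : 0 < p := hp.pos
      have hmpos : 0 < m := by
        rcases Nat.eq_zero_or_pos m with h | h
        · subst h; simp [hm] at hn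
        · exact h
      have hmlt : m < n := by
        have h1 : 1 < p^2 := by nlinarith [hp.two_le]
        calc m = 1 * m := (one_mul m).symm
          _ < p^2 * m := (Nat.mul_lt_mul_right hmpos).mpr h1
          _ = n := hm.symm
      have hmz : (m : ℤ) = X^2 + k*Y^2 := by
        have hcast : (n : ℤ) = (p:ℤ)^2 * m := by exact_mod_cast congrArg (Nat.cast : ℕ → ℤ) hm
        have hne : ((p:ℤ)^2) ≠ 0 := by positivity
        have := hnm.symm.trans hcast
        exact (mul_left_cancel₀ hne this).symm
      by_cases hpm : p ∣ m
      · obtain ⟨U, V, hUV, hU, hV⟩ := ih m hmlt hmpos hpm ⟨X, Y, hmz⟩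
        obtain ⟨u, v, huv, hu, hv⟩ := lift_rep p hp hodd k hpk a b hab U V (fun ⟨h1, _⟩ => hU h1)
        exact ⟨u, v, by rw [hnm, hmz, hUV] at *; linarith [huv], hu, hv⟩
      · have hXY : ¬ ((p:ℤ) ∣ X ∧ (p:ℤ) ∣ Y) := by
          rintro ⟨h1, h2⟩
          apply hpm
          rw [← Int.natCast_dvd_natCast, hmz]
          exact dvd_add (dvd_pow h1 two_ne_zero) (Dvd.dvd.mul_left (dvd_pow h2 two_ne_zero) _)
        obtain ⟨u, v, huv, hu, hv⟩ := lift_rep p hp hodd k hpk a b hab X Y hXY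
        exact ⟨u, v, by rw [hnm]; exact huv, hu, hv⟩
    · -- p ∤ x : done directly
      have hpy : ¬ (p:ℤ) ∣ y := by
        intro hy
        apply hpx
        have hdx : (p:ℤ) ∣ x^2 := by
          have hh : x^2 = (n:ℤ) - (k:ℤ)*y^2 := by rw [hxy]; ring
          rw [hh]
          exact dvd_sub (Int.natCast_dvd_natCast.mpr hpn) (Dvd.dvd.mul_left (dvd_pow hy two_ne_zero) _)
        exact hpz.dvd_of_dvd_pow hdx
      exact ⟨x, y, hxy, hpx, hpy⟩

theorem binary_rep_coprime (p : ℕ) (hp : p.Prime) (hodd : p ≠ 2) (k : ℕ) (hk : 0 < k)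
    (hpk : ¬ (p : ℤ) ∣ (k : ℤ)) (hprep : ∃ x y : ℤ, (p : ℤ) = x ^ 2 + k * y ^ 2)
    (n : ℕ) (hn : 0 < n) (hpn : p ∣ n)
    (hnrep : ∃ x y : ℤ, (n : ℤ) = x ^ 2 + k * y ^ 2) :
    ∃ u v : ℤ, (n : ℤ) = u ^ 2 + k * v ^ 2 ∧ ¬ (p : ℤ) ∣ u ∧ ¬ (p : ℤ) ∣ v := by
  obtain ⟨a, b, hab⟩ := hprep
  exact main_aux_s6 p hp hodd k hpk a b hab n hn hpn hnrep
end

section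
/- Let p ≡ 1 (mod 4) be a prime and n a positive integer that is a sum of three squares. Then there exists k ≤ 4 such that n = x_1^2 + ... + x_k^2 with no x_i divisible by p. -/
private lemma field_choice {F : Type*} [Field F] (x y m l : F)
    (hx : x ≠ 0) (hy : y ≠ 0) (hxy : x ^ 2 + y ^ 2 = 0) (h2 : (2 : F) ≠ 0)
    (hml : ¬(m = 0 ∧ l = 0)) :
    (x * m - y * l ≠ 0 ∧ x * l + y * m ≠ 0) ∨
      (x * m + y * l ≠ 0 ∧ x * l - y * m ≠ 0) := by
  have hx2 : (2 : F) * x ≠ 0 := mul_ne_zero h2 hx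
  have hx2' : (2 : F) * x ^ 2 ≠ 0 := mul_ne_zero h2 (pow_ne_zero 2 hx)
  by_cases hA : x * m - y * l = 0
  · right
    constructor
    · intro hB
      have hm : m = 0 := by
        have h' : (2 * x) * m = 0 := by linear_combination hA + hB
        exact (mul_eq_zero.mp h').resolve_left hx2
      have hl : l = 0 := by
        have h' : y * l = 0 := by linear_combination x * hm - hA
        exact (mul_eq_zero.mp h').resolve_left hy
      exact hml ⟨hm, hl⟩
    · intro hC
      have hm : m = 0 := by
        have h' : (2 * x ^ 2) * m = 0 := by linear_combination x * hA + y * hC + m * hxy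
        exact (mul_eq_zero.mp h').resolve_left hx2'
      have hl : l = 0 := by
        have h' : y * l = 0 := by linear_combination x * hm - hA
        exact (mul_eq_zero.mp h').resolve_left hy
      exact hml ⟨hm, hl⟩
  · by_cases hB : x * l + y * m = 0
    · right
      constructor
      · intro hC
        have hl : l = 0 := by
          have h' : (2 * x ^ 2) * l = 0 := by linear_combination x * hB - y * hC + l * hxy
          exact (mul_eq_zero.mp h').resolve_left hx2'
        have hm : m = 0 := by
          have h' : y * m = 0 := by linear_combination hB - x * hl
          exact (mul_eq_zero.mp h').resolve_left hy
        exact hml ⟨hm, hl⟩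
      · intro hD
        have hl : l = 0 := by
          have h' : (2 * x) * l = 0 := by linear_combination hB + hD
          exact (mul_eq_zero.mp h').resolve_left hx2
        have hm : m = 0 := by
          have h' : y * m = 0 := by linear_combination hB - x * hl
          exact (mul_eq_zero.mp h').resolve_left hy
        exact hml ⟨hm, hl⟩
    · exact Or.inl ⟨hA, hB⟩


private lemma step_lemma (p : ℕ) (hp : p.Prime) (hp1 : p % 4 = 1) (m l : ℤ)
    (h : ¬((p : ℤ) ∣ m ∧ (p : ℤ) ∣ l)) :
    ∃ X Y : ℤ, (p : ℤ) ^ 2 * (m ^ 2 + l ^ 2) = X ^ 2 + Y ^ 2 ∧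
      ¬(p : ℤ) ∣ X ∧ ¬(p : ℤ) ∣ Y := by
  haveI := Fact.mk hp
  obtain ⟨u, v, huv⟩ := Nat.Prime.sq_add_sq (p := p) (by omega)
  have hp2 : 2 ≤ p := hp.two_le
  have hsumdvd : p ∣ u ^ 2 + v ^ 2 := huv ▸ dvd_refl p
  have hpu : ¬ p ∣ u := by
    intro hdvd
    have hu2 : p ∣ u ^ 2 := dvd_pow hdvd two_ne_zero
    have h1 : p ∣ v ^ 2 := (Nat.dvd_add_right hu2).mp hsumdvd
    have h2 : p ∣ v := hp.dvd_of_dvd_pow h1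
    have h3 : p ^ 2 ∣ p := by
      have := dvd_add (pow_dvd_pow_of_dvd hdvd 2) (pow_dvd_pow_of_dvd h2 2)
      rwa [huv] at this
    have := Nat.le_of_dvd hp.pos h3
    nlinarith
  have hpv : ¬ p ∣ v := by
    intro hdvd
    have hv2 : p ∣ v ^ 2 := dvd_pow hdvd two_ne_zero
    have h1 : p ∣ u ^ 2 := (Nat.dvd_add_left hv2).mp hsumdvd
    have h2 : p ∣ u := hp.dvd_of_dvd_pow h1
    have h3 : p ^ 2 ∣ p := by
      have := dvd_add (pow_dvd_pow_of_dvd h2 2) (pow_dvd_pow_of_dvd hdvd 2)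
      rwa [huv] at this
    have := Nat.le_of_dvd hp.pos h3
    nlinarith
  have hu0 : (u : ZMod p) ≠ 0 := by rwa [Ne, ZMod.natCast_eq_zero_iff]
  have hv0 : (v : ZMod p) ≠ 0 := by rwa [Ne, ZMod.natCast_eq_zero_iff]
  have h20 : (2 : ZMod p) ≠ 0 := by
    intro h0
    have h0' : ((2 : ℕ) : ZMod p) = 0 := by push_cast; exact h0
    have := Nat.le_of_dvd (by norm_num) ((ZMod.natCast_eq_zero_iff 2 p).mp h0')
    omega
  have hsq : (u : ZMod p) ^ 2 + (v : ZMod p) ^ 2 = 0 := by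
    have h' : ((u ^ 2 + v ^ 2 : ℕ) : ZMod p) = ((p : ℕ) : ZMod p) := by rw [huv]
    push_cast at h'
    simpa [ZMod.natCast_self] using h'
  have hxFne : (u : ZMod p) ^ 2 - (v : ZMod p) ^ 2 ≠ 0 := by
    intro h0
    have h' : (2 : ZMod p) * (u : ZMod p) ^ 2 = 0 := by linear_combination h0 + hsq
    rcases mul_eq_zero.mp h' with h'' | h''
    · exact h20 h''
    · exact hu0 (pow_eq_zero_iff two_ne_zero |>.mp h'')
  have hyFne : 2 * (u : ZMod p) * (v : ZMod p) ≠ 0 := mul_ne_zero (mul_ne_zero h20 hu0) hv0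
  have hxyF : ((u : ZMod p) ^ 2 - (v : ZMod p) ^ 2) ^ 2 + (2 * (u : ZMod p) * (v : ZMod p)) ^ 2 = 0 := by
    linear_combination ((u : ZMod p) ^ 2 + (v : ZMod p) ^ 2) * hsq
  have hml : ¬((m : ZMod p) = 0 ∧ (l : ZMod p) = 0) := by
    rintro ⟨h1, h2⟩
    exact h ⟨(ZMod.intCast_zmod_eq_zero_iff_dvd m p).mp h1,
      (ZMod.intCast_zmod_eq_zero_iff_dvd l p).mp h2⟩
  have hP : (p : ℤ) = (u : ℤ) ^ 2 + (v : ℤ) ^ 2 := by exact_mod_cast huv.symm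
  rcases field_choice ((u : ZMod p) ^ 2 - (v : ZMod p) ^ 2) (2 * (u : ZMod p) * (v : ZMod p))
      (m : ZMod p) (l : ZMod p) hxFne hyFne hxyF h20 hml with ⟨h1, h2⟩ | ⟨h1, h2⟩
  · refine ⟨((u:ℤ)^2 - (v:ℤ)^2) * m - (2*(u:ℤ)*(v:ℤ)) * l,
      ((u:ℤ)^2 - (v:ℤ)^2) * l + (2*(u:ℤ)*(v:ℤ)) * m,
      by linear_combination ((m^2+l^2) * ((p:ℤ) + (u:ℤ)^2 + (v:ℤ)^2)) * hP, ?_, ?_⟩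
    · rw [← ZMod.intCast_zmod_eq_zero_iff_dvd]
      intro hz
      push_cast at hz
      exact h1 (by linear_combination hz)
    · rw [← ZMod.intCast_zmod_eq_zero_iff_dvd]
      intro hz
      push_cast at hz
      exact h2 (by linear_combination hz)
  · refine ⟨((u:ℤ)^2 - (v:ℤ)^2) * m + (2*(u:ℤ)*(v:ℤ)) * l,
      ((u:ℤ)^2 - (v:ℤ)^2) * l - (2*(u:ℤ)*(v:ℤ)) * m,
      by linear_combination ((m^2+l^2) * ((p:ℤ) + (u:ℤ)^2 + (v:ℤ)^2)) * hP, ?_, ?_⟩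
    · rw [← ZMod.intCast_zmod_eq_zero_iff_dvd]
      intro hz
      push_cast at hz
      exact h1 (by linear_combination hz)
    · rw [← ZMod.intCast_zmod_eq_zero_iff_dvd]
      intro hz
      push_cast at hz
      exact h2 (by linear_combination hz)

private lemma pair_bad (p : ℕ) (hp : p.Prime) (hp1 : p % 4 = 1) :
    ∀ N : ℕ, ∀ a b : ℤ, a.natAbs + b.natAbs ≤ N → (p : ℤ) ∣ a → (p : ℤ) ∣ b →
      ¬(a = 0 ∧ b = 0) →
      ∃ X Y : ℤ, a ^ 2 + b ^ 2 = X ^ 2 + Y ^ 2 ∧ ¬(p : ℤ) ∣ X ∧ ¬(p : ℤ) ∣ Y := by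
  intro N
  induction N with
  | zero =>
    intro a b hab _ _ hne
    exact absurd ⟨by omega, by omega⟩ hne
  | succ N ih =>
    intro a b hab ha hb hne
    obtain ⟨m, rfl⟩ := ha
    obtain ⟨l, rfl⟩ := hb
    have hp2 : 2 ≤ p := hp.two_le
    have hne' : ¬(m = 0 ∧ l = 0) := by
      rintro ⟨rfl, rfl⟩
      exact hne ⟨mul_zero _, mul_zero _⟩
    have heq : ((p : ℤ) * m) ^ 2 + ((p : ℤ) * l) ^ 2 = (p : ℤ) ^ 2 * (m ^ 2 + l ^ 2) := by ring
    by_cases hdvd : (p : ℤ) ∣ m ∧ (p : ℤ) ∣ l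
    · have h1 : ((p : ℤ) * m).natAbs = p * m.natAbs := by
        rw [Int.natAbs_mul, Int.natAbs_natCast]
      have h2 : ((p : ℤ) * l).natAbs = p * l.natAbs := by
        rw [Int.natAbs_mul, Int.natAbs_natCast]
      have h3 : 2 * m.natAbs ≤ p * m.natAbs := Nat.mul_le_mul_right _ hp2
      have h4 : 2 * l.natAbs ≤ p * l.natAbs := Nat.mul_le_mul_right _ hp2
      have h5 : m ≠ 0 ∨ l ≠ 0 := by
        by_contra hc
        push_neg at hc
        exact hne' ⟨hc.1, hc.2⟩
      have hlt : m.natAbs + l.natAbs ≤ N := by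
        rw [h1, h2] at hab
        rcases h5 with h5 | h5 <;> omega
      obtain ⟨X, Y, hXY, hX, hY⟩ := ih m l hlt hdvd.1 hdvd.2 hne'
      obtain ⟨X', Y', h', hX', hY'⟩ := step_lemma p hp hp1 X Y (fun hc => hX hc.1)
      exact ⟨X', Y', by rw [heq, hXY]; exact h', hX', hY'⟩
    · obtain ⟨X, Y, h', hX, hY⟩ := step_lemma p hp hp1 m l hdvd
      exact ⟨X, Y, by rw [heq]; exact h', hX, hY⟩

private lemma pairP (p : ℕ) (hp : p.Prime) (hp1 : p % 4 = 1) (a b : ℤ)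
    (ha : (p : ℤ) ∣ a) (hb : (p : ℤ) ∣ b) :
    ∃ L : List ℤ, (∀ x ∈ L, ¬(p : ℤ) ∣ x) ∧ (L.map (· ^ 2)).sum = a ^ 2 + b ^ 2 ∧
      L.length ≤ 2 ∧ (L = [] → a = 0 ∧ b = 0) := by
  by_cases h0 : a = 0 ∧ b = 0
  · exact ⟨[], by simp, by simp [h0.1, h0.2], by simp, fun _ => h0⟩
  · obtain ⟨X, Y, hXY, hX, hY⟩ :=
      pair_bad p hp hp1 (a.natAbs + b.natAbs) a b le_rfl ha hb h0
    refine ⟨[X, Y], ?_, by simpa using hXY.symm, by simp, by simp⟩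
    intro x hx
    simp only [List.mem_cons, List.mem_singleton, List.not_mem_nil, or_false] at hx
    rcases hx with rfl | rfl
    · exact hX
    · exact hY

private lemma sumsq_fin (L : List ℤ) :
    ∑ i : Fin L.length, (L.get i) ^ 2 = (L.map (· ^ 2)).sum := by
  induction L with
  | nil => simp
  | cons h t ih => simpa [Fin.sum_univ_succ] using ih

theorem three_square_to_coprime_rep (p : ℕ) (hp : p.Prime) (hp1 : p % 4 = 1)
    (n : ℕ) (hn : 0 < n) (h3 : ∃ a b c : ℤ, (n : ℤ) = a ^ 2 + b ^ 2 + c ^ 2) :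
    ∃ k : ℕ, 1 ≤ k ∧ k ≤ 4 ∧
      ∃ x : Fin k → ℤ, (∀ i, ¬ (p : ℤ) ∣ x i) ∧ (n : ℤ) = ∑ i, (x i) ^ 2 := by
  obtain ⟨a, b, c, habc⟩ := h3
  have FIN : ∀ L : List ℤ, (∀ x ∈ L, ¬(p : ℤ) ∣ x) → (n : ℤ) = (L.map (· ^ 2)).sum →
      1 ≤ L.length → L.length ≤ 4 →
      ∃ k : ℕ, 1 ≤ k ∧ k ≤ 4 ∧
        ∃ x : Fin k → ℤ, (∀ i, ¬ (p : ℤ) ∣ x i) ∧ (n : ℤ) = ∑ i, (x i) ^ 2 := by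
    intro L hcop hsum h1 h4
    refine ⟨L.length, h1, h4, fun i => L.get i, fun i => hcop _ (L.get_mem _), ?_⟩
    rw [hsum]
    exact (sumsq_fin L).symm
  have hn0 : (n : ℤ) ≠ 0 := by exact_mod_cast hn.ne'
  by_cases da : (p : ℤ) ∣ a <;> by_cases db : (p : ℤ) ∣ b <;> by_cases dc : (p : ℤ) ∣ c
  · -- all divisible
    obtain ⟨L1, hc1, hs1, hl1, he1⟩ := pairP p hp hp1 a b da db
    obtain ⟨L2, hc2, hs2, hl2, he2⟩ := pairP p hp hp1 c 0 dc (dvd_zero _)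
    refine FIN (L1 ++ L2) ?_ ?_ ?_ ?_
    · intro x hx
      rcases List.mem_append.mp hx with h | h
      · exact hc1 x h
      · exact hc2 x h
    · rw [List.map_append, List.sum_append, hs1, hs2, habc]; try ring
    · by_contra hcon
      push_neg at hcon
      have h0 : L1 = [] ∧ L2 = [] := by
        rw [List.length_append] at hcon
        constructor <;> [skip; skip] <;>
          (first | exact List.length_eq_zero_iff.mp (by omega))
      have hab := he1 h0.1
      have hc0 := he2 h0.2
      apply hn0
      rw [habc, hab.1, hab.2, hc0.1]; ring
    · rw [List.length_append]; omega
  · obtain ⟨L1, hc1, hs1, hl1, he1⟩ := pairP p hp hp1 a b da db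
    refine FIN (L1 ++ [c]) ?_ ?_ ?_ ?_
    · intro x hx
      rcases List.mem_append.mp hx with h | h
      · exact hc1 x h
      · simp only [List.mem_singleton] at h; subst h; exact dc
    · rw [List.map_append, List.sum_append, hs1, habc]; simp; try ring
    · rw [List.length_append]; simp; try omega
    · rw [List.length_append]; simp; try omega
  · obtain ⟨L1, hc1, hs1, hl1, he1⟩ := pairP p hp hp1 a c da dc
    refine FIN (L1 ++ [b]) ?_ ?_ ?_ ?_
    · intro x hx
      rcases List.mem_append.mp hx with h | h
      · exact hc1 x h
      · simp only [List.mem_singleton] at h; subst h; exact db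
    · rw [List.map_append, List.sum_append, hs1, habc]; simp; try ring
    · rw [List.length_append]; simp; try omega
    · rw [List.length_append]; simp; try omega
  · obtain ⟨L1, hc1, hs1, hl1, he1⟩ := pairP p hp hp1 a 0 da (dvd_zero _)
    refine FIN (L1 ++ [b, c]) ?_ ?_ ?_ ?_
    · intro x hx
      rcases List.mem_append.mp hx with h | h
      · exact hc1 x h
      · simp only [List.mem_cons, List.mem_singleton, List.not_mem_nil, or_false] at h
        rcases h with rfl | rfl
        · exact db
        · exact dc
    · rw [List.map_append, List.sum_append, hs1, habc]; simp; try ring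
    · rw [List.length_append]; simp; try omega
    · rw [List.length_append]; simp; try omega
  · obtain ⟨L1, hc1, hs1, hl1, he1⟩ := pairP p hp hp1 b c db dc
    refine FIN (L1 ++ [a]) ?_ ?_ ?_ ?_
    · intro x hx
      rcases List.mem_append.mp hx with h | h
      · exact hc1 x h
      · simp only [List.mem_singleton] at h; subst h; exact da
    · rw [List.map_append, List.sum_append, hs1, habc]; simp; try ring
    · rw [List.length_append]; simp; try omega
    · rw [List.length_append]; simp; try omega
  · obtain ⟨L1, hc1, hs1, hl1, he1⟩ := pairP p hp hp1 b 0 db (dvd_zero _)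
    refine FIN (L1 ++ [a, c]) ?_ ?_ ?_ ?_
    · intro x hx
      rcases List.mem_append.mp hx with h | h
      · exact hc1 x h
      · simp only [List.mem_cons, List.mem_singleton, List.not_mem_nil, or_false] at h
        rcases h with rfl | rfl
        · exact da
        · exact dc
    · rw [List.map_append, List.sum_append, hs1, habc]; simp; try ring
    · rw [List.length_append]; simp; try omega
    · rw [List.length_append]; simp; try omega
  · obtain ⟨L1, hc1, hs1, hl1, he1⟩ := pairP p hp hp1 c 0 dc (dvd_zero _)
    refine FIN (L1 ++ [a, b]) ?_ ?_ ?_ ?_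
    · intro x hx
      rcases List.mem_append.mp hx with h | h
      · exact hc1 x h
      · simp only [List.mem_cons, List.mem_singleton, List.not_mem_nil, or_false] at h
        rcases h with rfl | rfl
        · exact da
        · exact db
    · rw [List.map_append, List.sum_append, hs1, habc]; simp; try ring
    · rw [List.length_append]; simp; try omega
    · rw [List.length_append]; simp; try omega
  · refine FIN [a, b, c] ?_ ?_ ?_ ?_
    · intro x hx
      simp only [List.mem_cons, List.mem_singleton, List.not_mem_nil, or_false] at hx
      rcases hx with rfl | rfl | rfl
      · exact da
      · exact db
      · exact dc
    · simp only [List.map_cons, List.map_nil, List.sum_cons, List.sum_nil, add_zero]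
      rw [habc]; ring
    · simp
    · simp
end

section
/- Let p ≡ 1 (mod 4) be a prime and n a positive integer divisible by p. Then there exists k ≤ 4 such that n is a sum of k squares of integers none of which is divisible by p. -/
private lemma aux_step (p a b : ℤ) (hp : Prime p) (hpab : a ^ 2 + b ^ 2 = p)
    (ha : ¬ p ∣ a) (h2 : ¬ p ∣ 2) :
    ∀ e : ℕ, ∀ A B : ℤ, ¬ p ∣ (b * A + a * B) →
      ∃ A' B', A' ^ 2 + B' ^ 2 = p ^ e * (A ^ 2 + B ^ 2) ∧ ¬ p ∣ (b * A' + a * B') := by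
  intro e
  induction e with
  | zero => intro A B h; exact ⟨A, B, by ring, h⟩
  | succ e ih =>
    intro A B h
    obtain ⟨A', B', hsum, hinv⟩ := ih A B h
    refine ⟨a * A' - b * B', a * B' + b * A', ?_, ?_⟩
    · calc (a*A'-b*B')^2 + (a*B'+b*A')^2 = (a^2+b^2) * (A'^2+B'^2) := by ring
      _ = p ^ (e+1) * (A^2+B^2) := by rw [hpab, hsum]; ring
    · intro hdvd
      have key : b * (a*A'-b*B') + a * (a*B'+b*A') = 2*a*(b*A'+a*B') - p * B' := by
        rw [← hpab]; ring
      rw [key] at hdvd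
      have h3 : p ∣ 2*a*(b*A'+a*B') := by
        have := dvd_add hdvd (dvd_mul_right p B')
        simpa using this
      rcases hp.dvd_mul.mp h3 with h4 | h4
      · rcases hp.dvd_mul.mp h4 with h5 | h5
        · exact h2 h5
        · exact ha h5
      · exact hinv h4

private lemma aux_two (p a b : ℤ) (hp : Prime p) (hpab : a ^ 2 + b ^ 2 = p)
    (ha : ¬ p ∣ a) (hb : ¬ p ∣ b) (h2 : ¬ p ∣ 2)
    (e : ℕ) (he : 1 ≤ e) (c d : ℤ) (hcd : ¬ (p ∣ c ∧ p ∣ d)) :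
    ∃ A B : ℤ, ¬ p ∣ A ∧ ¬ p ∣ B ∧ A ^ 2 + B ^ 2 = p ^ e * (c ^ 2 + d ^ 2) := by
  have hsign : ∃ d0 : ℤ, d0 ^ 2 = d ^ 2 ∧ ¬ p ∣ (b * c + a * d0) := by
    by_cases h1 : p ∣ (b * c + a * d)
    · refine ⟨-d, by ring, ?_⟩
      intro h1'
      have hs : p ∣ 2 * (b * c) := by
        have h := dvd_add h1 h1'
        have heq : (b*c+a*d) + (b*c+a*(-d)) = 2*(b*c) := by ring
        rwa [heq] at h
      have hsd : p ∣ 2 * (a * d) := by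
        have h := dvd_sub h1 h1'
        have heq : (b*c+a*d) - (b*c+a*(-d)) = 2*(a*d) := by ring
        rwa [heq] at h
      have hc : p ∣ c := by
        rcases hp.dvd_mul.mp hs with h' | h'
        · exact absurd h' h2
        · rcases hp.dvd_mul.mp h' with h'' | h''
          · exact absurd h'' hb
          · exact h''
      have hd : p ∣ d := by
        rcases hp.dvd_mul.mp hsd with h' | h'
        · exact absurd h' h2
        · rcases hp.dvd_mul.mp h' with h'' | h''
          · exact absurd h'' ha
          · exact h''
      exact hcd ⟨hc, hd⟩
    · exact ⟨d, rfl, h1⟩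
  obtain ⟨d0, hd0, hinv0⟩ := hsign
  obtain ⟨A, B, hsum, hinv⟩ := aux_step p a b hp hpab ha h2 e c d0 hinv0
  rw [hd0] at hsum
  have hpdvd : p ∣ A ^ 2 + B ^ 2 := by
    rw [hsum]
    exact Dvd.dvd.mul_right (dvd_pow_self p (by omega)) _
  have hA : ¬ p ∣ A := by
    intro hA
    have hB2 : p ∣ B ^ 2 := by
      have := dvd_sub hpdvd (dvd_pow hA two_ne_zero)
      simpa using this
    have hB := hp.dvd_of_dvd_pow hB2
    exact hinv (dvd_add (hA.mul_left b) (hB.mul_left a))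
  have hB : ¬ p ∣ B := by
    intro hB
    have hA2 : p ∣ A ^ 2 := by
      have := dvd_sub hpdvd (dvd_pow hB two_ne_zero)
      have heq : A^2 + B^2 - B^2 = A^2 := by ring
      rwa [heq] at this
    have hA' := hp.dvd_of_dvd_pow hA2
    exact hinv (dvd_add (hA'.mul_left b) (hB.mul_left a))
  exact ⟨A, B, hA, hB, hsum⟩

private lemma aux_pair (p a b : ℤ) (hp : Prime p) (hp2 : 2 ≤ p) (hpab : a ^ 2 + b ^ 2 = p)
    (ha : ¬ p ∣ a) (hb : ¬ p ∣ b) (h2 : ¬ p ∣ 2) :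
    ∀ N : ℕ, ∀ c d : ℤ, c.natAbs + d.natAbs ≤ N → (c ≠ 0 ∨ d ≠ 0) →
    ∀ e : ℕ, 1 ≤ e →
    ∃ A B : ℤ, ¬ p ∣ A ∧ ¬ p ∣ B ∧ A ^ 2 + B ^ 2 = p ^ e * (c ^ 2 + d ^ 2) := by
  intro N
  induction N with
  | zero =>
    intro c d hN hcd e he
    exfalso
    rcases hcd with h | h
    · exact h (Int.natAbs_eq_zero.mp (by omega))
    · exact h (Int.natAbs_eq_zero.mp (by omega))
  | succ N ih =>
    intro c d hN hcd e he
    by_cases hdvd : p ∣ c ∧ p ∣ d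
    · obtain ⟨⟨c', rfl⟩, ⟨d', rfl⟩⟩ := hdvd
      have hpn : 0 < p.natAbs := by omega
      have hp2' : 2 ≤ p.natAbs := by omega
      have hcd' : c' ≠ 0 ∨ d' ≠ 0 := by
        rcases hcd with h | h
        · exact Or.inl (fun hc => h (by rw [hc, mul_zero]))
        · exact Or.inr (fun hd => h (by rw [hd, mul_zero]))
      have hlt : c'.natAbs + d'.natAbs ≤ N := by
        have h1 : (p*c').natAbs = p.natAbs * c'.natAbs := Int.natAbs_mul p c'
        have h2' : (p*d').natAbs = p.natAbs * d'.natAbs := Int.natAbs_mul p d'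
        rcases hcd' with h | h
        · have : 0 < c'.natAbs := Int.natAbs_pos.mpr h
          nlinarith [Nat.le_refl d'.natAbs, Nat.mul_le_mul_right d'.natAbs hp2']
        · have : 0 < d'.natAbs := Int.natAbs_pos.mpr h
          nlinarith [Nat.mul_le_mul_right c'.natAbs hp2']
      obtain ⟨A, B, hA, hB, hsum⟩ := ih c' d' hlt hcd' (e + 2) (by omega)
      refine ⟨A, B, hA, hB, ?_⟩
      rw [hsum, pow_add]
      ring
    · exact aux_two p a b hp hpab ha hb h2 e he c d hdvd

theorem divisible_case_one_mod_four (p : ℕ) (hp : p.Prime) (hp1 : p % 4 = 1)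
    (n : ℕ) (hn : 0 < n) (hpn : p ∣ n) :
    ∃ k : ℕ, 1 ≤ k ∧ k ≤ 4 ∧
      ∃ x : Fin k → ℤ, (∀ i, ¬ (p : ℤ) ∣ x i) ∧ (n : ℤ) = ∑ i, (x i) ^ 2 := by
  haveI : Fact p.Prime := ⟨hp⟩
  obtain ⟨a, b, hab⟩ := Nat.Prime.sq_add_sq (p := p) (by omega)
  have hp2 : 2 ≤ p := hp.two_le
  have hpi : Prime (p : ℤ) := Nat.prime_iff_prime_int.mp hp
  -- a, b nonzero and < p
  have hane : a ≠ 0 := by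
    rintro rfl
    have hb' : b ∣ p := ⟨b, by rw [← hab]; ring⟩
    rcases Nat.Prime.eq_one_or_self_of_dvd hp b hb' with h | h <;> subst h <;> nlinarith [hp2]
  have hbne : b ≠ 0 := by
    rintro rfl
    have ha' : a ∣ p := ⟨a, by rw [← hab]; ring⟩
    rcases Nat.Prime.eq_one_or_self_of_dvd hp a ha' with h | h <;> subst h <;> nlinarith [hp2]
  have halt : a < p := by nlinarith [Nat.one_le_iff_ne_zero.mpr hane, Nat.one_le_iff_ne_zero.mpr hbne]
  have hblt : b < p := by nlinarith [Nat.one_le_iff_ne_zero.mpr hane, Nat.one_le_iff_ne_zero.mpr hbne]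
  have ha : ¬ (p:ℤ) ∣ (a:ℤ) := by
    rw [Int.natCast_dvd_natCast]
    intro h
    have := Nat.le_of_dvd (by omega) h
    omega
  have hb : ¬ (p:ℤ) ∣ (b:ℤ) := by
    rw [Int.natCast_dvd_natCast]
    intro h
    have := Nat.le_of_dvd (by omega) h
    omega
  have h2 : ¬ (p:ℤ) ∣ 2 := by
    rw [show (2:ℤ) = ((2:ℕ):ℤ) by norm_num, Int.natCast_dvd_natCast]
    intro h
    have := Nat.le_of_dvd (by omega) h
    omega
  have habZ : (a:ℤ) ^ 2 + (b:ℤ) ^ 2 = (p:ℤ) := by exact_mod_cast hab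
  -- decompose n = p^e * m
  set e := n.factorization p with he_def
  set m := n / p ^ e with hm_def
  have hnm : p ^ e * m = n := Nat.ordProj_mul_ordCompl_eq_self n p
  have hpm : ¬ p ∣ m := Nat.not_dvd_ordCompl hp hn.ne'
  have he : 1 ≤ e := hp.factorization_pos_of_dvd hn.ne' hpn
  have hm : 0 < m := Nat.ordCompl_pos p hn.ne'
  obtain ⟨w, x, y, z, hsum4⟩ := Nat.sum_four_squares m
  have key := aux_pair (p:ℤ) (a:ℤ) (b:ℤ) hpi (by exact_mod_cast hp2) habZ ha hb h2
  have hnZ : (n:ℤ) = (p:ℤ)^e * ((w:ℤ)^2 + (x:ℤ)^2) + (p:ℤ)^e * ((y:ℤ)^2 + (z:ℤ)^2) := by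
    rw [← hnm]
    push_cast [← hsum4]
    ring
  by_cases hwx : w = 0 ∧ x = 0
  · -- first pair is zero, second must be nonzero
    have hyz : (y:ℤ) ≠ 0 ∨ (z:ℤ) ≠ 0 := by
      by_contra hcon
      push_neg at hcon
      have hy0 : y = 0 := by exact_mod_cast hcon.1
      have hz0 : z = 0 := by exact_mod_cast hcon.2
      rw [hwx.1, hwx.2, hy0, hz0] at hsum4
      omega
    obtain ⟨A, B, hA, hB, hsum⟩ := key ((y:ℤ).natAbs + (z:ℤ).natAbs) (y:ℤ) (z:ℤ)
      le_rfl hyz e he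
    refine ⟨2, by norm_num, by norm_num, ![A, B], ?_, ?_⟩
    · intro i; fin_cases i <;> simpa
    · rw [Fin.sum_univ_two]
      simp only [Matrix.cons_val_zero, Matrix.cons_val_one, Matrix.head_cons]
      rw [hnZ, hwx.1, hwx.2, ← hsum]
      push_cast
      ring
  · by_cases hyz : y = 0 ∧ z = 0
    · have hwx' : (w:ℤ) ≠ 0 ∨ (x:ℤ) ≠ 0 := by
        rcases Decidable.not_and_iff_or_not.mp hwx with h | h
        · exact Or.inl (by exact_mod_cast h)
        · exact Or.inr (by exact_mod_cast h)
      obtain ⟨A, B, hA, hB, hsum⟩ := key ((w:ℤ).natAbs + (x:ℤ).natAbs) (w:ℤ) (x:ℤ)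
        le_rfl hwx' e he
      refine ⟨2, by norm_num, by norm_num, ![A, B], ?_, ?_⟩
      · intro i; fin_cases i <;> simpa
      · rw [Fin.sum_univ_two]
        simp only [Matrix.cons_val_zero, Matrix.cons_val_one, Matrix.head_cons]
        rw [hnZ, hyz.1, hyz.2, ← hsum]
        push_cast
        ring
    · have hwx' : (w:ℤ) ≠ 0 ∨ (x:ℤ) ≠ 0 := by
        rcases Decidable.not_and_iff_or_not.mp hwx with h | h
        · exact Or.inl (by exact_mod_cast h)
        · exact Or.inr (by exact_mod_cast h)
      have hyz' : (y:ℤ) ≠ 0 ∨ (z:ℤ) ≠ 0 := by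
        rcases Decidable.not_and_iff_or_not.mp hyz with h | h
        · exact Or.inl (by exact_mod_cast h)
        · exact Or.inr (by exact_mod_cast h)
      obtain ⟨A, B, hA, hB, hsum⟩ := key ((w:ℤ).natAbs + (x:ℤ).natAbs) (w:ℤ) (x:ℤ)
        le_rfl hwx' e he
      obtain ⟨C, D, hC, hD, hsum'⟩ := key ((y:ℤ).natAbs + (z:ℤ).natAbs) (y:ℤ) (z:ℤ)
        le_rfl hyz' e he
      refine ⟨4, by norm_num, by norm_num, ![A, B, C, D], ?_, ?_⟩
      · intro i; fin_cases i <;> simpa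
      · rw [Fin.sum_univ_four]
        simp only [Matrix.cons_val_zero, Matrix.cons_val_one, Matrix.head_cons,
          Matrix.cons_val_two, Matrix.cons_val_three, Matrix.tail_cons]
        rw [hnZ, ← hsum, ← hsum']
        ring
end

section
/- Every positive integer congruent to 7 modulo 8 is represented by the ternary quadratic form x^2 + y^2 + 5z^2. -/
namespace Rep115

/-- The ternary quadratic form with coefficient tuple `(a,b,c,f,g,h)`. -/
def Q (a b c f g h x y z : ℤ) : ℤ :=
  a*x^2 + b*y^2 + c*z^2 + 2*f*y*z + 2*g*x*z + 2*h*x*y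

/-- Determinant (of the Gram matrix). -/
def dt (a b c f g h : ℤ) : ℤ := a*b*c + 2*f*g*h - a*f^2 - b*g^2 - c*h^2

/-- Positive definiteness. -/
def PD (a b c f g h : ℤ) : Prop :=
  ∀ x y z : ℤ, ¬(x = 0 ∧ y = 0 ∧ z = 0) → 0 < Q a b c f g h x y z

/-- Represents `m`. -/
def RP (a b c f g h m : ℤ) : Prop := ∃ x y z : ℤ, Q a b c f g h x y z = m

def QZ (a b c f g h x y z : ZMod 5) : ZMod 5 :=
  a*x^2 + b*y^2 + c*z^2 + 2*f*y*z + 2*g*x*z + 2*h*x*y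

/-- Number of zeros of the form mod 5. -/
def z5 (a b c f g h : ℤ) : ℕ :=
  (Finset.univ.filter (fun v : ZMod 5 × ZMod 5 × ZMod 5 =>
    QZ (a : ZMod 5) (b : ZMod 5) (c : ZMod 5) (f : ZMod 5) (g : ZMod 5) (h : ZMod 5)
      v.1 v.2.1 v.2.2 = 0)).card

lemma Q_cast (a b c f g h x y z : ℤ) :
    ((Q a b c f g h x y z : ℤ) : ZMod 5) =
      QZ (a : ZMod 5) b c f g h (x : ZMod 5) y z := by
  simp only [Q, QZ]; push_cast; ring

lemma cast3 (p q r x y z : ℤ) : ((p*x+q*y+r*z : ℤ) : ZMod 5) =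
    (p : ZMod 5)*(x : ZMod 5)+(q : ZMod 5)*(y : ZMod 5)+(r : ZMod 5)*(z : ZMod 5) := by
  push_cast; ring

/-- Master transfer lemma for an invertible change of variables. -/
theorem master (a b c f g h a' b' c' f' g' h' : ℤ)
    (m11 m12 m13 m21 m22 m23 m31 m32 m33 w11 w12 w13 w21 w22 w23 w31 w32 w33 : ℤ)
    (hQ : ∀ x y z : ℤ, Q a' b' c' f' g' h' x y z =
      Q a b c f g h (m11*x+m12*y+m13*z) (m21*x+m22*y+m23*z) (m31*x+m32*y+m33*z))
    (hWM : ∀ x y z : ℤ,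
      w11*(m11*x+m12*y+m13*z) + w12*(m21*x+m22*y+m23*z) + w13*(m31*x+m32*y+m33*z) = x ∧
      w21*(m11*x+m12*y+m13*z) + w22*(m21*x+m22*y+m23*z) + w23*(m31*x+m32*y+m33*z) = y ∧
      w31*(m11*x+m12*y+m13*z) + w32*(m21*x+m22*y+m23*z) + w33*(m31*x+m32*y+m33*z) = z)
    (hMW : ∀ x y z : ℤ,
      m11*(w11*x+w12*y+w13*z) + m12*(w21*x+w22*y+w23*z) + m13*(w31*x+w32*y+w33*z) = x ∧
      m21*(w11*x+w12*y+w13*z) + m22*(w21*x+w22*y+w23*z) + m23*(w31*x+w32*y+w33*z) = y ∧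
      m31*(w11*x+w12*y+w13*z) + m32*(w21*x+w22*y+w23*z) + m33*(w31*x+w32*y+w33*z) = z) :
    (PD a b c f g h → PD a' b' c' f' g' h') ∧
    (∀ m, RP a b c f g h m → RP a' b' c' f' g' h' m) ∧
    z5 a b c f g h = z5 a' b' c' f' g' h' := by
  have hz : ∀ x y z : ℤ,
      QZ (a' : ZMod 5) b' c' f' g' h' (x : ZMod 5) (y : ZMod 5) (z : ZMod 5) =
      QZ (a : ZMod 5) b c f g h
        ((m11 : ZMod 5)*(x : ZMod 5)+(m12 : ZMod 5)*(y : ZMod 5)+(m13 : ZMod 5)*(z : ZMod 5))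
        ((m21 : ZMod 5)*(x : ZMod 5)+(m22 : ZMod 5)*(y : ZMod 5)+(m23 : ZMod 5)*(z : ZMod 5))
        ((m31 : ZMod 5)*(x : ZMod 5)+(m32 : ZMod 5)*(y : ZMod 5)+(m33 : ZMod 5)*(z : ZMod 5)) := by
    intro x y z
    rw [← cast3 m11 m12 m13, ← cast3 m21 m22 m23, ← cast3 m31 m32 m33, ← Q_cast, ← Q_cast, hQ]
  refine ⟨?_, ?_, ?_⟩
  · intro hpd x y z hxyz
    rw [hQ]
    apply hpd
    rintro ⟨h1, h2, h3⟩
    obtain ⟨e1, e2, e3⟩ := hWM x y z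
    rw [h1, h2, h3] at e1 e2 e3
    simp only [mul_zero, add_zero, zero_add] at e1 e2 e3
    exact hxyz ⟨by omega, by omega, by omega⟩
  · rintro m ⟨x, y, z, hxyz⟩
    refine ⟨w11*x+w12*y+w13*z, w21*x+w22*y+w23*z, w31*x+w32*y+w33*z, ?_⟩
    rw [hQ]
    obtain ⟨e1, e2, e3⟩ := hMW x y z
    rw [e1, e2, e3, hxyz]
  · unfold z5
    apply Finset.card_bij'
      (i := fun v _ => ((w11 : ZMod 5)*v.1+(w12 : ZMod 5)*v.2.1+(w13 : ZMod 5)*v.2.2,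
        ((w21 : ZMod 5)*v.1+(w22 : ZMod 5)*v.2.1+(w23 : ZMod 5)*v.2.2,
         (w31 : ZMod 5)*v.1+(w32 : ZMod 5)*v.2.1+(w33 : ZMod 5)*v.2.2)))
      (j := fun v _ => ((m11 : ZMod 5)*v.1+(m12 : ZMod 5)*v.2.1+(m13 : ZMod 5)*v.2.2,
        ((m21 : ZMod 5)*v.1+(m22 : ZMod 5)*v.2.1+(m23 : ZMod 5)*v.2.2,
         (m31 : ZMod 5)*v.1+(m32 : ZMod 5)*v.2.1+(m33 : ZMod 5)*v.2.2)))
    · rintro ⟨v1, v2, v3⟩ hv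
      simp only [Finset.mem_filter, Finset.mem_univ, true_and] at hv ⊢
      obtain ⟨x, rfl⟩ := ZMod.intCast_surjective v1
      obtain ⟨y, rfl⟩ := ZMod.intCast_surjective v2
      obtain ⟨z, rfl⟩ := ZMod.intCast_surjective v3
      obtain ⟨e1, e2, e3⟩ := hMW x y z
      have e := hz (w11*x+w12*y+w13*z) (w21*x+w22*y+w23*z) (w31*x+w32*y+w33*z)
      rw [← cast3 m11 m12 m13, ← cast3 m21 m22 m23, ← cast3 m31 m32 m33, e1, e2, e3] at e
      rw [← cast3 w11 w12 w13, ← cast3 w21 w22 w23, ← cast3 w31 w32 w33, e]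
      exact hv
    · rintro ⟨v1, v2, v3⟩ hv
      simp only [Finset.mem_filter, Finset.mem_univ, true_and] at hv ⊢
      obtain ⟨x, rfl⟩ := ZMod.intCast_surjective v1
      obtain ⟨y, rfl⟩ := ZMod.intCast_surjective v2
      obtain ⟨z, rfl⟩ := ZMod.intCast_surjective v3
      rw [← hz x y z]
      exact hv
    · rintro ⟨v1, v2, v3⟩ _
      obtain ⟨x, rfl⟩ := ZMod.intCast_surjective v1
      obtain ⟨y, rfl⟩ := ZMod.intCast_surjective v2
      obtain ⟨z, rfl⟩ := ZMod.intCast_surjective v3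
      obtain ⟨e1, e2, e3⟩ := hMW x y z
      dsimp only
      rw [← cast3 w11 w12 w13 x y z, ← cast3 w21 w22 w23 x y z, ← cast3 w31 w32 w33 x y z,
        ← cast3 m11 m12 m13, ← cast3 m21 m22 m23, ← cast3 m31 m32 m33, e1, e2, e3]
    · rintro ⟨v1, v2, v3⟩ _
      obtain ⟨x, rfl⟩ := ZMod.intCast_surjective v1
      obtain ⟨y, rfl⟩ := ZMod.intCast_surjective v2
      obtain ⟨z, rfl⟩ := ZMod.intCast_surjective v3
      obtain ⟨e1, e2, e3⟩ := hWM x y z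
      dsimp only
      rw [← cast3 m11 m12 m13 x y z, ← cast3 m21 m22 m23 x y z, ← cast3 m31 m32 m33 x y z,
        ← cast3 w11 w12 w13, ← cast3 w21 w22 w23, ← cast3 w31 w32 w33, e1, e2, e3]

/-- Conclusion bundle of a move. -/
def MV (a b c f g h a' b' c' f' g' h' : ℤ) : Prop :=
  (PD a b c f g h → PD a' b' c' f' g' h') ∧
  (∀ m, RP a b c f g h m → RP a' b' c' f' g' h' m) ∧
  z5 a b c f g h = z5 a' b' c' f' g' h' ∧
  dt a' b' c' f' g' h' = dt a b c f g h

lemma moveT1 (a b c f g h k l : ℤ) :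
    MV a b c f g h (a+b*k^2+c*l^2+2*f*k*l+2*g*l+2*h*k) b c f (g+c*l+f*k) (h+b*k+f*l) := by
  have H := master a b c f g h (a+b*k^2+c*l^2+2*f*k*l+2*g*l+2*h*k) b c f (g+c*l+f*k) (h+b*k+f*l) 1 0 0 k 1 0 l 0 1 1 0 0 (-k) 1 0 (-l) 0 1
    (by intro x y z; unfold Q; ring)
    (fun x y z => ⟨by ring, by ring, by ring⟩)
    (fun x y z => ⟨by ring, by ring, by ring⟩)
  exact ⟨H.1, H.2.1, H.2.2, by unfold dt; ring⟩

lemma moveT2 (a b c f g h k l : ℤ) :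
    MV a b c f g h a (b+a*k^2+c*l^2+2*f*l+2*g*k*l+2*h*k) c (f+c*l+g*k) g (h+a*k+g*l) := by
  have H := master a b c f g h a (b+a*k^2+c*l^2+2*f*l+2*g*k*l+2*h*k) c (f+c*l+g*k) g (h+a*k+g*l) 1 k 0 0 1 0 0 l 1 1 (-k) 0 0 1 0 0 (-l) 1
    (by intro x y z; unfold Q; ring)
    (fun x y z => ⟨by ring, by ring, by ring⟩)
    (fun x y z => ⟨by ring, by ring, by ring⟩)
  exact ⟨H.1, H.2.1, H.2.2, by unfold dt; ring⟩

lemma moveT3 (a b c f g h k l : ℤ) :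
    MV a b c f g h a b (c+a*k^2+b*l^2+2*f*l+2*g*k+2*h*k*l) (f+b*l+h*k) (g+a*k+h*l) h := by
  have H := master a b c f g h a b (c+a*k^2+b*l^2+2*f*l+2*g*k+2*h*k*l) (f+b*l+h*k) (g+a*k+h*l) h 1 0 k 0 1 l 0 0 1 1 0 (-k) 0 1 (-l) 0 0 1
    (by intro x y z; unfold Q; ring)
    (fun x y z => ⟨by ring, by ring, by ring⟩)
    (fun x y z => ⟨by ring, by ring, by ring⟩)
  exact ⟨H.1, H.2.1, H.2.2, by unfold dt; ring⟩

lemma moveP12 (a b c f g h : ℤ) : MV a b c f g h b a c g f h := by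
  have H := master a b c f g h b a c g f h 0 1 0 1 0 0 0 0 1 0 1 0 1 0 0 0 0 1
    (by intro x y z; unfold Q; ring)
    (fun x y z => ⟨by ring, by ring, by ring⟩)
    (fun x y z => ⟨by ring, by ring, by ring⟩)
  exact ⟨H.1, H.2.1, H.2.2, by unfold dt; ring⟩

lemma moveP23 (a b c f g h : ℤ) : MV a b c f g h a c b f h g := by
  have H := master a b c f g h a c b f h g 1 0 0 0 0 1 0 1 0 1 0 0 0 0 1 0 1 0
    (by intro x y z; unfold Q; ring)
    (fun x y z => ⟨by ring, by ring, by ring⟩)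
    (fun x y z => ⟨by ring, by ring, by ring⟩)
  exact ⟨H.1, H.2.1, H.2.2, by unfold dt; ring⟩

lemma moveS2 (a b c f g h : ℤ) : MV a b c f g h a b c (-f) g (-h) := by
  have H := master a b c f g h a b c (-f) g (-h) 1 0 0 0 (-1) 0 0 0 1 1 0 0 0 (-1) 0 0 0 1
    (by intro x y z; unfold Q; ring)
    (fun x y z => ⟨by ring, by ring, by ring⟩)
    (fun x y z => ⟨by ring, by ring, by ring⟩)
  exact ⟨H.1, H.2.1, H.2.2, by unfold dt; ring⟩

lemma moveS3 (a b c f g h : ℤ) : MV a b c f g h a b c (-f) (-g) h := by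
  have H := master a b c f g h a b c (-f) (-g) h 1 0 0 0 1 0 0 0 (-1) 1 0 0 0 1 0 0 0 (-1)
    (by intro x y z; unfold Q; ring)
    (fun x y z => ⟨by ring, by ring, by ring⟩)
    (fun x y z => ⟨by ring, by ring, by ring⟩)
  exact ⟨H.1, H.2.1, H.2.2, by unfold dt; ring⟩


lemma PD_pos {a b c f g h : ℤ} (pd : PD a b c f g h) : 0 < a ∧ 0 < b ∧ 0 < c := by
  refine ⟨?_, ?_, ?_⟩
  · have := pd 1 0 0 (by simp); unfold Q at this; linarith
  · have := pd 0 1 0 (by simp); unfold Q at this; linarith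
  · have := pd 0 0 1 (by simp); unfold Q at this; linarith

lemma PD_U {a b c f g h : ℤ} (pd : PD a b c f g h) : 0 < a*b - h^2 := by
  have ha := (PD_pos pd).1
  have := pd (-h) a 0 (by intro ⟨_, h2, _⟩; omega)
  unfold Q at this
  nlinarith



lemma z5F2a : z5 1 2 3 1 0 0 = 5 := by decide

lemma z5F2b : z5 1 2 3 (-1) 0 0 = 5 := by decide

set_option maxHeartbeats 2000000 in
lemma terminal (n a b c f g h : ℤ)
    (pd : PD a b c f g h) (hdt : dt a b c f g h = 5) (hz : z5 a b c f g h = 45)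
    (hab : a ≤ b) (hbc : b ≤ c)
    (hh : 0 ≤ h) (hha : 2*h ≤ a) (hg : 0 ≤ g) (hga : 2*g ≤ a)
    (hf1 : 2*f ≤ b) (hf2 : -b ≤ 2*f)
    (hC : 0 ≤ a + b + 2*f - 2*g - 2*h)
    (hrp : RP a b c f g h n) : ∃ x y z : ℤ, n = x^2 + y^2 + 5*z^2 := by
  obtain ⟨ha, hb, hc⟩ := PD_pos pd
  have hU : 0 < a*b - h^2 := PD_U pd
  have hcU : c*(a*b-h^2) - (a*f^2 - 2*f*g*h + b*g^2) = 5 := by rw [← hdt]; unfold dt; ring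
  have hR : b*(a*b-h^2) - (a*f^2 - 2*f*g*h + b*g^2) ≤ 5 := by nlinarith
  have key : a*b^2 ≤ 20 := by
    rcases le_or_gt 0 f with hf0 | hf0
    · nlinarith [mul_nonneg (mul_nonneg hf0 hg) hh,
        mul_nonneg ha.le (mul_nonneg (by linarith : (0:ℤ) ≤ b - 2*f) (by linarith : (0:ℤ) ≤ b + 2*f)),
        mul_nonneg (mul_nonneg hb.le hg) (by linarith : (0:ℤ) ≤ a - 2*g),
        mul_nonneg (mul_nonneg hb.le hh) (by linarith : (0:ℤ) ≤ a - 2*h),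
        mul_nonneg (mul_nonneg ha.le hb.le) (by linarith : (0:ℤ) ≤ 2*b - 2*g - 2*h)]
    · obtain ⟨p, hp⟩ : ∃ p : ℤ, p = -f := ⟨-f, rfl⟩
      have hpp : 0 < p := by omega
      have w1 : 2*(g^2 + h^2) ≤ a*(g+h) := by
        nlinarith [mul_nonneg hg (by linarith : (0:ℤ) ≤ a - 2*g),
          mul_nonneg hh (by linarith : (0:ℤ) ≤ a - 2*h)]
      have w2 : 8*p*g*h ≤ 4*p*(g^2+h^2) := by nlinarith [mul_nonneg hpp.le (sq_nonneg (g - h))]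
      have w3 : 2*(g+h) ≤ a + b - 2*p := by omega
      have w4 : (2*b + 2*p)*(2*(g^2+h^2)) ≤ (2*b + 2*p)*(a*(g+h)) := by
        apply mul_le_mul_of_nonneg_left w1; linarith
      have w5 : (a*(b+p))*(2*(g+h)) ≤ (a*(b+p))*(a + b - 2*p) := by
        apply mul_le_mul_of_nonneg_left w3
        exact mul_nonneg ha.le (by linarith)
      have e1 : a*(b+p)*(3*b-a-2*p) ≤ 4*(b*(a*b-h^2) - (a*f^2 - 2*f*g*h + b*g^2)) := by
        have hfp : f = -p := by omega
        subst hfp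
        linarith [w2, w4, w5]
      have e2 : a*b^2 ≤ a*(b+p)*(3*b-a-2*p) := by
        nlinarith [mul_nonneg (mul_nonneg ha.le (by linarith : (0:ℤ) ≤ b - a)) (by linarith : (0:ℤ) ≤ b + p),
          mul_nonneg ha.le (mul_nonneg (by linarith : (0:ℤ) ≤ b - 2*p) (by linarith : (0:ℤ) ≤ b + 2*p)),
          mul_nonneg ha.le (sq_nonneg p)]
      linarith [e1, e2, hR]
  have ha2 : a ≤ 2 := by
    by_contra h3
    push_neg at h3
    have h3' : (3:ℤ) ≤ a := h3
    have hb3' : (3:ℤ) ≤ b := le_trans h3' hab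
    nlinarith [mul_nonneg (by linarith : (0:ℤ) ≤ a - 3) (sq_nonneg b),
      mul_nonneg (by linarith : (0:ℤ) ≤ b - 3) (by linarith : (0:ℤ) ≤ b + 3)]
  have ha1 : (1:ℤ) ≤ a := ha
  unfold dt at hdt
  interval_cases a
  · -- a = 1
    have h0 : h = 0 := by omega
    have g0 : g = 0 := by omega
    subst h0 g0
    have hb4 : b ≤ 4 := by nlinarith [key, sq_nonneg (b - 5)]
    have hb1 : (1:ℤ) ≤ b := hb
    interval_cases b
    · -- b = 1 : the form diag(1,1,5)
      have hf0 : f = 0 := by omega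
      subst hf0
      have hc5 : c = 5 := by omega
      subst hc5
      obtain ⟨x, y, z, e⟩ := hrp
      exact ⟨x, y, z, by unfold Q at e; linarith⟩
    · -- b = 2 : F2 cases
      have hfl : -1 ≤ f := by omega
      have hfu : f ≤ 1 := by omega
      interval_cases f
      · have hc3 : c = 3 := by omega
        subst hc3
        rw [z5F2b] at hz; omega
      · omega
      · have hc3 : c = 3 := by omega
        subst hc3
        rw [z5F2a] at hz; omega
    · -- b = 3
      have hfl : -1 ≤ f := by omega
      have hfu : f ≤ 1 := by omega
      interval_cases f <;> omega
    · -- b = 4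
      have hfl : -2 ≤ f := by omega
      have hfu : f ≤ 2 := by omega
      interval_cases f <;> omega
  · -- a = 2
    have hb3 : b ≤ 3 := by nlinarith [key, sq_nonneg (b - 4)]
    have hb2 : (2:ℤ) ≤ b := hab
    have hfl : -1 ≤ f := by omega
    have hfu : f ≤ 1 := by omega
    have hh1 : h ≤ 1 := by omega
    have hg1 : g ≤ 1 := by omega
    interval_cases b <;> interval_cases h <;> interval_cases g <;> interval_cases f <;> omega


def C1 (a b c f g h : ℤ) : Prop :=
  ∀ k l : ℤ, k^2 ≤ 1 → l^2 ≤ 1 → 0 ≤ b*k^2+c*l^2+2*f*k*l+2*g*l+2*h*k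
def C2 (a b c f g h : ℤ) : Prop :=
  ∀ k l : ℤ, k^2 ≤ 1 → l^2 ≤ 1 → 0 ≤ a*k^2+c*l^2+2*f*l+2*g*k*l+2*h*k
def C3 (a b c f g h : ℤ) : Prop :=
  ∀ k l : ℤ, k^2 ≤ 1 → l^2 ≤ 1 → 0 ≤ a*k^2+b*l^2+2*f*l+2*g*k+2*h*k*l

/-- Sign-normalize and invoke the terminal classification. -/
lemma presorted (n a b c f g h : ℤ)
    (pd : PD a b c f g h) (hdt : dt a b c f g h = 5) (hz : z5 a b c f g h = 45)
    (hrp : RP a b c f g h n)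
    (h2 : C2 a b c f g h) (h3 : C3 a b c f g h)
    (hab : a ≤ b) (hbc : b ≤ c) : ∃ x y z : ℤ, n = x^2 + y^2 + 5*z^2 := by
  have k00 : (0:ℤ)^2 ≤ 1 := by norm_num
  have k11 : (1:ℤ)^2 ≤ 1 := by norm_num
  have k1n : (-1:ℤ)^2 ≤ 1 := by norm_num
  rcases le_or_gt 0 h with hh | hh <;> rcases le_or_gt 0 g with hg | hg
  · -- h ≥ 0, g ≥ 0 : no flip
    exact terminal n a b c f g h pd hdt hz hab hbc hh
      (by have := h2 (-1) 0 k1n k00; linarith) hg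
      (by have := h3 (-1) 0 k1n k00; linarith)
      (by have := h3 0 (-1) k00 k1n; linarith)
      (by have := h3 0 1 k00 k11; linarith)
      (by have := h3 (-1) 1 k1n k11; linarith) hrp
  · -- h ≥ 0, g < 0 : flip S3
    obtain ⟨mpd, mrp, mz5, mdt⟩ := moveS3 a b c f g h
    exact terminal n a b c (-f) (-g) h (mpd pd) (by rw [mdt]; exact hdt)
      (by rw [← mz5]; exact hz) hab hbc hh
      (by have := h2 (-1) 0 k1n k00; linarith) (by linarith)
      (by have := h3 1 0 k11 k00; linarith)
      (by have := h3 0 1 k00 k11; linarith)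
      (by have := h3 0 (-1) k00 k1n; linarith)
      (by have := h3 1 (-1) k11 k1n; linarith) (mrp n hrp)
  · -- h < 0, g ≥ 0 : flip S2
    obtain ⟨mpd, mrp, mz5, mdt⟩ := moveS2 a b c f g h
    exact terminal n a b c (-f) g (-h) (mpd pd) (by rw [mdt]; exact hdt)
      (by rw [← mz5]; exact hz) hab hbc (by linarith)
      (by have := h2 1 0 k11 k00; linarith) hg
      (by have := h3 (-1) 0 k1n k00; linarith)
      (by have := h3 0 1 k00 k11; linarith)
      (by have := h3 0 (-1) k00 k1n; linarith)
      (by have := h3 (-1) (-1) k1n k1n; linarith) (mrp n hrp)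
  · -- h < 0, g < 0 : flip S2 then S3
    obtain ⟨mpd, mrp, mz5, mdt⟩ := moveS2 a b c f g h
    obtain ⟨mpd', mrp', mz5', mdt'⟩ := moveS3 a b c (-f) g (-h)
    have e1 : - -f = f := by ring
    rw [e1] at mpd' mrp' mz5' mdt'
    exact terminal n a b c f (-g) (-h) (mpd' (mpd pd))
      (by rw [mdt', mdt]; exact hdt)
      (by rw [← mz5', ← mz5]; exact hz) hab hbc (by linarith)
      (by have := h2 1 0 k11 k00; linarith) (by linarith)
      (by have := h3 1 0 k11 k00; linarith)
      (by have := h3 0 (-1) k00 k1n; linarith)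
      (by have := h3 0 1 k00 k11; linarith)
      (by have := h3 1 1 k11 k11; linarith) (mrp' n (mrp n hrp))


lemma anyorder (n a b c f g h : ℤ)
    (pd : PD a b c f g h) (hdt : dt a b c f g h = 5) (hz : z5 a b c f g h = 45)
    (hrp : RP a b c f g h n)
    (h1 : C1 a b c f g h) (h2 : C2 a b c f g h) (h3 : C3 a b c f g h) :
    ∃ x y z : ℤ, n = x^2 + y^2 + 5*z^2 := by
  rcases le_total a b with o1 | o1 <;> rcases le_total b c with o2 | o2
  · -- a ≤ b ≤ c
    exact presorted n a b c f g h pd hdt hz hrp h2 h3 o1 o2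
  · rcases le_total a c with o3 | o3
    · -- a ≤ c ≤ b : P23
      obtain ⟨mpd, mrp, mz5, mdt⟩ := moveP23 a b c f g h
      exact presorted n a c b f h g (mpd pd) (by rw [mdt]; exact hdt) (by rw [← mz5]; exact hz)
        (mrp n hrp)
        (fun k l hk hl => by have := h3 k l hk hl; linarith)
        (fun k l hk hl => by have := h2 k l hk hl; linarith) o3 o2
    · -- c ≤ a ≤ b : P23 then P12
      obtain ⟨mpd, mrp, mz5, mdt⟩ := moveP23 a b c f g h
      obtain ⟨mpd', mrp', mz5', mdt'⟩ := moveP12 a c b f h g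
      exact presorted n c a b h f g (mpd' (mpd pd)) (by rw [mdt', mdt]; exact hdt)
        (by rw [← mz5', ← mz5]; exact hz) (mrp' n (mrp n hrp))
        (fun k l hk hl => by have := h1 l k hl hk; linarith)
        (fun k l hk hl => by have := h2 l k hl hk; linarith) o3 o1
  · rcases le_total a c with o3 | o3
    · -- b ≤ a ≤ c : P12
      obtain ⟨mpd, mrp, mz5, mdt⟩ := moveP12 a b c f g h
      exact presorted n b a c g f h (mpd pd) (by rw [mdt]; exact hdt) (by rw [← mz5]; exact hz)
        (mrp n hrp)
        (fun k l hk hl => by have := h1 k l hk hl; linarith)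
        (fun k l hk hl => by have := h3 l k hl hk; linarith) o1 o3
    · -- b ≤ c ≤ a : P12 then P23
      obtain ⟨mpd, mrp, mz5, mdt⟩ := moveP12 a b c f g h
      obtain ⟨mpd', mrp', mz5', mdt'⟩ := moveP23 b a c g f h
      exact presorted n b c a g h f (mpd' (mpd pd)) (by rw [mdt', mdt]; exact hdt)
        (by rw [← mz5', ← mz5]; exact hz) (mrp' n (mrp n hrp))
        (fun k l hk hl => by have := h3 l k hl hk; linarith)
        (fun k l hk hl => by have := h1 k l hk hl; linarith) o2 o3
  · -- c ≤ b ≤ a : P12, P23, P12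
    obtain ⟨mpd, mrp, mz5, mdt⟩ := moveP12 a b c f g h
    obtain ⟨mpd', mrp', mz5', mdt'⟩ := moveP23 b a c g f h
    obtain ⟨mpd'', mrp'', mz5'', mdt''⟩ := moveP12 b c a g h f
    exact presorted n c b a h g f (mpd'' (mpd' (mpd pd)))
      (by rw [mdt'', mdt', mdt]; exact hdt)
      (by rw [← mz5'', ← mz5', ← mz5]; exact hz) (mrp'' n (mrp' n (mrp n hrp)))
      (fun k l hk hl => by have := h2 l k hl hk; linarith)
      (fun k l hk hl => by have := h1 l k hl hk; linarith) o2 o1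

/-- Main reduction: any positive definite integral ternary form of determinant 5 with
45 zeros mod 5 that represents `n` yields a representation by `x²+y²+5z²`. -/
lemma reduce (n : ℤ) : ∀ N : ℕ, ∀ a b c f g h : ℤ,
    PD a b c f g h → dt a b c f g h = 5 → z5 a b c f g h = 45 → RP a b c f g h n →
    a + b + c ≤ (N : ℤ) → ∃ x y z : ℤ, n = x^2 + y^2 + 5*z^2 := by
  intro N
  induction N with
  | zero =>
    intro a b c f g h pd _ _ _ hsum
    obtain ⟨ha, hb, hc⟩ := PD_pos pd
    norm_num at hsum
    omega
  | succ N ih =>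
    intro a b c f g h pd hdt hz hrp hsum
    obtain ⟨ha, hb, hc⟩ := PD_pos pd
    by_cases h1 : C1 a b c f g h
    · by_cases h2 : C2 a b c f g h
      · by_cases h3 : C3 a b c f g h
        · exact anyorder n a b c f g h pd hdt hz hrp h1 h2 h3
        · -- a c-decreasing move exists
          unfold C3 at h3
          push_neg at h3
          obtain ⟨k, l, hk, hl, hE⟩ := h3
          obtain ⟨mpd, mrp, mz5, mdt⟩ := moveT3 a b c f g h k l
          have pd' := mpd pd
          have hc' := (PD_pos pd').2.2
          apply ih a b (c+a*k^2+b*l^2+2*f*l+2*g*k+2*h*k*l) (f+b*l+h*k) (g+a*k+h*l) h pd'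
            (by rw [mdt]; exact hdt) (by rw [← mz5]; exact hz) (mrp n hrp)
          push_cast at hsum ⊢
          omega
      · unfold C2 at h2
        push_neg at h2
        obtain ⟨k, l, hk, hl, hE⟩ := h2
        obtain ⟨mpd, mrp, mz5, mdt⟩ := moveT2 a b c f g h k l
        have pd' := mpd pd
        have hb' := (PD_pos pd').2.1
        apply ih a (b+a*k^2+c*l^2+2*f*l+2*g*k*l+2*h*k) c (f+c*l+g*k) g (h+a*k+g*l) pd'
          (by rw [mdt]; exact hdt) (by rw [← mz5]; exact hz) (mrp n hrp)
        push_cast at hsum ⊢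
        omega
    · unfold C1 at h1
      push_neg at h1
      obtain ⟨k, l, hk, hl, hE⟩ := h1
      obtain ⟨mpd, mrp, mz5, mdt⟩ := moveT1 a b c f g h k l
      have pd' := mpd pd
      have ha' := (PD_pos pd').1
      apply ih (a+b*k^2+c*l^2+2*f*k*l+2*g*l+2*h*k) b c f (g+c*l+f*k) (h+b*k+f*l) pd'
        (by rw [mdt]; exact hdt) (by rw [← mz5]; exact hz) (mrp n hrp)
      push_cast at hsum ⊢
      omega


lemma coprime_of_dvd_succ {A n : ℕ} (h : n ∣ 2*A + 1) : Nat.Coprime A n := by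
  have h1 : Nat.gcd A n ∣ 2*A + 1 := dvd_trans (Nat.gcd_dvd_right A n) h
  have h2 : Nat.gcd A n ∣ 2*A := Dvd.dvd.mul_left (Nat.gcd_dvd_left A n) 2
  have h3 : Nat.gcd A n ∣ 1 := by
    have := Nat.dvd_sub h1 h2
    simpa using this
  exact Nat.eq_one_of_dvd_one h3

lemma get_prime (n : ℕ) (hn2 : n % 2 = 1) (hn : 0 < n) :
    ∃ p : ℕ, p.Prime ∧ 20*n + 5 < p ∧ p % 4 = 1 ∧ p % 5 = 2 ∧ n ∣ 2*p + 1 := by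
  have hodd : ¬ (2 ∣ n) := by omega
  by_cases h5 : 5 ∣ n
  · -- use modulus 4*n
    have co : Nat.Coprime 4 n := by
      have : Nat.Coprime 2 n := (Nat.Prime.coprime_iff_not_dvd Nat.prime_two).mpr hodd
      simpa using this.pow_left 2
    obtain ⟨A, hA4, hAn⟩ := Nat.chineseRemainder co 1 ((n-1)/2)
    have hdvd : n ∣ 2*A + 1 := by
      have h1 : 2*A + 1 ≡ 2*((n-1)/2) + 1 [MOD n] := (hAn.mul_left 2).add_right 1
      have h2 : 2*((n-1)/2) + 1 = n := by omega
      rw [h2] at h1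
      exact (Nat.modEq_zero_iff_dvd).mp (h1.trans ((Nat.modEq_zero_iff_dvd).mpr dvd_rfl))
    have hA4' : A % 4 = 1 := hA4
    have coA : Nat.Coprime A (4*n) := by
      refine Nat.Coprime.mul_right ?_ (coprime_of_dvd_succ hdvd)
      have : Nat.gcd 4 A = Nat.gcd (A % 4) 4 := Nat.gcd_rec 4 A
      rw [hA4'] at this
      exact Nat.coprime_comm.mp (by rw [Nat.Coprime, this]; decide)
    haveI : NeZero (4*n) := ⟨by omega⟩
    have hunit : IsUnit (A : ZMod (4*n)) := (ZMod.isUnit_iff_coprime A (4*n)).mpr coA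
    obtain ⟨p, hgt, hp, hmod⟩ := Nat.forall_exists_prime_gt_and_eq_mod hunit (20*n+5)
    have hmodeq : p ≡ A [MOD 4*n] := (ZMod.natCast_eq_natCast_iff _ _ _).mp hmod
    have e4 : p % 4 = A % 4 := hmodeq.of_dvd ⟨n, rfl⟩
    have en : p ≡ A [MOD n] := hmodeq.of_dvd ⟨4, by ring⟩
    have hdvd' : n ∣ 2*p + 1 := by
      have e : 2*p + 1 ≡ 2*A + 1 [MOD n] := (en.mul_left 2).add_right 1
      exact (Nat.modEq_zero_iff_dvd).mp (e.trans ((Nat.modEq_zero_iff_dvd).mpr hdvd))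
    have h52 : 5 ∣ 2*p + 1 := dvd_trans h5 hdvd'
    refine ⟨p, hp, hgt, by omega, by omega, hdvd'⟩
  · -- use modulus 20*n
    have co2 : Nat.Coprime 2 n := (Nat.Prime.coprime_iff_not_dvd Nat.prime_two).mpr hodd
    have co4 : Nat.Coprime 4 n := by simpa using co2.pow_left 2
    have co5 : Nat.Coprime 5 n := (Nat.Prime.coprime_iff_not_dvd (by norm_num)).mpr h5
    have co : Nat.Coprime 20 n := by
      have := Nat.Coprime.mul co4 co5
      simpa [show 4*5 = 20 from rfl] using this
    obtain ⟨A, hA20, hAn⟩ := Nat.chineseRemainder co 17 ((n-1)/2)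
    have hdvd : n ∣ 2*A + 1 := by
      have h1 : 2*A + 1 ≡ 2*((n-1)/2) + 1 [MOD n] := (hAn.mul_left 2).add_right 1
      have h2 : 2*((n-1)/2) + 1 = n := by omega
      rw [h2] at h1
      exact (Nat.modEq_zero_iff_dvd).mp (h1.trans ((Nat.modEq_zero_iff_dvd).mpr dvd_rfl))
    have hA20' : A % 20 = 17 := hA20
    have coA : Nat.Coprime A (20*n) := by
      refine Nat.Coprime.mul_right ?_ (coprime_of_dvd_succ hdvd)
      have : Nat.gcd 20 A = Nat.gcd (A % 20) 20 := Nat.gcd_rec 20 A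
      rw [hA20'] at this
      exact Nat.coprime_comm.mp (by rw [Nat.Coprime, this]; decide)
    haveI : NeZero (20*n) := ⟨by omega⟩
    have hunit : IsUnit (A : ZMod (20*n)) := (ZMod.isUnit_iff_coprime A (20*n)).mpr coA
    obtain ⟨p, hgt, hp, hmod⟩ := Nat.forall_exists_prime_gt_and_eq_mod hunit (20*n+5)
    have hmodeq : p ≡ A [MOD 20*n] := (ZMod.natCast_eq_natCast_iff _ _ _).mp hmod
    have e4 : p % 4 = A % 4 := hmodeq.of_dvd ⟨5*n, by ring⟩
    have e5 : p % 5 = A % 5 := hmodeq.of_dvd ⟨4*n, by ring⟩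
    have en : p ≡ A [MOD n] := hmodeq.of_dvd ⟨20, by ring⟩
    have hdvd' : n ∣ 2*p + 1 := by
      have e : 2*p + 1 ≡ 2*A + 1 [MOD n] := (en.mul_left 2).add_right 1
      exact (Nat.modEq_zero_iff_dvd).mp (e.trans ((Nat.modEq_zero_iff_dvd).mpr hdvd))
    exact ⟨p, hp, hgt, by omega, by omega, hdvd'⟩


lemma jacobi_one (n p : ℕ) (hn8 : n % 8 = 7) (hp : p.Prime) (hp4 : p % 4 = 1)
    (hp5 : p % 5 = 2) (hdvd : n ∣ 2*p + 1) :
    jacobiSym (-5 * (n : ℤ)) p = 1 := by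
  have hn : 0 < n := by omega
  have hoddp : Odd p := Nat.odd_iff.mpr (by omega)
  have hoddn : Odd n := Nat.odd_iff.mpr (by omega)
  -- split
  have split : jacobiSym (-5 * (n:ℤ)) p
      = jacobiSym (-1) p * (jacobiSym ((5:ℕ)) p * jacobiSym ((n:ℕ)) p) := by
    rw [← jacobiSym.mul_left, ← jacobiSym.mul_left]
    norm_num
  -- J(-1|p) = 1
  have j1 : jacobiSym (-1) p = 1 := by
    rw [jacobiSym.at_neg_one hoddp, ZMod.χ₄_nat_one_mod_four hp4]
  -- J(5|p) = J(p|5) = J(2|5) = -1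
  have j5 : jacobiSym ((5:ℕ)) p = -1 := by
    rw [jacobiSym.quadratic_reciprocity_one_mod_four (by norm_num) hoddp]
    rw [jacobiSym.mod_left' (show ((p:ℕ):ℤ) % ((5:ℕ):ℤ) = (2:ℤ) % ((5:ℕ):ℤ) by push_cast; omega)]
    rw [jacobiSym.at_two (by decide : Odd 5), ZMod.χ₈_nat_eq_if_mod_eight]
    norm_num
  -- J(n|p) = J(p|n) = J(-2 s^2|n) = J(-2|n) = -1
  have jn : jacobiSym ((n:ℕ)) p = -1 := by
    rw [← jacobiSym.quadratic_reciprocity_one_mod_four hp4 hoddn]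
    -- p ≡ -2 * s^2 mod n, where s = (n+1)/2
    have hs : 2 * ((n+1)/2) = n + 1 := by omega
    have hdvd2 : n ∣ (p + 2 * ((n+1)/2)^2) * 2 := by
      have e : (p + 2 * ((n+1)/2)^2) * 2 = (2*p + 1) + n * (n + 2) := by
        have : (2 * ((n+1)/2))^2 = (n+1)^2 := by rw [hs]
        nlinarith [this]
      rw [e]
      exact dvd_add hdvd ⟨n + 2, rfl⟩
    have hco : Nat.Coprime n 2 := by
      rw [Nat.coprime_comm]
      exact (Nat.Prime.coprime_iff_not_dvd Nat.prime_two).mpr (by omega)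
    have hdvd3 : n ∣ p + 2 * ((n+1)/2)^2 := hco.dvd_of_dvd_mul_right hdvd2
    have hdvd4 : (n:ℤ) ∣ (p:ℤ) + 2 * ((((n+1)/2 : ℕ)):ℤ)^2 := by
      have := Int.natCast_dvd_natCast.mpr hdvd3
      simp only [Nat.cast_add, Nat.cast_mul, Nat.cast_pow, Nat.cast_ofNat] at this
      convert this using 1
    have hmod : ((p:ℕ):ℤ) ≡ (-2) * ((((n+1)/2 : ℕ)):ℤ)^2 [ZMOD (n:ℕ)] := by
      apply Int.modEq_iff_dvd.mpr
      have : (-2) * ((((n+1)/2 : ℕ)):ℤ)^2 - (p:ℤ) = -((p:ℤ) + 2 * ((((n+1)/2 : ℕ)):ℤ)^2) := by ring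
      rw [this]
      exact dvd_neg.mpr hdvd4
    rw [jacobiSym.mod_left' hmod]
    rw [jacobiSym.mul_left]
    rw [jacobiSym.sq_one' (show ((((n+1)/2 : ℕ)):ℤ).gcd n = 1 by
      have h1 : Nat.gcd ((n+1)/2) n ∣ 2*((n+1)/2) := Dvd.dvd.mul_left (Nat.gcd_dvd_left _ _) 2
      rw [hs] at h1
      have h2 : Nat.gcd ((n+1)/2) n ∣ n := Nat.gcd_dvd_right _ _
      have h3 : Nat.gcd ((n+1)/2) n ∣ 1 := by
        have := Nat.dvd_sub h1 h2
        simpa using this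
      rw [Int.gcd_natCast_natCast]; exact Nat.eq_one_of_dvd_one h3)]
    have jm1 : jacobiSym (-1) n = -1 := by
      rw [jacobiSym.at_neg_one hoddn, ZMod.χ₄_nat_three_mod_four (by omega)]
    have j2 : jacobiSym 2 n = 1 := by
      rw [jacobiSym.at_two hoddn, ZMod.χ₈_nat_eq_if_mod_eight]
      simp [hn8, show n % 2 = 1 by omega]
    calc jacobiSym (-2) n * 1 = jacobiSym (-1) n * jacobiSym 2 n := by
          rw [← jacobiSym.mul_left]; norm_num
      _ = -1 := by rw [jm1, j2]; norm_num
  rw [split, j1, j5, jn]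
  norm_num


lemma PD_of (a b c f g h : ℤ) (ha : 0 < a) (hU : 0 < a*b - h^2)
    (hd : 0 < dt a b c f g h) : PD a b c f g h := by
  intro x y z hxyz
  by_contra hQ
  push_neg at hQ
  have iden : a*(a*b-h^2)*(Q a b c f g h x y z) =
      (a*b-h^2)*(a*x+h*y+g*z)^2 + ((a*b-h^2)*y + (a*f-g*h)*z)^2
        + a*(dt a b c f g h)*z^2 := by
    unfold Q dt; ring
  have hle : a*(a*b-h^2)*(Q a b c f g h x y z) ≤ 0 :=
    mul_nonpos_of_nonneg_of_nonpos (mul_pos ha hU).le hQ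
  rw [iden] at hle
  have n1 : 0 ≤ (a*b-h^2)*(a*x+h*y+g*z)^2 := mul_nonneg hU.le (sq_nonneg _)
  have n2 : 0 ≤ ((a*b-h^2)*y + (a*f-g*h)*z)^2 := sq_nonneg _
  have n3 : 0 ≤ a*(dt a b c f g h)*z^2 := mul_nonneg (mul_pos ha hd).le (sq_nonneg z)
  have hz : z = 0 := by
    have h0 : a*(dt a b c f g h)*z^2 = 0 := by linarith
    have := mul_pos ha hd
    have hz2 : z^2 = 0 := by
      rcases mul_eq_zero.mp h0 with h' | h'
      · exact absurd h' (by positivity)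
      · exact h'
    exact pow_eq_zero_iff (by norm_num) |>.mp hz2
  subst hz
  have hy : y = 0 := by
    have h0 : ((a*b-h^2)*y + (a*f-g*h)*0)^2 = 0 := by nlinarith
    have h1 : (a*b-h^2)*y + (a*f-g*h)*0 = 0 := by
      exact pow_eq_zero_iff (by norm_num) |>.mp h0
    have : (a*b-h^2)*y = 0 := by linarith
    rcases mul_eq_zero.mp this with h' | h'
    · omega
    · exact h'
  subst hy
  have hx : x = 0 := by
    have h0 : (a*b-h^2)*(a*x+h*0+g*0)^2 = 0 := by nlinarith
    rcases mul_eq_zero.mp h0 with h' | h'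
    · omega
    · have : a*x+h*0+g*0 = 0 := pow_eq_zero_iff (by norm_num) |>.mp h'
      have hax : a*x = 0 := by linarith
      rcases mul_eq_zero.mp hax with h'' | h''
      · omega
      · exact h''
  exact hxyz ⟨hx, rfl, rfl⟩

lemma z5_45 (A B : ZMod 5) (hAB : A*B = 0) :
    (Finset.univ.filter (fun v : ZMod 5 × ZMod 5 × ZMod 5 =>
      QZ A B 0 0 0 1 v.1 v.2.1 v.2.2 = 0)).card = 45 := by
  revert hAB
  revert A B
  decide


lemma z5_of (a b c f g h : ℤ) (hc : (5:ℤ) ∣ c) (hf : (5:ℤ) ∣ f) (hg : (5:ℤ) ∣ g)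
    (hh : h = 1) (hab : (5:ℤ) ∣ a*b) : z5 a b c f g h = 45 := by
  subst hh
  unfold z5
  rw [show ((c:ℤ) : ZMod 5) = 0 from (ZMod.intCast_zmod_eq_zero_iff_dvd c 5).mpr hc,
    show ((f:ℤ) : ZMod 5) = 0 from (ZMod.intCast_zmod_eq_zero_iff_dvd f 5).mpr hf,
    show ((g:ℤ) : ZMod 5) = 0 from (ZMod.intCast_zmod_eq_zero_iff_dvd g 5).mpr hg,
    show (((1:ℤ)) : ZMod 5) = 1 from by norm_num]
  apply z5_45
  rw [← Int.cast_mul]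
  exact (ZMod.intCast_zmod_eq_zero_iff_dvd _ 5).mpr hab

theorem main (n : ℕ) (hn : 0 < n) (hn8 : n % 8 = 7) :
    ∃ x y z : ℤ, (n : ℤ) = x ^ 2 + y ^ 2 + 5 * z ^ 2 := by
  obtain ⟨p, hp, hgt, hp4, hp5, hdvd⟩ := get_prime n (by omega) hn
  haveI : Fact p.Prime := ⟨hp⟩
  have hsq : IsSquare (((-5 * (n:ℤ)) : ℤ) : ZMod p) :=
    ZMod.isSquare_of_jacobiSym_eq_one (jacobi_one n p hn8 hp hp4 hp5 hdvd)
  obtain ⟨r, hr⟩ := hsq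
  have hr2 : r * r = -5 * ((n:ℕ) : ZMod p) := by rw [← hr]; push_cast; ring
  have hn0 : ((n:ℕ) : ZMod p) ≠ 0 := by
    rw [Ne, ZMod.natCast_eq_zero_iff]
    intro hdn
    have := Nat.le_of_dvd hn hdn
    omega
  have hinv : ((n:ℕ) : ZMod p) * ((n:ℕ) : ZMod p)⁻¹ = 1 := mul_inv_cancel₀ hn0
  obtain ⟨u, hu⟩ : ∃ u : ZMod p, u = r * ((n:ℕ) : ZMod p)⁻¹ := ⟨_, rfl⟩
  have hu0 : ((n:ℕ) : ZMod p) * u^2 + 5 = 0 := by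
    calc ((n:ℕ) : ZMod p) * u^2 + 5
        = (r*r) * (((n:ℕ) : ZMod p)⁻¹ * (((n:ℕ) : ZMod p) * ((n:ℕ) : ZMod p)⁻¹)) + 5 := by
          rw [hu]; ring
      _ = (r*r) * (((n:ℕ) : ZMod p)⁻¹ * 1) + 5 := by rw [hinv]
      _ = -5 * (((n:ℕ) : ZMod p) * ((n:ℕ) : ZMod p)⁻¹) + 5 := by rw [hr2]; ring
      _ = 0 := by rw [hinv]; ring
  have hpodd : p % 2 = 1 := Nat.odd_iff.mp (hp.odd_of_ne_two (by omega))
  obtain ⟨F, hFodd, hFu⟩ : ∃ F : ℕ, F % 2 = 1 ∧ ((F:ℕ) : ZMod p) = u := by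
    rcases Nat.even_or_odd u.val with he | ho
    · refine ⟨u.val + p, ?_, ?_⟩
      · rw [Nat.even_iff] at he
        omega
      · push_cast
        rw [ZMod.natCast_self, add_zero]
        exact ZMod.natCast_rightInverse u
    · exact ⟨u.val, Nat.odd_iff.mp ho, ZMod.natCast_rightInverse u⟩
  have hdvdp : p ∣ n * F^2 + 5 := by
    rw [← ZMod.natCast_eq_zero_iff]
    push_cast
    rw [hFu]
    exact hu0
  have h2 : 2 ∣ n * F^2 + 5 := by
    have hodd : Odd (n * F^2) :=
      (Nat.odd_iff.mpr (by omega)).mul ((Nat.odd_iff.mpr hFodd).pow)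
    obtain ⟨k, hk⟩ := hodd
    omega
  have hco2p : Nat.Coprime 2 p :=
    (Nat.Prime.coprime_iff_not_dvd Nat.prime_two).mpr (by omega)
  have h2p : 2*p ∣ n*F^2 + 5 := Nat.Coprime.mul_dvd_of_dvd_of_dvd hco2p h2 hdvdp
  obtain ⟨C, hC⟩ := h2p
  obtain ⟨B, hB⟩ := hdvd
  have hBZ : (n:ℤ) * B = 2*(p:ℤ) + 1 := by
    have := congrArg (Nat.cast : ℕ → ℤ) hB
    push_cast at this
    linarith
  have hCZ : 2*(p:ℤ)*C = (n:ℤ)*(F:ℤ)^2 + 5 := by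
    have := congrArg (Nat.cast : ℕ → ℤ) hC
    push_cast at this
    linarith
  have hdt : dt (n:ℤ) B C F 0 1 = 5 := by
    unfold dt
    linear_combination (C:ℤ) * hBZ + hCZ
  have hU : (0:ℤ) < (n:ℤ)*(B:ℤ) - 1^2 := by
    have hp1 : (1:ℤ) ≤ (p:ℤ) := by exact_mod_cast hp.one_lt.le
    nlinarith
  have hPD : PD (n:ℤ) B C F 0 1 :=
    PD_of _ _ _ _ _ _ (by exact_mod_cast hn) hU (by rw [hdt]; norm_num)
  have h5nB : (5:ℤ) ∣ (n:ℤ)*B := by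
    rw [hBZ]
    have : (5:ℕ) ∣ 2*p+1 := by omega
    exact_mod_cast Int.natCast_dvd_natCast.mpr this
  have h52p1 : (5:ℤ) ∣ (2*(p:ℤ)+1) := by rw [← hBZ]; exact h5nB
  -- the T3 move with k = -F, l = n*F
  obtain ⟨mpd, mrp, mz5, mdt⟩ := moveT3 (n:ℤ) B C F 0 1 (-(F:ℤ)) ((n:ℤ)*F)
  have hz5 : z5 (n:ℤ) B C F 0 1 = 45 := by
    rw [mz5]
    apply z5_of
    · -- 5 ∣ new c
      have e : ((C:ℤ)+(n:ℤ)*(-(F:ℤ))^2+(B:ℤ)*((n:ℤ)*F)^2+2*(F:ℤ)*((n:ℤ)*F)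
            +2*0*(-(F:ℤ))+2*1*(-(F:ℤ))*((n:ℤ)*F))
          = C*(2*(p:ℤ)+1)^2 - 5*(2*(p:ℤ)+2) + (2*(p:ℤ)+2)*((n:ℤ)*(F:ℤ)^2 + 5 - 2*(p:ℤ)*C)
            + ((n:ℤ)*(F:ℤ)^2)*((n:ℤ)*B - (2*(p:ℤ)+1)) := by ring
      rw [e]
      rw [show (n:ℤ)*(F:ℤ)^2 + 5 - 2*(p:ℤ)*C = 0 from by linarith,
        show (n:ℤ)*B - (2*(p:ℤ)+1) = 0 from by linarith]
      rw [mul_zero, mul_zero, add_zero, add_zero]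
      refine dvd_sub ?_ ?_
      · exact Dvd.dvd.mul_left (Dvd.dvd.trans h52p1 (dvd_pow_self _ two_ne_zero)) C
      · exact Dvd.dvd.mul_right (dvd_refl (5:ℤ)) _
    · -- 5 ∣ new f
      have e : ((F:ℤ)+(B:ℤ)*((n:ℤ)*F)+1*(-(F:ℤ))) = ((n:ℤ)*B)*(F:ℤ) := by ring
      rw [e]
      exact Dvd.dvd.mul_right h5nB _
    · -- 5 ∣ new g
      have e : ((0:ℤ)+(n:ℤ)*(-(F:ℤ))+1*((n:ℤ)*F)) = 0 := by ring
      rw [e]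
      exact dvd_zero 5
    · rfl
    · exact h5nB
  have hRP : RP (n:ℤ) B C F 0 1 (n:ℤ) := ⟨1, 0, 0, by unfold Q; ring⟩
  exact reduce (n:ℤ) (n + B + C) (n:ℤ) B C F 0 1 hPD hdt hz5 hRP (by push_cast; omega)

end Rep115

theorem seven_mod_eight_rep_115 (n : ℕ) (hn : 0 < n) (h : n % 8 = 7) :
    ∃ x y z : ℤ, (n : ℤ) = x ^ 2 + y ^ 2 + 5 * z ^ 2 :=
  Rep115.main n hn h
end

section
/- If a positive integer n is represented by the form 2a^2 + 2b^2 + 2bc + 3c^2 with integers a, b, c satisfying (a,b,c) ≡ (1,1,-1) (mod 3), then n is represented by x^2 + y^2 + 10z^2. Explicitly, writing b = a + 3b' and c = 2a + 3c', one has n = (a+3b'-c')^2 + (3a+3b'+4c')^2 + 10(a+c')^2. -/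
theorem genus_mate_to_ramanujan_explicit (n : ℕ) (hn : 0 < n) (a b c : ℤ)
    (ha : a ≡ 1 [ZMOD 3]) (hb : b ≡ 1 [ZMOD 3]) (hc : c ≡ -1 [ZMOD 3])
    (hrep : (n : ℤ) = 2 * a ^ 2 + 2 * b ^ 2 + 2 * b * c + 3 * c ^ 2) :
    ∃ b' c' : ℤ, b = a + 3 * b' ∧ c = 2 * a + 3 * c' ∧
      (n : ℤ) = (a + 3 * b' - c') ^ 2 + (3 * a + 3 * b' + 4 * c') ^ 2 + 10 * (a + c') ^ 2 := by
  have h1 : (3 : ℤ) ∣ b - a := (ha.trans hb.symm).dvd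
  have h2 : (3 : ℤ) ∣ c - 2 * a := by
    have : c ≡ 2 * a [ZMOD 3] := by
      calc c ≡ -1 [ZMOD 3] := hc
        _ ≡ 2 * 1 [ZMOD 3] := by decide
        _ ≡ 2 * a [ZMOD 3] := (ha.symm).mul_left 2
    exact this.symm.dvd
  obtain ⟨b', hb'⟩ := h1
  obtain ⟨c', hc'⟩ := h2
  refine ⟨b', c', by linarith, by linarith, ?_⟩
  have hb2 : b = a + 3 * b' := by linarith
  have hc2 : c = 2 * a + 3 * c' := by linarith
  subst hb2 hc2
  rw [hrep]; ring
end

section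
/- Let p ≡ 3 (mod 4) be a prime and let n, a be positive integers such that: the ternary form ⟨1,1,a⟩ has class number 1; a is a square; a is a nonzero quadratic residue mod p; p divides n; and n is represented by ⟨1,1,a⟩. Then n is a sum of 3 squares of integers none divisible by p. -/
/-- For p ≡ 3 mod 4 prime, p ∣ u² + v² forces p ∣ u and p ∣ v. -/
lemma two_sq_dvd (p : ℕ) (hp : p.Prime) (hp3 : p % 4 = 3) (u v : ℤ)
    (h : (p:ℤ) ∣ u^2 + v^2) : (p:ℤ) ∣ u ∧ (p:ℤ) ∣ v := by
  haveI : Fact p.Prime := ⟨hp⟩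
  have hcast : ((u:ZMod p))^2 + (v:ZMod p)^2 = 0 := by
    have h0 := (ZMod.intCast_zmod_eq_zero_iff_dvd _ p).mpr h
    push_cast at h0
    linear_combination h0
  have hns : ¬ IsSquare (-1 : ZMod p) := by
    rw [ZMod.exists_sq_eq_neg_one_iff]
    simp [hp3]
  have hv : (v : ZMod p) = 0 := by
    by_contra hv
    apply hns
    refine ⟨(u:ZMod p) * (v:ZMod p)⁻¹, ?_⟩
    have hv2 : (v:ZMod p) * (v:ZMod p)⁻¹ = 1 := ZMod.mul_inv_of_unit _ (Ne.isUnit hv)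
    field_simp
    linear_combination -hcast
  have hu : (u : ZMod p) = 0 := by
    have : ((u:ZMod p))^2 = 0 := by rw [hv] at hcast; linear_combination hcast
    exact pow_eq_zero_iff (n := 2) (by norm_num) |>.mp this
  exact ⟨(ZMod.intCast_zmod_eq_zero_iff_dvd _ p).mp hu,
    (ZMod.intCast_zmod_eq_zero_iff_dvd _ p).mp hv⟩

lemma none_of_notall (p : ℕ) (hp : p.Prime) (hp3 : p % 4 = 3) (x y z : ℤ)
    (hd : (p:ℤ) ∣ x^2+y^2+z^2) (hnot : ¬((p:ℤ)∣x ∧ (p:ℤ)∣y ∧ (p:ℤ)∣z)) :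
    ¬(p:ℤ)∣x ∧ ¬(p:ℤ)∣y ∧ ¬(p:ℤ)∣z := by
  have key : ∀ u v w : ℤ, (p:ℤ) ∣ u^2+v^2+w^2 → (p:ℤ)∣u → (p:ℤ)∣v ∧ (p:ℤ)∣w := by
    intro u v w h hu
    have h2 : (p:ℤ) ∣ v^2+w^2 := by
      have hu2 : (p:ℤ) ∣ u^2 := hu.pow (by norm_num)
      have := dvd_sub h hu2
      obtain ⟨k, hk⟩ := this; exact ⟨k, by linear_combination hk⟩
    exact two_sq_dvd p hp hp3 v w h2
  refine ⟨fun hx => ?_, fun hy => ?_, fun hz => ?_⟩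
  · obtain ⟨h1, h2⟩ := key x y z hd hx; exact hnot ⟨hx, h1, h2⟩
  · obtain ⟨h1, h2⟩ := key y x z (by convert hd using 1; ring) hy; exact hnot ⟨h1, hy, h2⟩
  · obtain ⟨h1, h2⟩ := key z x y (by convert hd using 1; ring) hz; exact hnot ⟨h1, h2, hz⟩

lemma core_lift (P a b c d w₁ w₂ w₃ : ℤ) (hPp : Prime P) (h2 : ¬ P ∣ 2)
    (hsum : a^2+b^2+c^2+d^2 = P) (hd : ¬ P ∣ (a^2+b^2-c^2-d^2)) (hw : ¬ P ∣ w₁) :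
    ∃ W₁ W₂ W₃ : ℤ, W₁^2+W₂^2+W₃^2 = P^2*(w₁^2+w₂^2+w₃^2) ∧ ¬(P∣W₁ ∧ P∣W₂ ∧ P∣W₃) := by
  by_cases h1 : P ∣ ((a^2+b^2-c^2-d^2)*w₁ + 2*(b*c-a*d)*w₂ + 2*(b*d+a*c)*w₃)
  · refine ⟨(a^2+b^2-c^2-d^2)*(-w₁) + 2*(b*c-a*d)*w₂ + 2*(b*d+a*c)*w₃,
      2*(b*c+a*d)*(-w₁) + (a^2-b^2+c^2-d^2)*w₂ + 2*(c*d-a*b)*w₃,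
      2*(b*d-a*c)*(-w₁) + 2*(c*d+a*b)*w₂ + (a^2-b^2-c^2+d^2)*w₃, ?_, ?_⟩
    · rw [← hsum]; ring
    · rintro ⟨hW1, -, -⟩
      have hdd : P ∣ 2*((a^2+b^2-c^2-d^2)*w₁) := by
        have := dvd_sub h1 hW1
        obtain ⟨k, hk⟩ := this; exact ⟨k, by linear_combination hk⟩
      rcases hPp.dvd_mul.mp hdd with h | h
      · exact h2 h
      · rcases hPp.dvd_mul.mp h with h' | h'
        · exact hd h'
        · exact hw h'
  · refine ⟨(a^2+b^2-c^2-d^2)*w₁ + 2*(b*c-a*d)*w₂ + 2*(b*d+a*c)*w₃,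
      2*(b*c+a*d)*w₁ + (a^2-b^2+c^2-d^2)*w₂ + 2*(c*d-a*b)*w₃,
      2*(b*d-a*c)*w₁ + 2*(c*d+a*b)*w₂ + (a^2-b^2-c^2+d^2)*w₃, ?_, fun h => h1 h.1⟩
    rw [← hsum]; ring

lemma diag_lemma (P a b c d : ℤ) (hPp : Prime P) (h2 : ¬P∣2) (hsum : a^2+b^2+c^2+d^2 = P) :
    ¬P∣(a^2+b^2-c^2-d^2) ∨ ¬P∣(a^2+c^2-b^2-d^2) ∨ ¬P∣(a^2+d^2-b^2-c^2) := by
  by_contra hcon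
  push_neg at hcon
  obtain ⟨h1, h2', h3⟩ := hcon
  have hP0 : P ≠ 0 := hPp.ne_zero
  have ha : P ∣ a := by
    have h4 : P ∣ 4*a^2 := by
      have hh := dvd_add (dvd_add (dvd_add h1 h2') h3) (dvd_refl P)
      have he : 4*a^2 = (a^2+b^2-c^2-d^2) + (a^2+c^2-b^2-d^2) + (a^2+d^2-b^2-c^2) + P := by
        rw [← hsum]; ring
      rwa [← he] at hh
    have h4' : ¬ P ∣ 4 := fun hd4 => h2 (hPp.dvd_of_dvd_pow (n := 2) (by norm_num; exact hd4))
    rcases hPp.dvd_mul.mp h4 with h | h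
    · exact absurd h h4'
    · exact hPp.dvd_of_dvd_pow h
  have hsq : ∀ x : ℤ, P ∣ 2*a^2 - 2*x^2 → P ∣ x := by
    intro x hx
    have ha2 : P ∣ a^2 := ha.pow (by norm_num)
    have : P ∣ 2*x^2 := by
      have hh := dvd_sub (ha2.mul_left 2) hx
      obtain ⟨k, hk⟩ := hh; exact ⟨k, by linear_combination hk⟩
    rcases hPp.dvd_mul.mp this with h | h
    · exact absurd h h2
    · exact hPp.dvd_of_dvd_pow h
  have hb : P ∣ b := hsq b (by
    have := dvd_add h2' h3
    obtain ⟨k, hk⟩ := this; exact ⟨k, by linear_combination hk⟩)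
  have hc : P ∣ c := hsq c (by
    have := dvd_add h1 h3
    obtain ⟨k, hk⟩ := this; exact ⟨k, by linear_combination hk⟩)
  have hd : P ∣ d := hsq d (by
    have := dvd_add h1 h2'
    obtain ⟨k, hk⟩ := this; exact ⟨k, by linear_combination hk⟩)
  obtain ⟨A, hA⟩ := ha; obtain ⟨B, hB⟩ := hb; obtain ⟨C, hC⟩ := hc; obtain ⟨D, hD⟩ := hd
  have : P * 1 = P * (P * (A^2+B^2+C^2+D^2)) := by
    linear_combination (-(1:ℤ))*hsum + (a+P*A)*hA + (b+P*B)*hB + (c+P*C)*hC + (d+P*D)*hD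
  have h1' : 1 = P * (A^2+B^2+C^2+D^2) := mul_left_cancel₀ hP0 this
  exact hPp.not_isUnit ⟨⟨P, _, h1'.symm, by rw [mul_comm]; exact h1'.symm⟩, rfl⟩

lemma lift_first (P a b c d w₁ w₂ w₃ : ℤ) (hPp : Prime P) (h2 : ¬P∣2)
    (hsum : a^2+b^2+c^2+d^2 = P) (hw : ¬ P ∣ w₁) :
    ∃ W₁ W₂ W₃ : ℤ, W₁^2+W₂^2+W₃^2 = P^2*(w₁^2+w₂^2+w₃^2) ∧ ¬(P∣W₁ ∧ P∣W₂ ∧ P∣W₃) := by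
  rcases diag_lemma P a b c d hPp h2 hsum with h | h | h
  · exact core_lift P a b c d w₁ w₂ w₃ hPp h2 hsum h hw
  · exact core_lift P a c b d w₁ w₂ w₃ hPp h2 (by linear_combination hsum) h hw
  · exact core_lift P a d b c w₁ w₂ w₃ hPp h2 (by linear_combination hsum) h hw

lemma lift_lemma (P : ℤ) (hPp : Prime P) (h2 : ¬P∣2)
    (hfour : ∃ a b c d : ℤ, a^2+b^2+c^2+d^2 = P)
    (w₁ w₂ w₃ : ℤ) (hw : ¬(P∣w₁ ∧ P∣w₂ ∧ P∣w₃)) :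
    ∃ W₁ W₂ W₃ : ℤ, W₁^2+W₂^2+W₃^2 = P^2*(w₁^2+w₂^2+w₃^2) ∧ ¬(P∣W₁ ∧ P∣W₂ ∧ P∣W₃) := by
  obtain ⟨a, b, c, d, hsum⟩ := hfour
  by_cases h1 : P ∣ w₁
  · by_cases hw2 : P ∣ w₂
    · have hw3 : ¬ P ∣ w₃ := fun h => hw ⟨h1, hw2, h⟩
      obtain ⟨W₁, W₂, W₃, hs, hn⟩ := lift_first P a b c d w₃ w₁ w₂ hPp h2 hsum hw3
      exact ⟨W₁, W₂, W₃, by linear_combination hs, hn⟩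
    · obtain ⟨W₁, W₂, W₃, hs, hn⟩ := lift_first P a b c d w₂ w₁ w₃ hPp h2 hsum hw2
      exact ⟨W₁, W₂, W₃, by linear_combination hs, hn⟩
  · exact lift_first P a b c d w₁ w₂ w₃ hPp h2 hsum h1

lemma main_lemma (p : ℕ) (hp : p.Prime) (hp3 : p % 4 = 3) :
    ∀ n : ℕ, 0 < n → (p:ℤ) ∣ (n:ℤ) → (∃ x y z : ℤ, (n:ℤ) = x^2+y^2+z^2) →
    ∃ x₁ x₂ x₃ : ℤ, ¬(p:ℤ)∣x₁ ∧ ¬(p:ℤ)∣x₂ ∧ ¬(p:ℤ)∣x₃ ∧ (n:ℤ) = x₁^2+x₂^2+x₃^2 := by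
  have hPp : Prime (p:ℤ) := Nat.prime_iff_prime_int.mp hp
  have h2 : ¬ (p:ℤ) ∣ 2 := by
    intro h
    have hd2 : p ∣ 2 := by exact_mod_cast h
    have := (Nat.prime_dvd_prime_iff_eq hp Nat.prime_two).mp hd2
    omega
  have hfour : ∃ a b c d : ℤ, a^2+b^2+c^2+d^2 = (p:ℤ) := by
    obtain ⟨a, b, c, d, habcd⟩ := Nat.sum_four_squares p
    exact ⟨a, b, c, d, by exact_mod_cast habcd⟩
  intro n
  induction n using Nat.strong_induction_on with
  | _ n ih =>
    intro hn hpn hrep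
    obtain ⟨x, y, z, hxyz⟩ := hrep
    by_cases hall : (p:ℤ)∣x ∧ (p:ℤ)∣y ∧ (p:ℤ)∣z
    · obtain ⟨x', hx'⟩ := hall.1
      obtain ⟨y', hy'⟩ := hall.2.1
      obtain ⟨z', hz'⟩ := hall.2.2
      have hm : (n:ℤ) = (p:ℤ)^2 * (x'^2+y'^2+z'^2) := by
        rw [hxyz, hx', hy', hz']; ring
      have hm0 : (0:ℤ) ≤ x'^2+y'^2+z'^2 := by positivity
      set n' : ℕ := (x'^2+y'^2+z'^2).toNat with hn'def
      have hn'c : (n':ℤ) = x'^2+y'^2+z'^2 := Int.toNat_of_nonneg hm0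
      have hmn' : (n:ℤ) = (p:ℤ)^2 * (n':ℤ) := by rw [hn'c]; exact hm
      have hn'pos : 0 < n' := by
        rcases Nat.eq_zero_or_pos n' with h0 | h0
        · exfalso
          rw [h0] at hmn'
          simp at hmn'
          omega
        · exact h0
      have hlt : n' < n := by
        have hnn : n = p^2 * n' := by
          have : (n:ℤ) = ((p^2 * n' : ℕ):ℤ) := by push_cast; exact hmn'
          exact_mod_cast this
        have hp2 : 1 < p^2 := by
          have := hp.two_le
          nlinarith
        nlinarith [hnn, hp2, hn'pos]
      have finish : ∀ W₁ W₂ W₃ : ℤ,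
          W₁^2+W₂^2+W₃^2 = (p:ℤ)^2*(n':ℤ) → ¬((p:ℤ)∣W₁ ∧ (p:ℤ)∣W₂ ∧ (p:ℤ)∣W₃) →
          ∃ x₁ x₂ x₃ : ℤ, ¬(p:ℤ)∣x₁ ∧ ¬(p:ℤ)∣x₂ ∧ ¬(p:ℤ)∣x₃ ∧ (n:ℤ) = x₁^2+x₂^2+x₃^2 := by
        intro W₁ W₂ W₃ hWs hWn
        have hrepn : (n:ℤ) = W₁^2+W₂^2+W₃^2 := by rw [hWs]; exact hmn'
        obtain ⟨a1, a2, a3⟩ := none_of_notall p hp hp3 W₁ W₂ W₃ (hrepn ▸ hpn) hWn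
        exact ⟨W₁, W₂, W₃, a1, a2, a3, hrepn⟩
      by_cases hall' : (p:ℤ)∣x' ∧ (p:ℤ)∣y' ∧ (p:ℤ)∣z'
      · have hpn' : (p:ℤ) ∣ (n':ℤ) := by
          rw [hn'c]
          exact dvd_add (dvd_add (hall'.1.pow (by norm_num)) (hall'.2.1.pow (by norm_num)))
            (hall'.2.2.pow (by norm_num))
        obtain ⟨u₁, u₂, u₃, hu1, hu2, hu3, hurep⟩ :=
          ih n' hlt hn'pos hpn' ⟨x', y', z', hn'c⟩
        obtain ⟨W₁, W₂, W₃, hWs, hWn⟩ :=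
          lift_lemma (p:ℤ) hPp h2 hfour u₁ u₂ u₃ (fun h => hu1 h.1)
        exact finish W₁ W₂ W₃ (by rw [hWs, ← hurep]) hWn
      · obtain ⟨W₁, W₂, W₃, hWs, hWn⟩ :=
          lift_lemma (p:ℤ) hPp h2 hfour x' y' z' hall'
        exact finish W₁ W₂ W₃ (by rw [hWs, ← hn'c]) hWn
    · obtain ⟨a1, a2, a3⟩ := none_of_notall p hp hp3 x y z (hxyz ▸ hpn) hall
      exact ⟨x, y, z, a1, a2, a3, hxyz⟩

/-- A symmetric integral 3×3 matrix is positive definite. -/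
def IsPosDefTernary (M : Matrix (Fin 3) (Fin 3) ℤ) : Prop :=
  M.transpose = M ∧ ∀ v : Fin 3 → ℤ, v ≠ 0 → 0 < dotProduct v (M.mulVec v)

/-- Isometry over ℤ of two ternary Gram matrices. -/
def IsometricZ (M N : Matrix (Fin 3) (Fin 3) ℤ) : Prop :=
  ∃ T : Matrix (Fin 3) (Fin 3) ℤ, IsUnit T.det ∧ T.transpose * M * T = N

/-- Isometry over the q-adic integers ℤ_q. -/
def IsometricPadic (q : ℕ) [Fact q.Prime] (M N : Matrix (Fin 3) (Fin 3) ℤ) : Prop :=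
  ∃ T : Matrix (Fin 3) (Fin 3) ℤ_[q], IsUnit T.det ∧
    T.transpose * (M.map (Int.cast : ℤ → ℤ_[q])) * T = N.map (Int.cast : ℤ → ℤ_[q])

/-- N lies in the genus of M. -/
def InGenus (M N : Matrix (Fin 3) (Fin 3) ℤ) : Prop :=
  ∀ (q : ℕ) (_ : Fact q.Prime), IsometricPadic q M N

/-- The class number of M is one. -/
def ClassNumberOne (M : Matrix (Fin 3) (Fin 3) ℤ) : Prop :=
  ∀ N : Matrix (Fin 3) (Fin 3) ℤ, IsPosDefTernary N → InGenus M N → IsometricZ M N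

/-- The Gram matrix of the diagonal form ⟨1,1,a⟩. -/
def diag11a (a : ℤ) : Matrix (Fin 3) (Fin 3) ℤ :=
  Matrix.diagonal ![1, 1, a]

theorem tec_square_case (p : ℕ) (hp : p.Prime) (hp3 : p % 4 = 3)
    (n a : ℕ) (hn : 0 < n) (ha : 0 < a)
    (hcl : ClassNumberOne (diag11a (a : ℤ)))
    (hsq : ∃ t : ℤ, (a : ℤ) = t ^ 2)
    (hQR : (a : ZMod p) ≠ 0 ∧ IsSquare (a : ZMod p))
    (hpn : p ∣ n)
    (hrep : ∃ x y z : ℤ, (n : ℤ) = x ^ 2 + y ^ 2 + a * z ^ 2) :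
    ∃ x₁ x₂ x₃ : ℤ, ¬ (p : ℤ) ∣ x₁ ∧ ¬ (p : ℤ) ∣ x₂ ∧ ¬ (p : ℤ) ∣ x₃ ∧
      (n : ℤ) = x₁ ^ 2 + x₂ ^ 2 + x₃ ^ 2 := by
  obtain ⟨t, ht⟩ := hsq
  obtain ⟨x, y, z, hxyz⟩ := hrep
  exact main_lemma p hp hp3 n hn (Int.natCast_dvd_natCast.mpr hpn)
    ⟨x, y, t*z, by rw [hxyz, ht]; ring⟩
end

section
/- Let p > 3 be prime, and suppose integers a, b, c satisfy p ∤ abc and n = 3(a^2+b^2+c^2) with p | n. Then n can be written as a sum of 4 squares of integers none divisible by p. -/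
lemma key_signs {F : Type*} [Field F] (h2 : (2:F) ≠ 0) (h3 : (3:F) ≠ 0)
    (A B C : F) (hA : A ≠ 0) (hB : B ≠ 0) (hC : C ≠ 0) (h : A^2+B^2+C^2 = 0) :
    ∃ s t : F, (s = 1 ∨ s = -1) ∧ (t = 1 ∨ t = -1) ∧
      A - s*B - t*C ≠ 0 ∧ A + s*B ≠ 0 ∧ A + t*C ≠ 0 ∧ s*B - t*C ≠ 0 := by
  by_cases hBA : B = A ∨ B = -A
  · have hBB : B^2 = A^2 := by rcases hBA with h'|h' <;> rw [h'] <;> ring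
    have hCsq : C^2 ≠ A^2 := by
      intro h'
      have h30 : (3:F)*A^2 = 0 := by linear_combination h - hBB - h'
      rcases mul_eq_zero.mp h30 with h'' | h''
      · exact h3 h''
      · exact hA (pow_eq_zero_iff (n := 2) (by norm_num) |>.mp h'')
    have hCA : C ≠ A := fun h' => hCsq (by rw [h'])
    have hCnA : C ≠ -A := fun h' => hCsq (by rw [h']; ring)
    rcases hBA with h' | h'
    · refine ⟨1, 1, Or.inl rfl, Or.inl rfl, ?_, ?_, ?_, ?_⟩
      · intro he; exact hC (by linear_combination -he - h')
      · intro he; exact (mul_ne_zero h2 hA) (by linear_combination he - h')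
      · intro he; exact hCnA (by linear_combination he)
      · intro he; exact hCA (by linear_combination h' - he)
    · refine ⟨-1, 1, Or.inr rfl, Or.inl rfl, ?_, ?_, ?_, ?_⟩
      · intro he; exact hC (by linear_combination h' - he)
      · intro he; exact (mul_ne_zero h2 hA) (by linear_combination he + h')
      · intro he; exact hCnA (by linear_combination he)
      · intro he; exact hCA (by linear_combination -h' - he)
  · push_neg at hBA
    have ht' : ∃ t : F, (t = 1 ∨ t = -1) ∧ A + t*C ≠ 0 := by
      by_cases h' : A + C = 0
      · exact ⟨-1, Or.inr rfl, fun he => (mul_ne_zero h2 hC) (by linear_combination h' - he)⟩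
      · exact ⟨1, Or.inl rfl, fun he => h' (by linear_combination he)⟩
    obtain ⟨t, ht1, hAtC⟩ := ht'
    have hs1 : A + 1*B ≠ 0 := fun he => hBA.2 (by linear_combination he)
    have hsm : A + (-1)*B ≠ 0 := fun he => hBA.1 (by linear_combination -he)
    by_cases hbad : B = t*C ∨ A - 1*B - t*C = 0
    · refine ⟨-1, t, Or.inr rfl, ht1, ?_, hsm, hAtC, ?_⟩
      · intro he
        rcases hbad with hb | hb
        · exact hA (by linear_combination he - hb)
        · exact (mul_ne_zero h2 hB) (by linear_combination he - hb)
      · intro he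
        rcases hbad with hb | hb
        · exact (mul_ne_zero h2 hB) (by linear_combination hb - he)
        · exact hA (by linear_combination hb - he)
    · push_neg at hbad
      refine ⟨1, t, Or.inl rfl, ht1, hbad.2, hs1, hAtC, ?_⟩
      intro he; exact hbad.1 (by linear_combination he)

theorem three_times_sum_to_four_squares (p : ℕ) (hp : p.Prime) (hpgt : 3 < p)
    (a b c : ℤ) (habc : ¬ (p : ℤ) ∣ a * b * c) (n : ℤ)
    (hn : n = 3 * (a ^ 2 + b ^ 2 + c ^ 2)) (hpn : (p : ℤ) ∣ n) :
    ∃ x₁ x₂ x₃ x₄ : ℤ, ¬ (p : ℤ) ∣ x₁ ∧ ¬ (p : ℤ) ∣ x₂ ∧ ¬ (p : ℤ) ∣ x₃ ∧ ¬ (p : ℤ) ∣ x₄ ∧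
      n = x₁ ^ 2 + x₂ ^ 2 + x₃ ^ 2 + x₄ ^ 2 := by
  haveI : Fact p.Prime := ⟨hp⟩
  have hp' : Prime (p:ℤ) := Nat.prime_iff_prime_int.mp hp
  have hpa : ¬ (p:ℤ) ∣ a := fun h => habc ((h.mul_right b).mul_right c)
  have hpb : ¬ (p:ℤ) ∣ b := fun h => habc ((h.mul_left a).mul_right c)
  have hpc : ¬ (p:ℤ) ∣ c := fun h => habc (h.mul_left (a*b))
  have hnd3 : ¬ (p:ℤ) ∣ 3 := by
    intro h
    have h' : p ∣ 3 := by exact_mod_cast h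
    have := Nat.le_of_dvd (by norm_num) h'
    omega
  have hsq : (p:ℤ) ∣ a^2+b^2+c^2 := by
    rcases (hp'.dvd_mul.mp (hn ▸ hpn)) with h | h
    · exact absurd h hnd3
    · exact h
  have hA : ((a : ZMod p)) ≠ 0 := by rwa [Ne, ZMod.intCast_zmod_eq_zero_iff_dvd]
  have hB : ((b : ZMod p)) ≠ 0 := by rwa [Ne, ZMod.intCast_zmod_eq_zero_iff_dvd]
  have hC : ((c : ZMod p)) ≠ 0 := by rwa [Ne, ZMod.intCast_zmod_eq_zero_iff_dvd]
  have h2' : (2 : ZMod p) ≠ 0 := by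
    intro h
    have h' : p ∣ 2 := by
      have : ((2:ℕ) : ZMod p) = 0 := by exact_mod_cast h
      exact (ZMod.natCast_eq_zero_iff 2 p).mp this
    have := Nat.le_of_dvd (by norm_num) h'
    omega
  have h3' : (3 : ZMod p) ≠ 0 := by
    intro h
    have h' : p ∣ 3 := by
      have : ((3:ℕ) : ZMod p) = 0 := by exact_mod_cast h
      exact (ZMod.natCast_eq_zero_iff 3 p).mp this
    have := Nat.le_of_dvd (by norm_num) h'
    omega
  have h0 : (a:ZMod p)^2 + (b:ZMod p)^2 + (c:ZMod p)^2 = 0 := by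
    have := (ZMod.intCast_zmod_eq_zero_iff_dvd _ p).mpr hsq
    push_cast at this
    exact this
  obtain ⟨s, t, hs, ht, k1, k2, k3, k4⟩ := key_signs h2' h3' _ _ _ hA hB hC h0
  rcases hs with hs | hs <;> subst hs <;> rcases ht with ht | ht <;> subst ht
  · refine ⟨a - b - c, a + b, a + c, b - c, ?_, ?_, ?_, ?_, by rw [hn]; ring⟩ <;>
    · rw [← ZMod.intCast_zmod_eq_zero_iff_dvd]
      intro h'
      push_cast at h'
      first
        | exact k1 (by linear_combination h') | exact k2 (by linear_combination h')
        | exact k3 (by linear_combination h') | exact k4 (by linear_combination h')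
  · refine ⟨a - b + c, a + b, a - c, b + c, ?_, ?_, ?_, ?_, by rw [hn]; ring⟩ <;>
    · rw [← ZMod.intCast_zmod_eq_zero_iff_dvd]
      intro h'
      push_cast at h'
      first
        | exact k1 (by linear_combination h') | exact k2 (by linear_combination h')
        | exact k3 (by linear_combination h') | exact k4 (by linear_combination h')
  · refine ⟨a + b - c, a - b, a + c, b + c, ?_, ?_, ?_, ?_, by rw [hn]; ring⟩ <;>
    · rw [← ZMod.intCast_zmod_eq_zero_iff_dvd]
      intro h'
      push_cast at h'
      first
        | exact k1 (by linear_combination h') | exact k2 (by linear_combination h')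
        | exact k3 (by linear_combination h') | exact k4 (by linear_combination h')
        | exact k1 (by linear_combination -h') | exact k2 (by linear_combination -h')
        | exact k3 (by linear_combination -h') | exact k4 (by linear_combination -h')
  · refine ⟨a + b + c, a - b, a - c, b - c, ?_, ?_, ?_, ?_, by rw [hn]; ring⟩ <;>
    · rw [← ZMod.intCast_zmod_eq_zero_iff_dvd]
      intro h'
      push_cast at h'
      first
        | exact k1 (by linear_combination h') | exact k2 (by linear_combination h')
        | exact k3 (by linear_combination h') | exact k4 (by linear_combination h')
        | exact k1 (by linear_combination -h') | exact k2 (by linear_combination -h')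
        | exact k3 (by linear_combination -h') | exact k4 (by linear_combination -h')
end
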